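/- arXiv:2011.00545 — 8 statements merged into one kernel-verified Lean document; each statement's English description precedes it below -/
import Mathlib

section
/- Let μ > 0 and 0 < a < μ. Suppose v : [−τ,∞) → [0,∞) is continuous, v(s) = ψ(s) for s ∈ [−τ,0], and for all t > 0 it holds that v(t) ≤ ω(t)ψ(0) + ∫₀^t ω(t−s)·[ a·sup_{ζ∈[s−ρ(s),s]} v(ζ) + b(s) ] ds. Then for all t > 0, v(t) ≤ (μ/(μ−a))·( ψ(0) + ∫₀^t ω(t−s) b(s) ds ) + sup_{s∈[−τ,0]} ψ(s). -/
open MeasureTheory Filter Set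

/-- Halanay-type inequality (Lemma 2.5, estimate (2.13)) for the relaxation
function of the generalized Rayleigh–Stokes equation. -/
theorem halanay_type_bound
    (τ μ a : ℝ) (ρ ω ψ b v : ℝ → ℝ)
    (hτ : 0 ≤ τ) (hμ : 0 < μ) (ha : 0 < a) (haμ : a < μ)
    (hρc : ContinuousOn ρ (Set.Ici 0))
    (hρ1 : ∀ t ≥ (0:ℝ), -τ ≤ t - ρ t) (hρ2 : ∀ t ≥ (0:ℝ), t - ρ t ≤ t)
    (hωc : ContinuousOn ω (Set.Ici 0))
    (hωpos : ∀ t ≥ (0:ℝ), 0 < ω t) (hωle : ∀ t ≥ (0:ℝ), ω t ≤ 1)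
    (hωmono : ∀ s t : ℝ, 0 ≤ s → s ≤ t → ω t ≤ ω s)
    (hωint : ∀ t > (0:ℝ), ∫ s in (0:ℝ)..t, ω s ≤ μ⁻¹ * (1 - ω t))
    (hψc : ContinuousOn ψ (Set.Icc (-τ) 0))
    (hψ0 : ∀ s ∈ Set.Icc (-τ) (0:ℝ), 0 ≤ ψ s)
    (hbmono : ∀ s t : ℝ, 0 ≤ s → s ≤ t → b s ≤ b t)
    (hb0 : ∀ t ≥ (0:ℝ), 0 ≤ b t)
    (hbint : ∀ T > (0:ℝ), IntervalIntegrable b MeasureTheory.volume 0 T)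
    (hvc : ContinuousOn v (Set.Ici (-τ)))
    (hv0 : ∀ t ≥ -τ, 0 ≤ v t)
    (hvψ : ∀ s ∈ Set.Icc (-τ) (0:ℝ), v s = ψ s)
    (hineq : ∀ t > (0:ℝ), v t ≤ ω t * ψ 0 +
      ∫ s in (0:ℝ)..t, ω (t - s) * (a * sSup (v '' Set.Icc (s - ρ s) s) + b s)) :
    ∀ t > (0:ℝ), v t ≤ μ / (μ - a) * (ψ 0 + ∫ s in (0:ℝ)..t, ω (t - s) * b s)
      + sSup (ψ '' Set.Icc (-τ) 0) := by
  intro t ht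
  have hτt : (-τ:ℝ) ≤ t := by linarith
  set M := sSup (ψ '' Set.Icc (-τ) 0) with hM
  set W := sSup (v '' Set.Icc (-τ) t) with hW
  have hvct : ContinuousOn v (Set.Icc (-τ) t) := hvc.mono Set.Icc_subset_Ici_self
  have hbddW : BddAbove (v '' Set.Icc (-τ) t) :=
    (isCompact_Icc.image_of_continuousOn hvct).bddAbove
  have hneW : (v '' Set.Icc (-τ) t).Nonempty :=
    (Set.nonempty_Icc.2 hτt).image v
  have hbddM : BddAbove (ψ '' Set.Icc (-τ) 0) :=
    (isCompact_Icc.image_of_continuousOn hψc).bddAbove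
  have h0mem : (0:ℝ) ∈ Set.Icc (-τ) (0:ℝ) := ⟨by linarith, le_rfl⟩
  have hψ0nn : 0 ≤ ψ 0 := hψ0 0 h0mem
  have hMnn : 0 ≤ M := hψ0nn.trans (le_csSup hbddM (Set.mem_image_of_mem ψ h0mem))
  have hW0 : 0 ≤ W := (hv0 0 (by linarith)).trans
    (le_csSup hbddW (Set.mem_image_of_mem v ⟨by linarith, ht.le⟩))
  have hvleW : ∀ x ∈ Set.Icc (-τ) t, v x ≤ W := fun x hx =>
    le_csSup hbddW (Set.mem_image_of_mem v hx)
  -- continuity of s ↦ ω (u - s) on [0, u]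
  have hωcont : ∀ u : ℝ, 0 ≤ u → ContinuousOn (fun s => ω (u - s)) (Set.uIcc 0 u) := by
    intro u hu
    rw [Set.uIcc_of_le hu]
    refine hωc.comp (by fun_prop) ?_
    intro s hs
    exact Set.mem_Ici.2 (by simp at hs ⊢; linarith [hs.2])
  -- the J integral at time t and its nonnegativity
  set Jt := ∫ s in (0:ℝ)..t, ω (t - s) * b s with hJt
  have hJtnn : 0 ≤ Jt := by
    apply intervalIntegral.integral_nonneg ht.le
    intro s hs
    exact mul_nonneg (hωpos (t - s) (by linarith [hs.2])).le (hb0 s hs.1)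
  -- integrability of s ↦ ω (u - s) * b s on [0, u]
  have hintωb : ∀ u : ℝ, 0 < u → u ≤ t →
      IntervalIntegrable (fun s => ω (u - s) * b s) MeasureTheory.volume 0 u := by
    intro u hu hut
    exact ((hbint u hu).continuousOn_mul (hωcont u hu.le))
  -- key estimate: v u ≤ ψ 0 + (a/μ) * W + Jt for 0 < u ≤ t
  have key : ∀ u : ℝ, 0 < u → u ≤ t → v u ≤ ψ 0 + a / μ * W + Jt := by
    intro u hu hut
    have h1 := hineq u hu
    have hωu : ω u * ψ 0 ≤ ψ 0 := by
      nlinarith [hωle u hu.le, hωpos u hu.le]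
    -- bound the big integral
    set g : ℝ → ℝ := fun s => ω (u - s) * (a * W + b s) with hg
    have hgnn : ∀ s ∈ Set.Icc (0:ℝ) u, 0 ≤ g s := by
      intro s hs
      have := hωpos (u - s) (by linarith [hs.2])
      have := hb0 s hs.1
      exact mul_nonneg (by linarith) (by nlinarith)
    have hgint : IntervalIntegrable g MeasureTheory.volume 0 u := by
      have h1 : IntervalIntegrable (fun s => ω (u - s) * (a * W)) MeasureTheory.volume 0 u :=
        ((hωcont u hu.le).mul continuousOn_const).intervalIntegrable
      have h2 := hintωb u hu hut
      have := h1.add h2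
      apply this.congr
      intro s _
      simp only [hg]
      ring
    have hfg : ∀ s ∈ Set.Icc (0:ℝ) u,
        ω (u - s) * (a * sSup (v '' Set.Icc (s - ρ s) s) + b s) ≤ g s := by
      intro s hs
      have hωnn : 0 ≤ ω (u - s) := (hωpos (u - s) (by linarith [hs.2])).le
      have hSle : sSup (v '' Set.Icc (s - ρ s) s) ≤ W := by
        apply csSup_le_csSup hbddW
        · exact ((Set.nonempty_Icc.2 (by linarith [hρ2 s hs.1])).image v)
        · exact Set.image_mono (Set.Icc_subset_Icc (hρ1 s hs.1) (hs.2.trans hut))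
      have : a * sSup (v '' Set.Icc (s - ρ s) s) + b s ≤ a * W + b s := by nlinarith
      exact mul_le_mul_of_nonneg_left this hωnn |>.trans_eq rfl
    have hIle : (∫ s in (0:ℝ)..u, ω (u - s) * (a * sSup (v '' Set.Icc (s - ρ s) s) + b s))
        ≤ ∫ s in (0:ℝ)..u, g s := by
      by_cases hfi : IntervalIntegrable
          (fun s => ω (u - s) * (a * sSup (v '' Set.Icc (s - ρ s) s) + b s))
          MeasureTheory.volume 0 u
      · exact intervalIntegral.integral_mono_on hu.le hfi hgint hfg
      · rw [intervalIntegral.integral_undef hfi]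
        exact intervalIntegral.integral_nonneg hu.le hgnn
    -- split ∫ g
    have hsplit : (∫ s in (0:ℝ)..u, g s)
        = (∫ s in (0:ℝ)..u, ω (u - s)) * (a * W) + ∫ s in (0:ℝ)..u, ω (u - s) * b s := by
      have h1 : IntervalIntegrable (fun s => ω (u - s) * (a * W)) MeasureTheory.volume 0 u :=
        ((hωcont u hu.le).mul continuousOn_const).intervalIntegrable
      have h2 := hintωb u hu hut
      calc (∫ s in (0:ℝ)..u, g s)
          = ∫ s in (0:ℝ)..u, (ω (u - s) * (a * W) + ω (u - s) * b s) := by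
            apply intervalIntegral.integral_congr; intro s _; simp [hg]; ring
        _ = (∫ s in (0:ℝ)..u, ω (u - s) * (a * W)) + ∫ s in (0:ℝ)..u, ω (u - s) * b s :=
            intervalIntegral.integral_add h1 h2
        _ = (∫ s in (0:ℝ)..u, ω (u - s)) * (a * W) + ∫ s in (0:ℝ)..u, ω (u - s) * b s := by
            rw [intervalIntegral.integral_mul_const]
    have hωI : (∫ s in (0:ℝ)..u, ω (u - s)) * (a * W) ≤ a / μ * W := by
      have hcv : (∫ s in (0:ℝ)..u, ω (u - s)) = ∫ s in (0:ℝ)..u, ω s := by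
        have := intervalIntegral.integral_comp_sub_left (a := 0) (b := u) ω u
        simpa using this
      have h1 : (∫ s in (0:ℝ)..u, ω s) ≤ μ⁻¹ := by
        refine (hωint u hu).trans ?_
        have := hωpos u hu.le
        have := hμ
        nlinarith [inv_pos.2 hμ]
      have h2 : 0 ≤ a * W := by positivity
      calc (∫ s in (0:ℝ)..u, ω (u - s)) * (a * W) ≤ μ⁻¹ * (a * W) := by
            rw [hcv]; exact mul_le_mul_of_nonneg_right h1 h2
        _ = a / μ * W := by field_simp
    -- monotonicity of the J integral
    have hJmono : (∫ s in (0:ℝ)..u, ω (u - s) * b s) ≤ Jt := by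
      have e1 : (∫ s in (0:ℝ)..u, ω (u - s) * b s)
          = ∫ x in (0:ℝ)..u, ω x * b (u - x) := by
        have := intervalIntegral.integral_comp_sub_left (a := 0) (b := u)
          (fun x => ω x * b (u - x)) u
        simp only [sub_sub_cancel, sub_zero, sub_self] at this
        exact this
      have e2 : Jt = ∫ x in (0:ℝ)..t, ω x * b (t - x) := by
        have := intervalIntegral.integral_comp_sub_left (a := 0) (b := t)
          (fun x => ω x * b (t - x)) t
        simp only [sub_sub_cancel, sub_zero, sub_self] at this
        rw [hJt]
        exact this
      have hbu : IntervalIntegrable (fun x => ω x * b (u - x)) MeasureTheory.volume 0 u := by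
        have h := (hbint u hu).comp_sub_left u
        simp only [sub_zero, sub_self] at h
        exact (h.symm.continuousOn_mul (hωc.mono (by
          rw [Set.uIcc_of_le hu.le]; exact fun x hx => hx.1)))
      have hbt0 : IntervalIntegrable (fun x => ω x * b (t - x)) MeasureTheory.volume 0 t := by
        have h := (hbint t ht).comp_sub_left t
        simp only [sub_zero, sub_self] at h
        exact (h.symm.continuousOn_mul (hωc.mono (by
          rw [Set.uIcc_of_le ht.le]; exact fun x hx => hx.1)))
      have hbtu : IntervalIntegrable (fun x => ω x * b (t - x)) MeasureTheory.volume 0 u :=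
        hbt0.mono_set (by
          rw [Set.uIcc_of_le hu.le, Set.uIcc_of_le ht.le]
          exact Set.Icc_subset_Icc le_rfl hut)
      have hbtut : IntervalIntegrable (fun x => ω x * b (t - x)) MeasureTheory.volume u t :=
        hbt0.mono_set (by
          rw [Set.uIcc_of_le hut, Set.uIcc_of_le ht.le]
          exact Set.Icc_subset_Icc hu.le le_rfl)
      have step1 : (∫ x in (0:ℝ)..u, ω x * b (u - x)) ≤ ∫ x in (0:ℝ)..u, ω x * b (t - x) := by
        apply intervalIntegral.integral_mono_on hu.le hbu hbtu
        intro x hx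
        have hωnn : 0 ≤ ω x := (hωpos x hx.1).le
        have := hbmono (u - x) (t - x) (by linarith [hx.2]) (by linarith)
        nlinarith
      have step2 : (∫ x in (0:ℝ)..u, ω x * b (t - x)) ≤ ∫ x in (0:ℝ)..t, ω x * b (t - x) := by
        have hsum := intervalIntegral.integral_add_adjacent_intervals hbtu hbtut
        have htail : 0 ≤ ∫ x in u..t, ω x * b (t - x) := by
          apply intervalIntegral.integral_nonneg hut
          intro x hx
          exact mul_nonneg (hωpos x (hu.le.trans hx.1)).le (hb0 (t - x) (by linarith [hx.2]))
        linarith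
      rw [e1, e2]
      exact step1.trans step2
    calc v u ≤ ω u * ψ 0
          + ∫ s in (0:ℝ)..u, ω (u - s) * (a * sSup (v '' Set.Icc (s - ρ s) s) + b s) := h1
      _ ≤ ψ 0 + ((∫ s in (0:ℝ)..u, ω (u - s)) * (a * W) + ∫ s in (0:ℝ)..u, ω (u - s) * b s) := by
          rw [← hsplit]; linarith [hIle]
      _ ≤ ψ 0 + a / μ * W + Jt := by linarith [hωI, hJmono]
  -- extreme value argument
  obtain ⟨x, hx, hmax⟩ := isCompact_Icc.exists_isMaxOn (Set.nonempty_Icc.2 hτt) hvct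
  have hWx : W ≤ v x := csSup_le hneW (by rintro y ⟨z, hz, rfl⟩; exact hmax hz)
  have hvtW : v t ≤ W := hvleW t ⟨hτt, le_rfl⟩
  rcases le_or_gt x 0 with hx0 | hx0
  · -- max attained on the history interval
    have : v x = ψ x := hvψ x ⟨hx.1, hx0⟩
    have hvxM : v x ≤ M := this.le.trans (le_csSup hbddM (Set.mem_image_of_mem ψ ⟨hx.1, hx0⟩))
    have hKC : 0 ≤ μ / (μ - a) * (ψ 0 + Jt) := by
      apply mul_nonneg (by linarith [div_pos hμ (sub_pos.2 haμ)]) (by linarith)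
    linarith
  · -- max attained on (0, t]
    have hvxb := key x hx0 hx.2
    have hWb : W ≤ ψ 0 + a / μ * W + Jt := hWx.trans hvxb
    have hfinal : W ≤ μ / (μ - a) * (ψ 0 + Jt) := by
      rw [div_mul_eq_mul_div, le_div_iff₀ (by linarith)]
      have h2 : μ * W ≤ μ * (ψ 0 + a / μ * W + Jt) := mul_le_mul_of_nonneg_left hWb hμ.le
      have h3 : μ * (a / μ * W) = a * W := by field_simp
      nlinarith [h2, h3]
    linarith
end

section
/- Let μ > 0 and 0 < a < μ, and assume additionally that ω(t) → 0 as t → ∞, that t − ρ(t) → ∞ as t → ∞, and that K := sup_{t≥0} ∫₀^t ω(t−s) b(s) ds < ∞. Suppose v : [−τ,∞) → [0,∞) is continuous, v(s) = ψ(s) for s ∈ [−τ,0], and for all t > 0 it holds that v(t) ≤ ω(t)ψ(0) + ∫₀^t ω(t−s)·[ a·sup_{ζ∈[s−ρ(s),s]} v(ζ) + b(s) ] ds. Then limsup_{t→∞} v(t) ≤ (μ/(μ−a))·K. -/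
open MeasureTheory Filter Set

set_option maxHeartbeats 1000000 in
/-- Halanay-type inequality (Lemma 2.5, estimate (2.14)): asymptotic bound for the limsup. -/
theorem halanay_type_limsup
    (τ μ a K : ℝ) (ρ ω ψ b v : ℝ → ℝ)
    (hτ : 0 ≤ τ) (hμ : 0 < μ) (ha : 0 < a) (haμ : a < μ)
    (hρc : ContinuousOn ρ (Set.Ici 0))
    (hρ1 : ∀ t ≥ (0:ℝ), -τ ≤ t - ρ t) (hρ2 : ∀ t ≥ (0:ℝ), t - ρ t ≤ t)
    (hρlim : Filter.Tendsto (fun t => t - ρ t) Filter.atTop Filter.atTop)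
    (hωc : ContinuousOn ω (Set.Ici 0))
    (hωpos : ∀ t ≥ (0:ℝ), 0 < ω t) (hωle : ∀ t ≥ (0:ℝ), ω t ≤ 1)
    (hωmono : ∀ s t : ℝ, 0 ≤ s → s ≤ t → ω t ≤ ω s)
    (hωint : ∀ t > (0:ℝ), ∫ s in (0:ℝ)..t, ω s ≤ μ⁻¹ * (1 - ω t))
    (hωlim : Filter.Tendsto ω Filter.atTop (nhds 0))
    (hψc : ContinuousOn ψ (Set.Icc (-τ) 0))
    (hψ0 : ∀ s ∈ Set.Icc (-τ) (0:ℝ), 0 ≤ ψ s)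
    (hbmono : ∀ s t : ℝ, 0 ≤ s → s ≤ t → b s ≤ b t)
    (hb0 : ∀ t ≥ (0:ℝ), 0 ≤ b t)
    (hbint : ∀ T > (0:ℝ), IntervalIntegrable b MeasureTheory.volume 0 T)
    (hK : IsLUB {x : ℝ | ∃ t ≥ (0:ℝ), x = ∫ s in (0:ℝ)..t, ω (t - s) * b s} K)
    (hvc : ContinuousOn v (Set.Ici (-τ)))
    (hv0 : ∀ t ≥ -τ, 0 ≤ v t)
    (hvψ : ∀ s ∈ Set.Icc (-τ) (0:ℝ), v s = ψ s)
    (hineq : ∀ t > (0:ℝ), v t ≤ ω t * ψ 0 +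
      ∫ s in (0:ℝ)..t, ω (t - s) * (a * sSup (v '' Set.Icc (s - ρ s) s) + b s)) :
    Filter.limsup v Filter.atTop ≤ μ / (μ - a) * K := by
  have hτ0 : -τ ≤ (0:ℝ) := neg_nonpos.mpr hτ
  have hμ' : (0:ℝ) < μ⁻¹ := inv_pos.mpr hμ
  have hK0 : 0 ≤ K := hK.1 ⟨0, le_refl 0, by simp⟩
  have hKub : ∀ t ≥ (0:ℝ), ∫ s in (0:ℝ)..t, ω (t - s) * b s ≤ K := fun t ht => hK.1 ⟨t, ht, rfl⟩
  have hωnn : ∀ x ≥ (0:ℝ), 0 ≤ ω x := fun x hx => (hωpos x hx).le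
  have hψ0' : 0 ≤ ψ 0 := hψ0 0 ⟨hτ0, le_refl 0⟩
  have hvψ0 : v 0 = ψ 0 := hvψ 0 ⟨hτ0, le_refl 0⟩
  -- b integrable on [0,T] for T ≥ 0
  have hbint' : ∀ T : ℝ, 0 ≤ T → IntervalIntegrable b volume 0 T := by
    intro T hT
    rcases hT.eq_or_lt with h | h
    · subst h; exact IntervalIntegrable.refl
    · exact hbint T h
  -- ω(t - ·) continuous on [c,d] ⊆ [0,t]
  have hωcomp : ∀ t c d : ℝ, 0 ≤ c → c ≤ d → d ≤ t →
      ContinuousOn (fun s => ω (t - s)) (Set.uIcc c d) := by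
    intro t c d hc hcd hdt
    rw [Set.uIcc_of_le hcd]
    refine hωc.comp ((continuous_const.sub continuous_id).continuousOn) ?_
    intro s hs
    simp only [mem_Ici, id]
    have := hs.2
    have := hs.1
    simp only [sub_nonneg]
    linarith
  -- ω(t-·)*b integrable on [c,d] ⊆ [0,t]
  have hωbint : ∀ t c d : ℝ, 0 ≤ c → c ≤ d → d ≤ t →
      IntervalIntegrable (fun s => ω (t - s) * b s) volume c d := by
    intro t c d hc hcd hdt
    have hd0 : 0 ≤ d := hc.trans hcd
    refine ((hbint' d hd0).mono_set ?_).continuousOn_mul (hωcomp t c d hc hcd hdt)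
    exact Set.uIcc_subset_uIcc (by simp [Set.uIcc_of_le hd0, hc, hcd]) (by simp [Set.uIcc_of_le hd0, hd0])
  -- ∫₀^t ω(t-s) ds ≤ μ⁻¹ for t ≥ 0
  have hωtot : ∀ t : ℝ, 0 ≤ t → ∫ s in (0:ℝ)..t, ω (t - s) ≤ μ⁻¹ := by
    intro t ht
    have heq : ∫ s in (0:ℝ)..t, ω (t - s) = ∫ s in (0:ℝ)..t, ω s := by
      rw [intervalIntegral.integral_comp_sub_left ω]
      simp
    rw [heq]
    rcases ht.eq_or_lt with h | h
    · rw [← h]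
      simp only [intervalIntegral.integral_same]
      exact hμ'.le
    · have h1 := hωint t h
      have h2 : 1 - ω t ≤ 1 := by linarith [hωnn t ht]
      calc ∫ s in (0:ℝ)..t, ω s ≤ μ⁻¹ * (1 - ω t) := h1
        _ ≤ μ⁻¹ * 1 := by nlinarith
        _ = μ⁻¹ := mul_one _
  -- sup facts
  have hsubτ : ∀ s : ℝ, 0 ≤ s → Set.Icc (s - ρ s) s ⊆ Set.Ici (-τ) := by
    intro s hs ζ hζ
    exact le_trans (hρ1 s hs) hζ.1
  have himgne : ∀ s : ℝ, 0 ≤ s → (v '' Set.Icc (s - ρ s) s).Nonempty := by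
    intro s hs
    exact ⟨v s, s, ⟨hρ2 s hs, le_refl s⟩, rfl⟩
  have hbddA : ∀ s : ℝ, 0 ≤ s → BddAbove (v '' Set.Icc (s - ρ s) s) := by
    intro s hs
    exact (isCompact_Icc.image_of_continuousOn (hvc.mono (hsubτ s hs))).bddAbove
  have hSnn : ∀ s : ℝ, 0 ≤ s → 0 ≤ sSup (v '' Set.Icc (s - ρ s) s) := by
    intro s hs
    refine le_trans (hv0 s (le_trans hτ0 hs)) (le_csSup (hbddA s hs) ?_)
    exact ⟨s, ⟨hρ2 s hs, le_refl s⟩, rfl⟩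
  have hSle : ∀ s : ℝ, 0 ≤ s → ∀ C' : ℝ, (∀ ζ ∈ Set.Icc (s - ρ s) s, v ζ ≤ C') →
      sSup (v '' Set.Icc (s - ρ s) s) ≤ C' := by
    intro s hs C' hC'
    refine csSup_le (himgne s hs) ?_
    rintro x ⟨ζ, hζ, rfl⟩
    exact hC' ζ hζ
  -- THE KEY integral estimate
  have key : ∀ t T₁ Cb C' : ℝ, 0 ≤ T₁ → T₁ ≤ t → 0 ≤ Cb → 0 ≤ C' →
      (∀ s ∈ Set.Icc (0:ℝ) T₁, sSup (v '' Set.Icc (s - ρ s) s) ≤ Cb) →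
      (∀ s ∈ Set.Icc T₁ t, sSup (v '' Set.Icc (s - ρ s) s) ≤ C') →
      ∫ s in (0:ℝ)..t, ω (t - s) * (a * sSup (v '' Set.Icc (s - ρ s) s) + b s)
        ≤ ω (t - T₁) * (a * Cb * T₁ + ∫ s in (0:ℝ)..T₁, b s) + a * C' * μ⁻¹ + K := by
    intro t T₁ Cb C' hT₁ hT₁t hCb hC' hS1 hS2
    have ht0 : 0 ≤ t := hT₁.trans hT₁t
    have httT : (0:ℝ) ≤ t - T₁ := by linarith
    set f : ℝ → ℝ := fun s => ω (t - s) * (a * sSup (v '' Set.Icc (s - ρ s) s) + b s) with hf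
    have hbI : 0 ≤ ∫ s in (0:ℝ)..T₁, b s :=
      intervalIntegral.integral_nonneg hT₁ (fun u hu => hb0 u hu.1)
    have hRHS : 0 ≤ ω (t - T₁) * (a * Cb * T₁ + ∫ s in (0:ℝ)..T₁, b s) + a * C' * μ⁻¹ + K := by
      have h1 : 0 ≤ ω (t - T₁) := hωnn _ httT
      have h2 : 0 ≤ a * Cb * T₁ := by positivity
      have h3 : 0 ≤ a * C' * μ⁻¹ := by positivity
      nlinarith
    by_cases hfi : IntervalIntegrable f volume 0 t
    · have hsub1 : Set.uIcc (0:ℝ) T₁ ⊆ Set.uIcc (0:ℝ) t := by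
        rw [Set.uIcc_of_le hT₁, Set.uIcc_of_le ht0]
        exact Set.Icc_subset_Icc le_rfl hT₁t
      have hsub2 : Set.uIcc T₁ t ⊆ Set.uIcc (0:ℝ) t := by
        rw [Set.uIcc_of_le hT₁t, Set.uIcc_of_le ht0]
        exact Set.Icc_subset_Icc hT₁ le_rfl
      have hfi1 := hfi.mono_set hsub1
      have hfi2 := hfi.mono_set hsub2
      have hsplit : (∫ s in (0:ℝ)..T₁, f s) + ∫ s in T₁..t, f s = ∫ s in (0:ℝ)..t, f s :=
        intervalIntegral.integral_add_adjacent_intervals hfi1 hfi2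
      -- piece 1
      have hp1 : ∫ s in (0:ℝ)..T₁, f s ≤ ω (t - T₁) * (a * Cb * T₁ + ∫ s in (0:ℝ)..T₁, b s) := by
        have hg1i : IntervalIntegrable (fun s => ω (t - T₁) * (a * Cb + b s)) volume 0 T₁ :=
          (intervalIntegrable_const.add (hbint' T₁ hT₁)).const_mul _
        have hmono : ∀ s ∈ Set.Icc (0:ℝ) T₁, f s ≤ ω (t - T₁) * (a * Cb + b s) := by
          intro s hs
          have hω1 : ω (t - s) ≤ ω (t - T₁) := hωmono _ _ httT (by linarith [hs.2])
          have hω2 : 0 ≤ ω (t - s) := hωnn _ (by linarith [hs.2, hT₁t])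
          have hv1 : a * sSup (v '' Set.Icc (s - ρ s) s) + b s ≤ a * Cb + b s := by
            have := hS1 s hs
            nlinarith
          have hv2 : 0 ≤ a * sSup (v '' Set.Icc (s - ρ s) s) + b s := by
            have := hSnn s hs.1
            have := hb0 s hs.1
            positivity
          calc f s ≤ ω (t - s) * (a * Cb + b s) := by
                exact mul_le_mul_of_nonneg_left hv1 hω2
            _ ≤ ω (t - T₁) * (a * Cb + b s) := by
                have : 0 ≤ a * Cb + b s := le_trans hv2 hv1
                exact mul_le_mul_of_nonneg_right hω1 this
        calc ∫ s in (0:ℝ)..T₁, f s ≤ ∫ s in (0:ℝ)..T₁, ω (t - T₁) * (a * Cb + b s) :=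
              intervalIntegral.integral_mono_on hT₁ hfi1 hg1i hmono
          _ = ω (t - T₁) * (a * Cb * T₁ + ∫ s in (0:ℝ)..T₁, b s) := by
              rw [intervalIntegral.integral_const_mul,
                intervalIntegral.integral_add intervalIntegrable_const (hbint' T₁ hT₁),
                intervalIntegral.integral_const]
              simp only [smul_eq_mul, sub_zero]
              ring
      -- piece 2
      have hp2 : ∫ s in T₁..t, f s ≤ a * C' * μ⁻¹ + K := by
        have hωi : IntervalIntegrable (fun s => ω (t - s)) volume T₁ t :=
          (hωcomp t T₁ t hT₁ hT₁t le_rfl).intervalIntegrable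
        have hωi0 : IntervalIntegrable (fun s => ω (t - s)) volume 0 T₁ :=
          (hωcomp t 0 T₁ le_rfl hT₁ hT₁t).intervalIntegrable
        have hg2i : IntervalIntegrable (fun s => ω (t - s) * (a * C' + b s)) volume T₁ t := by
          have h1 : IntervalIntegrable (fun s => ω (t - s) * (a * C')) volume T₁ t :=
            hωi.mul_const _
          have h2 := hωbint t T₁ t hT₁ hT₁t le_rfl
          have := h1.add h2
          refine this.congr ?_
          intro s _
          dsimp only
          ring
        have hmono : ∀ s ∈ Set.Icc T₁ t, f s ≤ ω (t - s) * (a * C' + b s) := by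
          intro s hs
          have hs0 : 0 ≤ s := hT₁.trans hs.1
          have hω2 : 0 ≤ ω (t - s) := hωnn _ (by linarith [hs.2])
          have hv1 : a * sSup (v '' Set.Icc (s - ρ s) s) + b s ≤ a * C' + b s := by
            have := hS2 s hs
            nlinarith
          exact mul_le_mul_of_nonneg_left hv1 hω2
        have h1 : ∫ s in T₁..t, f s ≤ ∫ s in T₁..t, ω (t - s) * (a * C' + b s) :=
          intervalIntegral.integral_mono_on hT₁t hfi2 hg2i hmono
        have h2 : ∫ s in T₁..t, ω (t - s) * (a * C' + b s)
            = (∫ s in T₁..t, ω (t - s)) * (a * C') + ∫ s in T₁..t, ω (t - s) * b s := by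
          rw [← intervalIntegral.integral_mul_const, ← intervalIntegral.integral_add
            (hωi.mul_const _) (hωbint t T₁ t hT₁ hT₁t le_rfl)]
          congr 1
          ext s
          ring
        -- ∫_{T₁}^t ω(t-s) ≤ μ⁻¹
        have h3 : ∫ s in T₁..t, ω (t - s) ≤ μ⁻¹ := by
          have hadj : (∫ s in (0:ℝ)..T₁, ω (t - s)) + ∫ s in T₁..t, ω (t - s)
              = ∫ s in (0:ℝ)..t, ω (t - s) :=
            intervalIntegral.integral_add_adjacent_intervals hωi0 hωi
          have hnn : 0 ≤ ∫ s in (0:ℝ)..T₁, ω (t - s) :=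
            intervalIntegral.integral_nonneg hT₁ (fun u hu => hωnn _ (by linarith [hu.2]))
          have := hωtot t ht0
          linarith
        -- ∫_{T₁}^t ω(t-s) b s ≤ K
        have h4 : ∫ s in T₁..t, ω (t - s) * b s ≤ K := by
          have hadj : (∫ s in (0:ℝ)..T₁, ω (t - s) * b s) + ∫ s in T₁..t, ω (t - s) * b s
              = ∫ s in (0:ℝ)..t, ω (t - s) * b s :=
            intervalIntegral.integral_add_adjacent_intervals
              (hωbint t 0 T₁ le_rfl hT₁ hT₁t) (hωbint t T₁ t hT₁ hT₁t le_rfl)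
          have hnn : 0 ≤ ∫ s in (0:ℝ)..T₁, ω (t - s) * b s :=
            intervalIntegral.integral_nonneg hT₁
              (fun u hu => mul_nonneg (hωnn _ (by linarith [hu.2])) (hb0 u hu.1))
          have := hKub t ht0
          linarith
        have h5 : (∫ s in T₁..t, ω (t - s)) * (a * C') ≤ μ⁻¹ * (a * C') := by
          have : 0 ≤ a * C' := by positivity
          exact mul_le_mul_of_nonneg_right h3 this
        nlinarith
      -- nonneg of piece 1 bound not needed; combine
      rw [hf] at hsplit ⊢
      linarith
    · rw [intervalIntegral.integral_undef hfi]
      exact hRHS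
  -- bound for v on initial interval
  obtain ⟨M0, hM0⟩ : ∃ M0 : ℝ, ∀ x ∈ Set.Icc (-τ) (0:ℝ), v x ≤ M0 := by
    obtain ⟨M0, hM0⟩ := (isCompact_Icc.image_of_continuousOn
      (hvc.mono Set.Icc_subset_Ici_self)).bddAbove
    exact ⟨M0, fun x hx => hM0 ⟨x, hx, rfl⟩⟩
  -- a/μ < 1
  have haμ1 : a * μ⁻¹ < 1 := by
    rw [← div_eq_mul_inv, div_lt_one hμ]
    exact haμ
  obtain ⟨C, hC1, hC0, hCkey⟩ : ∃ C : ℝ, (∀ x ∈ Set.Icc (-τ) (0:ℝ), v x < C) ∧ 0 < C ∧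
      v 0 + a * C * μ⁻¹ + K < C := by
    have h2 : 0 < 1 - a * μ⁻¹ := by linarith
    refine ⟨max M0 ((v 0 + K) / (1 - a * μ⁻¹)) + 1, ?_, ?_, ?_⟩
    · intro x hx
      have h1 := hM0 x hx
      have h3 : v x ≤ max M0 ((v 0 + K) / (1 - a * μ⁻¹)) := le_trans h1 (le_max_left _ _)
      linarith
    · have h1 := hv0 0 hτ0
      have h3 := hM0 0 ⟨hτ0, le_refl 0⟩
      have h4 : (0:ℝ) ≤ max M0 ((v 0 + K) / (1 - a * μ⁻¹)) :=
        le_trans (h1.trans h3) (le_max_left _ _)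
      linarith
    · have h1 : (v 0 + K) / (1 - a * μ⁻¹) ≤ max M0 ((v 0 + K) / (1 - a * μ⁻¹)) :=
        le_max_right _ _
      rw [div_le_iff₀ h2] at h1
      have e : a * (max M0 ((v 0 + K) / (1 - a * μ⁻¹)) + 1) * μ⁻¹
          = a * μ⁻¹ * max M0 ((v 0 + K) / (1 - a * μ⁻¹)) + a * μ⁻¹ := by ring
      rw [e]
      nlinarith
  -- global bound: v ≤ C on [-τ, ∞)
  have hCbound : ∀ x : ℝ, -τ ≤ x → v x ≤ C := by
    by_contra hcon
    push_neg at hcon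
    obtain ⟨x₀, hx₀τ, hx₀⟩ := hcon
    set A : Set ℝ := {x | -τ ≤ x ∧ C < v x} with hA
    have hAne : A.Nonempty := ⟨x₀, hx₀τ, hx₀⟩
    have hAbd : BddBelow A := ⟨-τ, fun x hx => hx.1⟩
    set T := sInf A with hT
    have hTτ : -τ ≤ T := le_csInf hAne (fun x hx => hx.1)
    have hTlb : ∀ x ∈ A, T ≤ x := fun x hx => csInf_le hAbd hx
    have hct : ContinuousWithinAt v (Set.Ici (-τ)) T := hvc T hTτ
    -- v T ≥ C
    have hvT : C ≤ v T := by
      by_contra h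
      push_neg at h
      have h1 : ∀ᶠ x in nhdsWithin T (Set.Ici (-τ)), v x < C := hct.eventually_lt_const h
      have h2 : ∀ᶠ x in nhdsWithin T A, v x < C :=
        h1.filter_mono (nhdsWithin_mono T (fun x hx => hx.1))
      have h3 : ∀ᶠ x in nhdsWithin T A, x ∈ A := self_mem_nhdsWithin
      have hne : (nhdsWithin T A).NeBot :=
        mem_closure_iff_nhdsWithin_neBot.mp (csInf_mem_closure hAne hAbd)
      obtain ⟨x, hx1, hx2⟩ := (h2.and h3).exists
      exact absurd hx2.2 (not_lt.mpr hx1.le)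
    have hT0 : 0 < T := by
      by_contra h
      push_neg at h
      exact absurd hvT (not_le.mpr (hC1 T ⟨hTτ, h⟩))
    -- v ≤ C strictly below T
    have hlt : ∀ x : ℝ, -τ ≤ x → x < T → v x ≤ C := by
      intro x hx hxT
      by_contra hc
      push_neg at hc
      exact absurd (hTlb x ⟨hx, hc⟩) (not_le.mpr hxT)
    -- v T ≤ C by left limit
    have hvTle : v T ≤ C := by
      have hsub : Set.Ioo 0 T ⊆ Set.Ici (-τ) := fun x hx => le_trans hτ0 hx.1.le
      have hne : (nhdsWithin T (Set.Ioo 0 T)).NeBot := by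
        rw [← mem_closure_iff_nhdsWithin_neBot, closure_Ioo (ne_of_lt hT0)]
        exact ⟨hT0.le, le_refl T⟩
      have htend : Filter.Tendsto v (nhdsWithin T (Set.Ioo 0 T)) (nhds (v T)) :=
        hct.mono_left (nhdsWithin_mono T hsub)
      refine le_of_tendsto htend ?_
      filter_upwards [self_mem_nhdsWithin] with x hx
      exact hlt x (hsub hx) hx.2
    have hleT : ∀ ζ ∈ Set.Icc (-τ) T, v ζ ≤ C := by
      intro ζ hζ
      rcases lt_or_eq_of_le hζ.2 with h | h
      · exact hlt ζ hζ.1 h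
      · rw [h]; exact hvTle
    -- apply the key estimate at T
    have hS2 : ∀ s ∈ Set.Icc (0:ℝ) T, sSup (v '' Set.Icc (s - ρ s) s) ≤ C := by
      intro s hs
      refine hSle s hs.1 C ?_
      intro ζ hζ
      refine hleT ζ ⟨le_trans (hρ1 s hs.1) hζ.1, le_trans hζ.2 hs.2⟩
    have hS1 : ∀ s ∈ Set.Icc (0:ℝ) (0:ℝ), sSup (v '' Set.Icc (s - ρ s) s) ≤ C := by
      intro s hs
      exact hS2 s ⟨hs.1, le_trans hs.2 hT0.le⟩
    have hkey := key T 0 C C (le_refl 0) hT0.le hC0.le hC0.le hS1 hS2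
    simp only [sub_zero, mul_zero, intervalIntegral.integral_same, add_zero, zero_add, mul_zero] at hkey
    have hiq := hineq T hT0
    have hω1 : ω T * ψ 0 ≤ v 0 := by
      have h1 := hωle T hT0.le
      have h2 := hωnn T hT0.le
      rw [hvψ0]
      nlinarith
    -- hkey : ∫ ... ≤ ω T * (a*C*0 + 0) + a*C*μ⁻¹ + K  (simplified)
    have : v T ≤ v 0 + a * C * μ⁻¹ + K := by
      calc v T ≤ ω T * ψ 0 + ∫ s in (0:ℝ)..T, ω (T - s) *
            (a * sSup (v '' Set.Icc (s - ρ s) s) + b s) := hiq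
        _ ≤ v 0 + (a * C * μ⁻¹ + K) := by
            have := hkey
            linarith
        _ = v 0 + a * C * μ⁻¹ + K := by ring
    linarith [hvT, hCkey]
  -- limsup machinery
  have hbnd : IsBoundedUnder (· ≤ ·) Filter.atTop v := by
    refine isBoundedUnder_of_eventually_le (a := C) ?_
    filter_upwards [eventually_ge_atTop (0:ℝ)] with t ht
    exact hCbound t (le_trans hτ0 ht)
  have hcb : IsCoboundedUnder (· ≤ ·) Filter.atTop v := by
    refine Filter.isCoboundedUnder_le_of_eventually_le Filter.atTop (x := 0) ?_
    filter_upwards [eventually_ge_atTop (0:ℝ)] with t ht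
    exact hv0 t (le_trans hτ0 ht)
  set L := Filter.limsup v Filter.atTop with hL
  have main : ∀ ε : ℝ, 0 < ε → L ≤ a * L * μ⁻¹ + K + (a * μ⁻¹ + 2) * ε := by
    intro ε hε
    have hLε : ∀ᶠ t in Filter.atTop, v t < L + ε :=
      Filter.eventually_lt_of_limsup_lt (by linarith) hbnd
    obtain ⟨T₀', hT₀'⟩ := Filter.eventually_atTop.mp hLε
    set T₀ : ℝ := max T₀' 0 with hT₀def
    have hT₀0 : 0 ≤ T₀ := le_max_right _ _
    have hT₀ : ∀ t : ℝ, T₀ ≤ t → v t < L + ε := fun t ht =>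
      hT₀' t (le_trans (le_max_left _ _) ht)
    have hLε0 : 0 ≤ L + ε :=
      le_of_lt (lt_of_le_of_lt (hv0 T₀ (le_trans hτ0 hT₀0)) (hT₀ T₀ le_rfl))
    obtain ⟨T₁', hT₁'⟩ := Filter.eventually_atTop.mp (hρlim.eventually_ge_atTop T₀)
    set T₁ : ℝ := max T₁' T₀ with hT₁def
    have hT₁0 : 0 ≤ T₁ := le_trans hT₀0 (le_max_right _ _)
    have hT₁ρ : ∀ s : ℝ, T₁ ≤ s → T₀ ≤ s - ρ s := fun s hs =>
      hT₁' s (le_trans (le_max_left _ _) hs)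
    set B₁ : ℝ := a * C * T₁ + ∫ s in (0:ℝ)..T₁, b s with hB₁def
    have hB₁0 : 0 ≤ B₁ := by
      have h1 : 0 ≤ ∫ s in (0:ℝ)..T₁, b s :=
        intervalIntegral.integral_nonneg hT₁0 (fun u hu => hb0 u hu.1)
      have : 0 ≤ a * C * T₁ := by positivity
      linarith
    -- smallness
    have hsm1 : ∀ᶠ t in Filter.atTop, ω (t - T₁) * B₁ < ε := by
      have htend : Filter.Tendsto (fun t => ω (t - T₁) * B₁) Filter.atTop (nhds (0 * B₁)) := by
        refine Filter.Tendsto.mul_const B₁ ?_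
        refine hωlim.comp ?_
        simpa [sub_eq_add_neg] using Filter.tendsto_atTop_add_const_right Filter.atTop (-T₁)
          Filter.tendsto_id
      rw [zero_mul] at htend
      exact htend.eventually_lt_const hε
    have hsm2 : ∀ᶠ t in Filter.atTop, ω t * ψ 0 < ε := by
      have htend : Filter.Tendsto (fun t => ω t * ψ 0) Filter.atTop (nhds (0 * ψ 0)) :=
        hωlim.mul_const (ψ 0)
      rw [zero_mul] at htend
      exact htend.eventually_lt_const hε
    have hev : ∀ᶠ t in Filter.atTop, v t ≤ a * (L + ε) * μ⁻¹ + K + 2 * ε := by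
      filter_upwards [hsm1, hsm2, eventually_ge_atTop (max T₁ 1)] with t ht1 ht2 ht3
      have htT₁ : T₁ ≤ t := le_trans (le_max_left _ _) ht3
      have ht0 : 0 < t := lt_of_lt_of_le one_pos (le_trans (le_max_right _ _) ht3)
      have hS1 : ∀ s ∈ Set.Icc (0:ℝ) T₁, sSup (v '' Set.Icc (s - ρ s) s) ≤ C := by
        intro s hs
        refine hSle s hs.1 C ?_
        intro ζ hζ
        exact hCbound ζ (le_trans (hρ1 s hs.1) hζ.1)
      have hS2 : ∀ s ∈ Set.Icc T₁ t, sSup (v '' Set.Icc (s - ρ s) s) ≤ L + ε := by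
        intro s hs
        have hs0 : 0 ≤ s := le_trans hT₁0 hs.1
        refine hSle s hs0 (L + ε) ?_
        intro ζ hζ
        have : T₀ ≤ ζ := le_trans (hT₁ρ s hs.1) hζ.1
        exact (hT₀ ζ this).le
      have hkey := key t T₁ C (L + ε) hT₁0 htT₁ hC0.le hLε0 hS1 hS2
      have hiq := hineq t ht0
      calc v t ≤ ω t * ψ 0 + ∫ s in (0:ℝ)..t, ω (t - s) *
            (a * sSup (v '' Set.Icc (s - ρ s) s) + b s) := hiq
        _ ≤ ε + (ω (t - T₁) * B₁ + a * (L + ε) * μ⁻¹ + K) := by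
            rw [← hB₁def] at hkey
            linarith
        _ ≤ ε + (ε + a * (L + ε) * μ⁻¹ + K) :=
            add_le_add_right (add_le_add_left (add_le_add_left ht1.le _) _) _
        _ = a * (L + ε) * μ⁻¹ + K + 2 * ε := by ring
    have hls : L ≤ a * (L + ε) * μ⁻¹ + K + 2 * ε := Filter.limsup_le_of_le hcb hev
    have e1 : a * (L + ε) * μ⁻¹ = a * L * μ⁻¹ + a * μ⁻¹ * ε := by ring
    have e2 : (a * μ⁻¹ + 2) * ε = a * μ⁻¹ * ε + 2 * ε := by ring
    linarith
  -- conclude: L ≤ a L μ⁻¹ + K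
  have hfin : L ≤ a * L * μ⁻¹ + K := by
    refine le_of_forall_pos_le_add ?_
    intro ε hε
    have hc : 0 < a * μ⁻¹ + 2 := by positivity
    have := main (ε / (a * μ⁻¹ + 2)) (by positivity)
    have heq : (a * μ⁻¹ + 2) * (ε / (a * μ⁻¹ + 2)) = ε := by
      field_simp
    linarith [heq ▸ this]
  have hμa : 0 < μ - a := by linarith
  rw [div_mul_eq_mul_div, le_div_iff₀ hμa]
  have hmul := mul_le_mul_of_nonneg_right hfin hμ.le
  have hinv : μ⁻¹ * μ = 1 := inv_mul_cancel₀ (ne_of_gt hμ)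
  have e : (a * (Filter.limsup v Filter.atTop) * μ⁻¹ + K) * μ
      = a * (Filter.limsup v Filter.atTop) * (μ⁻¹ * μ) + K * μ := by ring
  rw [hinv, mul_one] at e
  rw [e] at hmul
  nlinarith
end

section
/- Let μ > 0 and 0 < a < μ, and assume that ω(t) → 0 as t → ∞ and that t − ρ(t) → ∞ as t → ∞. Suppose v : [−τ,∞) → [0,∞) is continuous, v(s) = ψ(s) for s ∈ [−τ,0], and for all t > 0 it holds that v(t) ≤ ω(t)ψ(0) + a·∫₀^t ω(t−s)·sup_{ζ∈[s−ρ(s),s]} v(ζ) ds. Then v(t) → 0 as t → ∞. -/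
open MeasureTheory Filter Set

lemma hal_integral_le_of_le {f g : ℝ → ℝ} {a b : ℝ} (hab : a ≤ b)
    (hg : IntervalIntegrable g volume a b)
    (hle : ∀ s ∈ Set.Icc a b, f s ≤ g s)
    (hg0 : ∀ s ∈ Set.Icc a b, 0 ≤ g s) :
    ∫ s in a..b, f s ≤ ∫ s in a..b, g s := by
  by_cases hf : IntervalIntegrable f volume a b
  · exact intervalIntegral.integral_mono_on hab hf hg hle
  · rw [intervalIntegral.integral_undef hf]
    exact intervalIntegral.integral_nonneg hab hg0

/-- Halanay-type inequality (Lemma 2.5, case b = 0): decay of v at infinity. -/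
theorem halanay_type_decay
    (τ μ a : ℝ) (ρ ω ψ v : ℝ → ℝ)
    (hτ : 0 ≤ τ) (hμ : 0 < μ) (ha : 0 < a) (haμ : a < μ)
    (hρc : ContinuousOn ρ (Set.Ici 0))
    (hρ1 : ∀ t ≥ (0:ℝ), -τ ≤ t - ρ t) (hρ2 : ∀ t ≥ (0:ℝ), t - ρ t ≤ t)
    (hρlim : Filter.Tendsto (fun t => t - ρ t) Filter.atTop Filter.atTop)
    (hωc : ContinuousOn ω (Set.Ici 0))
    (hωpos : ∀ t ≥ (0:ℝ), 0 < ω t) (hωle : ∀ t ≥ (0:ℝ), ω t ≤ 1)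
    (hωmono : ∀ s t : ℝ, 0 ≤ s → s ≤ t → ω t ≤ ω s)
    (hωint : ∀ t > (0:ℝ), ∫ s in (0:ℝ)..t, ω s ≤ μ⁻¹ * (1 - ω t))
    (hωlim : Filter.Tendsto ω Filter.atTop (nhds 0))
    (hψc : ContinuousOn ψ (Set.Icc (-τ) 0))
    (hψ0 : ∀ s ∈ Set.Icc (-τ) (0:ℝ), 0 ≤ ψ s)
    (hvc : ContinuousOn v (Set.Ici (-τ)))
    (hv0 : ∀ t ≥ -τ, 0 ≤ v t)
    (hvψ : ∀ s ∈ Set.Icc (-τ) (0:ℝ), v s = ψ s)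
    (hineq : ∀ t > (0:ℝ), v t ≤ ω t * ψ 0 +
      a * ∫ s in (0:ℝ)..t, ω (t - s) * sSup (v '' Set.Icc (s - ρ s) s)) :
    Filter.Tendsto v Filter.atTop (nhds 0) := by
  have hτ0 : (-τ:ℝ) ≤ 0 := neg_nonpos.2 hτ
  have h0mem : (0:ℝ) ∈ Icc (-τ) 0 := ⟨hτ0, le_refl 0⟩
  set P := sSup (ψ '' Icc (-τ) 0) with hP
  have hPb : ∀ s ∈ Icc (-τ) (0:ℝ), ψ s ≤ P := fun s hs =>
    le_csSup (isCompact_Icc.bddAbove_image hψc) (mem_image_of_mem ψ hs)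
  have hP0 : 0 ≤ P := le_trans (hψ0 0 h0mem) (hPb 0 h0mem)
  have hμa : 0 < μ - a := sub_pos.2 haμ
  set K := μ / (μ - a) * P with hKdef
  have hK0 : 0 ≤ K := mul_nonneg (div_nonneg hμ.le hμa.le) hP0
  have hKP : P ≤ K := by
    have h1 : (1:ℝ) ≤ μ / (μ - a) := (one_le_div hμa).2 (by linarith)
    nlinarith
  -- integrability of translated ω
  have hωI : ∀ c d t : ℝ, 0 ≤ c → c ≤ d → d ≤ t →
      IntervalIntegrable (fun s => ω (t - s)) volume c d := by
    intro c d t hc hcd hdt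
    apply ContinuousOn.intervalIntegrable
    rw [uIcc_of_le hcd]
    apply hωc.comp ((continuous_const.sub continuous_id).continuousOn)
    intro s hs
    simp only [mem_Icc] at hs
    simp only [mem_Ici, id_eq, Pi.sub_apply]
    linarith [hs.1, hs.2]
  -- sup bound helper
  have hSb : ∀ (A : Set ℝ) (M : ℝ), 0 ≤ M → (∀ x ∈ A, v x ≤ M) → sSup (v '' A) ≤ M := by
    intro A M hM h
    apply Real.sSup_le _ hM
    rintro y ⟨x, hx, rfl⟩
    exact h x hx
  -- global bound on v
  have hbdd : ∀ t ≥ -τ, v t ≤ K := by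
    intro T hT
    set T' := max T 1 with hT'def
    have hT'pos : (0:ℝ) < T' := lt_of_lt_of_le one_pos (le_max_right T 1)
    obtain ⟨t', ht'mem, ht'max⟩ := isCompact_Icc.exists_isMaxOn
      ⟨0, h0mem.1, hT'pos.le⟩ (hvc.mono Icc_subset_Ici_self)
    set M := v t' with hMdef
    have hM0 : 0 ≤ M := hv0 t' ht'mem.1
    have key : v T ≤ M := ht'max ⟨hT, le_max_left T 1⟩
    rcases le_or_gt t' 0 with h0 | h0
    · calc v T ≤ M := key
        _ = ψ t' := hvψ t' ⟨ht'mem.1, h0⟩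
        _ ≤ P := hPb t' ⟨ht'mem.1, h0⟩
        _ ≤ K := hKP
    · have hii := hineq t' h0
      have hg : IntervalIntegrable (fun s => ω (t' - s) * M) volume 0 t' :=
        (hωI 0 t' t' le_rfl h0.le le_rfl).mul_const M
      have hptwise : ∀ s ∈ Icc (0:ℝ) t',
          ω (t'-s) * sSup (v '' Icc (s - ρ s) s) ≤ ω (t'-s) * M := by
        intro s hs
        have hω0 : 0 ≤ ω (t'-s) := (hωpos _ (by linarith [hs.1, hs.2])).le
        apply mul_le_mul_of_nonneg_left _ hω0
        apply hSb _ _ hM0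
        intro x hx
        apply ht'max
        constructor
        · linarith [hρ1 s hs.1, hx.1]
        · exact le_trans hx.2 (le_trans hs.2 ht'mem.2)
      have hnn : ∀ s ∈ Icc (0:ℝ) t', 0 ≤ ω (t'-s) * M := fun s hs =>
        mul_nonneg (hωpos _ (by linarith [hs.1, hs.2])).le hM0
      have h1 := hal_integral_le_of_le h0.le hg hptwise hnn
      have h2 : ∫ s in (0:ℝ)..t', ω (t'-s) * M = (∫ s in (0:ℝ)..t', ω s) * M := by
        rw [intervalIntegral.integral_mul_const]
        congr 1
        have := intervalIntegral.integral_comp_sub_left ω t' (a := 0) (b := t')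
        simpa using this
      have h3 : (∫ s in (0:ℝ)..t', ω s) * M ≤ μ⁻¹ * (1 - ω t') * M :=
        mul_le_mul_of_nonneg_right (hωint t' h0) hM0
      have hMle : M ≤ ω t' * ψ 0 + a * (μ⁻¹ * (1 - ω t') * M) := by
        rw [h2] at h1
        nlinarith [h1, h3, hii]
      have hωt1 : ω t' ≤ 1 := hωle t' h0.le
      have hωtp : 0 < ω t' := hωpos t' h0.le
      have hψP : ψ 0 ≤ P := hPb 0 h0mem
      have hc : μ * (μ⁻¹ * (1 - ω t')) = 1 - ω t' := by field_simp
      calc v T ≤ M := key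
        _ ≤ K := by
          rw [hKdef, div_mul_eq_mul_div, le_div_iff₀ hμa]
          have hstep : μ * M ≤ μ * (ω t' * ψ 0) + a * ((1 - ω t') * M) := by
            calc μ * M ≤ μ * (ω t' * ψ 0 + a * (μ⁻¹ * (1 - ω t') * M)) :=
                  mul_le_mul_of_nonneg_left hMle hμ.le
              _ = μ * (ω t' * ψ 0) + a * (μ * (μ⁻¹ * (1 - ω t')) * M) := by ring
              _ = μ * (ω t' * ψ 0) + a * ((1 - ω t') * M) := by rw [hc]
          nlinarith [hstep, mul_le_mul_of_nonneg_left hψP (mul_nonneg hμ.le hωtp.le),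
            mul_nonneg (mul_nonneg hμ.le hP0) (sub_nonneg.2 hωt1),
            mul_nonneg (mul_nonneg ha.le hωtp.le) hM0]
  -- boundedness of v under atTop
  have hbV : IsBoundedUnder (· ≤ ·) atTop v :=
    ⟨K, eventually_map.2 (by filter_upwards [eventually_ge_atTop (-τ)] with t ht using hbdd t ht)⟩
  have hbV' : IsBoundedUnder (· ≥ ·) atTop v :=
    ⟨0, eventually_map.2 (by filter_upwards [eventually_ge_atTop (-τ)] with t ht using hv0 t ht)⟩
  set L := limsup v atTop with hLdef
  have hliminf0 : (0:ℝ) ≤ liminf v atTop :=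
    le_liminf_of_le hbV.isCoboundedUnder_ge
      (by filter_upwards [eventually_ge_atTop (-τ)] with t ht using hv0 t ht)
  have hL0 : 0 ≤ L := hliminf0.trans (liminf_le_limsup hbV hbV')
  have hkey : ∀ ε > (0:ℝ), L ≤ a * ((L + ε) * μ⁻¹) := by
    intro ε hε
    have hLε : ∀ᶠ x in atTop, v x < L + ε :=
      eventually_lt_of_limsup_lt (lt_add_of_pos_right L hε) hbV
    obtain ⟨S₀, hS₀⟩ := eventually_atTop.1 hLε
    obtain ⟨S₁', hS₁'⟩ := eventually_atTop.1 (hρlim.eventually (eventually_ge_atTop S₀))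
    set S₁ := max S₁' 0 with hS₁def
    have hS₁0 : (0:ℝ) ≤ S₁ := le_max_right _ _
    set D := K + (L + ε) with hDdef
    have hLε0 : (0:ℝ) ≤ L + ε := by linarith
    have hD0 : (0:ℝ) ≤ D := by simp only [hDdef]; linarith
    set G := fun t => ω t * P + a * (S₁ * (ω (t - S₁) * D) + (L + ε) * μ⁻¹) with hGdef
    have hshift : Tendsto (fun u : ℝ => ω (u - S₁)) atTop (nhds 0) := by
      apply hωlim.comp
      simpa [sub_eq_add_neg] using tendsto_atTop_add_const_right atTop (-S₁) (tendsto_id (α := ℝ))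
    have hGlim : Tendsto G atTop
        (nhds ((0:ℝ) * P + a * (S₁ * ((0:ℝ) * D) + (L + ε) * μ⁻¹))) :=
      (hωlim.mul_const P).add (tendsto_const_nhds.mul
        ((tendsto_const_nhds.mul (hshift.mul_const D)).add tendsto_const_nhds))
    have hvG : ∀ᶠ t in atTop, v t ≤ G t := by
      filter_upwards [eventually_gt_atTop S₁] with t ht
      have h0t : 0 < t := lt_of_le_of_lt hS₁0 ht
      have htS : 0 < t - S₁ := sub_pos.2 ht
      set g := fun s => ω (t - s) * (if s < S₁ then D else L + ε) with hgdef
      have hgIoc1 : IntegrableOn g (Ioc 0 S₁) volume := by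
        have hbase : IntegrableOn (fun s => ω (t - s) * D) (Ioc 0 S₁) volume := by
          have := (hωI 0 S₁ t le_rfl hS₁0 ht.le).mul_const D
          rwa [intervalIntegrable_iff, uIoc_of_le hS₁0] at this
        apply hbase.congr_fun_ae
        have hae : ∀ᵐ (x:ℝ), x ≠ S₁ := by rw [ae_iff]; simp
        rw [Filter.EventuallyEq, ae_restrict_iff' measurableSet_Ioc]
        filter_upwards [hae] with x hx hxmem
        have hxlt : x < S₁ := lt_of_le_of_ne hxmem.2 hx
        simp [hgdef, hxlt]
      have hgIoc2 : IntegrableOn g (Ioc S₁ t) volume := by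
        have hbase : IntegrableOn (fun s => ω (t - s) * (L + ε)) (Ioc S₁ t) volume := by
          have := (hωI S₁ t t hS₁0 ht.le le_rfl).mul_const (L + ε)
          rwa [intervalIntegrable_iff, uIoc_of_le ht.le] at this
        apply hbase.congr_fun _ measurableSet_Ioc
        intro x hx
        have hxlt : ¬ x < S₁ := not_lt.2 hx.1.le
        simp [hgdef, hxlt]
      have hgint1 : IntervalIntegrable g volume 0 S₁ := by
        rw [intervalIntegrable_iff, uIoc_of_le hS₁0]; exact hgIoc1
      have hgint2 : IntervalIntegrable g volume S₁ t := by
        rw [intervalIntegrable_iff, uIoc_of_le ht.le]; exact hgIoc2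
      have hgint : IntervalIntegrable g volume 0 t := by
        rw [intervalIntegrable_iff, uIoc_of_le h0t.le, ← Ioc_union_Ioc_eq_Ioc hS₁0 ht.le]
        exact hgIoc1.union hgIoc2
      have hωnn : ∀ s ∈ Icc (0:ℝ) t, 0 ≤ ω (t - s) :=
        fun s hs => (hωpos _ (by linarith [hs.1, hs.2])).le
      have hptwise : ∀ s ∈ Icc (0:ℝ) t,
          ω (t - s) * sSup (v '' Icc (s - ρ s) s) ≤ g s := by
        intro s hs
        apply mul_le_mul_of_nonneg_left _ (hωnn s hs)
        by_cases hsS : s < S₁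
        · rw [if_pos hsS]
          apply hSb _ _ hD0
          intro x hx
          have hx1 : -τ ≤ x := le_trans (hρ1 s hs.1) hx.1
          have := hbdd x hx1
          simp only [hDdef]; linarith
        · rw [if_neg hsS]
          apply hSb _ _ hLε0
          intro x hx
          have hsS₁ : S₁ ≤ s := not_lt.1 hsS
          have hS₀s : S₀ ≤ s - ρ s := hS₁' s (le_trans (le_max_left _ _) hsS₁)
          exact (hS₀ x (le_trans hS₀s hx.1)).le
      have hgnn : ∀ s ∈ Icc (0:ℝ) t, 0 ≤ g s := fun s hs =>
        mul_nonneg (hωnn s hs) (by split <;> linarith)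
      have hIle : ∫ s in (0:ℝ)..t, ω (t - s) * sSup (v '' Icc (s - ρ s) s) ≤
          ∫ s in (0:ℝ)..t, g s :=
        hal_integral_le_of_le h0t.le hgint hptwise hgnn
      have hsplit : ∫ s in (0:ℝ)..t, g s = (∫ s in (0:ℝ)..S₁, g s) + ∫ s in S₁..t, g s :=
        (intervalIntegral.integral_add_adjacent_intervals hgint1 hgint2).symm
      have hpart1 : ∫ s in (0:ℝ)..S₁, g s ≤ S₁ * (ω (t - S₁) * D) := by
        have hle : ∀ s ∈ Icc (0:ℝ) S₁, g s ≤ ω (t - S₁) * D := by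
          intro s hs
          have hωm : ω (t - s) ≤ ω (t - S₁) :=
            hωmono (t - S₁) (t - s) (by linarith) (by linarith [hs.2])
          have hite : (if s < S₁ then D else L + ε) ≤ D := by
            split
            · exact le_rfl
            · simp only [hDdef]; linarith
          have hite0 : (0:ℝ) ≤ (if s < S₁ then D else L + ε) := by split <;> linarith
          calc g s ≤ ω (t - S₁) * (if s < S₁ then D else L + ε) :=
                mul_le_mul_of_nonneg_right hωm hite0
            _ ≤ ω (t - S₁) * D :=
                mul_le_mul_of_nonneg_left hite (hωpos _ (by linarith)).le
        have h := hal_integral_le_of_le hS₁0 (intervalIntegrable_const) hle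
          (fun s hs => mul_nonneg (hωpos _ (by linarith)).le hD0)
        rw [intervalIntegral.integral_const] at h
        simpa using h
      have hpart2 : ∫ s in S₁..t, g s ≤ μ⁻¹ * (L + ε) := by
        have heq : ∫ s in S₁..t, g s = (∫ s in S₁..t, ω (t - s)) * (L + ε) := by
          rw [← intervalIntegral.integral_mul_const]
          apply intervalIntegral.integral_congr
          intro s hs
          rw [uIcc_of_le ht.le] at hs
          have hxlt : ¬ s < S₁ := not_lt.2 hs.1
          simp [hgdef, hxlt]
        have hsub : ∫ s in S₁..t, ω (t - s) = ∫ s in (0:ℝ)..(t - S₁), ω s := by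
          have h := intervalIntegral.integral_comp_sub_left ω t (a := S₁) (b := t)
          simpa using h
        have hb : ∫ s in (0:ℝ)..(t - S₁), ω s ≤ μ⁻¹ := by
          have h1 := hωint (t - S₁) htS
          have h2 := hωpos (t - S₁) htS.le
          have h3 : (0:ℝ) < μ⁻¹ := inv_pos.2 hμ
          nlinarith
        rw [heq, hsub]
        exact mul_le_mul_of_nonneg_right hb hLε0
      have hψωP : ω t * ψ 0 ≤ ω t * P :=
        mul_le_mul_of_nonneg_left (hPb 0 h0mem) (hωpos t h0t.le).le
      have hi := hineq t h0t
      have haI : a * (∫ s in (0:ℝ)..t, ω (t - s) * sSup (v '' Icc (s - ρ s) s)) ≤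
          a * (S₁ * (ω (t - S₁) * D) + μ⁻¹ * (L + ε)) := by
        apply mul_le_mul_of_nonneg_left _ ha.le
        rw [hsplit] at hIle
        exact le_trans hIle (add_le_add hpart1 hpart2)
      simp only [hGdef]
      have : μ⁻¹ * (L + ε) = (L + ε) * μ⁻¹ := by ring
      linarith [hi, hψωP, haI]
    calc L ≤ limsup G atTop :=
          limsup_le_limsup hvG hbV'.isCoboundedUnder_le hGlim.isBoundedUnder_le
      _ = (0:ℝ) * P + a * (S₁ * ((0:ℝ) * D) + (L + ε) * μ⁻¹) := hGlim.limsup_eq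
      _ = a * ((L + ε) * μ⁻¹) := by ring
  have hLneg : L ≤ 0 := by
    have h1 : L ≤ a * L * μ⁻¹ := by
      apply le_of_forall_pos_le_add
      intro δ hδ
      have hε : (0:ℝ) < δ * μ / a := by positivity
      have := hkey _ hε
      have heq : a * ((L + δ * μ / a) * μ⁻¹) = a * L * μ⁻¹ + δ := by
        field_simp
      linarith [this, heq.le]
    have h2 := mul_le_mul_of_nonneg_right h1 hμ.le
    rw [mul_assoc, inv_mul_cancel₀ hμ.ne', mul_one] at h2
    nlinarith
  have hLs : L = 0 := le_antisymm hLneg hL0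
  have hlis : liminf v atTop = 0 :=
    le_antisymm (hLs ▸ liminf_le_limsup hbV hbV') hliminf0
  exact tendsto_of_liminf_eq_limsup hlis hLs hbV hbV'
end

section
/- Let c ∈ (0,1) and let d : [0,∞) → [0,∞) be a nondecreasing function. Suppose v : [−τ,∞) → [0,∞) is continuous, v(s) = ψ(s) for s ∈ [−τ,0], and for all t > 0 it holds that v(t) ≤ d(t) + c·sup_{ζ∈[−τ,t]} v(ζ). Then for all t > 0, v(t) ≤ (1−c)⁻¹ d(t) + sup_{s∈[−τ,0]} ψ(s). -/
open MeasureTheory Filter Set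

/-- The Halanay comparison inequality of Wang used in the proof of Lemma 2.5. -/
theorem halanay_comparison
    (τ c : ℝ) (d ψ v : ℝ → ℝ)
    (hτ : 0 ≤ τ) (hc0 : 0 < c) (hc1 : c < 1)
    (hd0 : ∀ t ≥ (0:ℝ), 0 ≤ d t)
    (hdmono : ∀ s t : ℝ, 0 ≤ s → s ≤ t → d s ≤ d t)
    (hψc : ContinuousOn ψ (Set.Icc (-τ) 0))
    (hψ0 : ∀ s ∈ Set.Icc (-τ) (0:ℝ), 0 ≤ ψ s)
    (hvc : ContinuousOn v (Set.Ici (-τ)))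
    (hv0 : ∀ t ≥ -τ, 0 ≤ v t)
    (hvψ : ∀ s ∈ Set.Icc (-τ) (0:ℝ), v s = ψ s)
    (hineq : ∀ t > (0:ℝ), v t ≤ d t + c * sSup (v '' Set.Icc (-τ) t)) :
    ∀ t > (0:ℝ), v t ≤ (1 - c)⁻¹ * d t + sSup (ψ '' Set.Icc (-τ) 0) := by
  intro t ht
  have hτt : -τ ≤ t := by linarith
  have hne : (Set.Icc (-τ) t).Nonempty := ⟨0, by constructor <;> linarith⟩
  have hvct : ContinuousOn v (Set.Icc (-τ) t) := hvc.mono (fun x hx => hx.1)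
  obtain ⟨ζ, hζmem, hζmax⟩ := isCompact_Icc.exists_isMaxOn hne hvct
  have hζmax' : ∀ x ∈ Set.Icc (-τ) t, v x ≤ v ζ := fun x hx => hζmax hx
  have hM : sSup (v '' Set.Icc (-τ) t) = v ζ := by
    apply IsGreatest.csSup_eq
    exact ⟨⟨ζ, hζmem, rfl⟩, by rintro y ⟨x, hx, rfl⟩; exact hζmax' x hx⟩
  have hψbdd : BddAbove (ψ '' Set.Icc (-τ) 0) :=
    (isCompact_Icc.image_of_continuousOn hψc).bddAbove
  have hψsup0 : 0 ≤ sSup (ψ '' Set.Icc (-τ) 0) := by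
    have h1 := le_csSup hψbdd (⟨0, ⟨by linarith, le_refl 0⟩, rfl⟩ :
      ψ 0 ∈ ψ '' Set.Icc (-τ) 0)
    have h0 := hψ0 0 ⟨by linarith, le_refl 0⟩
    linarith
  have h1c : 0 < 1 - c := by linarith
  have hinv : (1 - c)⁻¹ * (1 - c) = 1 := inv_mul_cancel₀ (ne_of_gt h1c)
  have hinvpos : 0 < (1 - c)⁻¹ := inv_pos.mpr h1c
  have hcinv : 1 ≤ (1 - c)⁻¹ := by nlinarith
  have hvζ0 : 0 ≤ v ζ := hv0 ζ hζmem.1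
  have hdt := hd0 t (le_of_lt ht)
  by_cases hζ : ζ ≤ 0
  · have hψζ : ψ ζ ≤ sSup (ψ '' Set.Icc (-τ) 0) :=
      le_csSup hψbdd ⟨ζ, ⟨hζmem.1, hζ⟩, rfl⟩
    have hvζψ : v ζ = ψ ζ := hvψ ζ ⟨hζmem.1, hζ⟩
    have h1 := hineq t ht
    rw [hM] at h1
    nlinarith
  · push_neg at hζ
    have h2 := hineq ζ hζ
    have hsub : sSup (v '' Set.Icc (-τ) ζ) ≤ v ζ := by
      have himgne : (v '' Set.Icc (-τ) ζ).Nonempty :=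
        ⟨v ζ, ζ, ⟨hζmem.1, le_refl ζ⟩, rfl⟩
      apply csSup_le himgne
      rintro y ⟨x, hx, rfl⟩
      exact hζmax' x ⟨hx.1, hx.2.trans hζmem.2⟩
    have h3 : v ζ ≤ d ζ + c * v ζ := by nlinarith
    have hdζ : d ζ ≤ d t := hdmono ζ t (le_of_lt hζ) hζmem.2
    have hvt : v t ≤ v ζ := hζmax' t ⟨hτt, le_refl t⟩
    nlinarith
end

section
/- Let T > 0 and let f : [0,T] × H → H be continuous with ‖f(t,v)‖ ≤ p(t)·G(‖v‖) for all t ∈ [0,T] and v ∈ H, where p ∈ L¹(0,T) is nonnegative and G : [0,∞) → [0,∞) is continuous, and suppose limsup_{r→0⁺} (G(r)/r) is finite and satisfies limsup_{r→0⁺} (G(r)/r) · sup_{t∈[0,T]} ∫₀^t ω(t−s) p(s) ds < 1. Assume the Cauchy operator Q on C([0,T];H) is compact. Then there exist δ > 0 and η > 0 such that for every ξ ∈ C([−τ,0];H) with sup_{s∈[−τ,0]} ‖ξ(s)‖ ≤ δ, there exists at least one mild solution u on [−τ,T] of the delay problem with initial datum ξ, and it satisfies sup_{t∈[0,T]} ‖u(t)‖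 ≤ η. -/
open MeasureTheory Filter Set

open Topology

set_option maxHeartbeats 1000000

section RSAux
variable {H : Type*} [NormedAddCommGroup H] [InnerProductSpace ℝ H] [CompleteSpace H]

/-- Joint continuity of a strongly continuous, uniformly bounded family. -/
lemma RSjoint (S' : ℝ → H →L[ℝ] H) (h1 : ∀ v, Continuous fun t => S' t v)
    (h2 : ∀ (t : ℝ) (v : H), ‖S' t v‖ ≤ ‖v‖) :
    Continuous fun q : ℝ × H => S' q.1 q.2 := by
  rw [continuous_iff_continuousAt]
  rintro ⟨t₀, v₀⟩
  have hA : Tendsto (fun q : ℝ × H => S' q.1 (q.2 - v₀)) (𝓝 (t₀, v₀)) (𝓝 0) := by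
    apply squeeze_zero_norm (f := fun q : ℝ × H => S' q.1 (q.2 - v₀))
      (fun q => h2 q.1 (q.2 - v₀))
    have : Tendsto (fun q : ℝ × H => q.2 - v₀) (𝓝 (t₀, v₀)) (𝓝 (v₀ - v₀)) :=
      ((continuous_snd.sub continuous_const).tendsto _)
    simpa using this.norm
  have hB : Tendsto (fun q : ℝ × H => S' q.1 v₀) (𝓝 (t₀, v₀)) (𝓝 (S' t₀ v₀)) :=
    ((h1 v₀).tendsto t₀).comp (continuous_fst.tendsto _)
  have h := hA.add hB
  rw [zero_add] at h
  exact h.congr fun q => by rw [map_sub]; abel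

/-- The basic integral operator. -/
noncomputable def RSInt (S' : ℝ → H →L[ℝ] H) (g : ℝ → H) : ℝ → H :=
  fun t => ∫ s in (0:ℝ)..(max t 0), S' (t - s) (g s)

lemma RSInt_cont (S' : ℝ → H →L[ℝ] H) (hS'j : Continuous fun q : ℝ × H => S' q.1 q.2)
    (g : ℝ → H) (hg : Continuous g) : Continuous (RSInt S' g) := by
  apply intervalIntegral.continuous_parametric_intervalIntegral_of_continuous
    (f := fun (t : ℝ) (s : ℝ) => S' (t - s) (g s))
  · exact hS'j.comp ((continuous_fst.sub continuous_snd).prodMk (hg.comp continuous_snd))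
  · exact continuous_id.max continuous_const

lemma RSInt_zero (S' : ℝ → H →L[ℝ] H) (g : ℝ → H) : RSInt S' g 0 = 0 := by
  simp [RSInt]

lemma RSInt_neg (S' : ℝ → H →L[ℝ] H) (g : ℝ → H) {t : ℝ} (ht : t ≤ 0) :
    RSInt S' g t = 0 := by
  simp [RSInt, max_eq_right ht]
variable {H : Type*} [NormedAddCommGroup H] [InnerProductSpace ℝ H] [CompleteSpace H]


lemma RSmono_int {T t : ℝ} (ht0 : 0 ≤ t) (htT : t ≤ T) (b : ℝ → ℝ)
    (hb : IntervalIntegrable b volume 0 T) (hb0 : ∀ s ∈ Set.Icc (0:ℝ) T, 0 ≤ b s) :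
    (∫ s in (0:ℝ)..t, b s) ≤ ∫ s in (0:ℝ)..T, b s := by
  have hbt : IntervalIntegrable b volume 0 t :=
    hb.mono_set (by rw [Set.uIcc_of_le ht0, Set.uIcc_of_le (ht0.trans htT)]
                    exact Set.Icc_subset_Icc_right htT)
  have hbT : IntervalIntegrable b volume t T :=
    hb.mono_set (by rw [Set.uIcc_of_le htT, Set.uIcc_of_le (ht0.trans htT)]
                    exact Set.Icc_subset_Icc_left ht0)
  have hadd := intervalIntegral.integral_add_adjacent_intervals hbt hbT
  have hpos : 0 ≤ ∫ s in t..T, b s :=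
    intervalIntegral.integral_nonneg htT (fun u hu => hb0 u ⟨ht0.trans hu.1, hu.2⟩)
  linarith

lemma RSInt_bound (S' : ℝ → H →L[ℝ] H) (ω : ℝ → ℝ)
    (hωc : ContinuousOn ω (Set.Ici 0)) (hω0 : ∀ t ≥ (0:ℝ), 0 ≤ ω t)
    (hS'ω : ∀ t ≥ (0:ℝ), ∀ v : H, ‖S' t v‖ ≤ ω t * ‖v‖)
    {t T : ℝ} (ht0 : 0 ≤ t) (htT : t ≤ T)
    (g : ℝ → H) (b : ℝ → ℝ)
    (hb : IntervalIntegrable b volume 0 T)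
    (hgb : ∀ s ∈ Set.Icc (0:ℝ) t, ‖g s‖ ≤ b s) (hb0 : ∀ s ∈ Set.Icc (0:ℝ) t, 0 ≤ b s) :
    ‖RSInt S' g t‖ ≤ ∫ s in (0:ℝ)..t, ω (t - s) * b s := by
  have hmax : max t 0 = t := max_eq_left ht0
  rw [RSInt, hmax]
  have hbt : IntervalIntegrable b volume 0 t :=
    hb.mono_set (by rw [Set.uIcc_of_le ht0, Set.uIcc_of_le (ht0.trans htT)]
                    exact Set.Icc_subset_Icc_right htT)
  have hωcont : ContinuousOn (fun s => ω (t - s)) (Set.uIcc 0 t) := by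
    apply hωc.comp (continuous_const.sub continuous_id).continuousOn
    intro s hs
    rw [Set.uIcc_of_le ht0] at hs
    exact sub_nonneg.2 hs.2
  have hbint : IntervalIntegrable (fun s => ω (t - s) * b s) volume 0 t :=
    hbt.continuousOn_mul hωcont
  have hae : ∀ᵐ s ∂(volume.restrict (Set.uIoc 0 t)), ‖S' (t - s) (g s)‖ ≤ ω (t - s) * b s := by
    rw [Set.uIoc_of_le ht0]
    refine (ae_restrict_iff' measurableSet_Ioc).2 (ae_of_all _ fun s hs => ?_)
    have hts : (0:ℝ) ≤ t - s := sub_nonneg.2 hs.2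
    refine (hS'ω (t - s) hts (g s)).trans ?_
    exact mul_le_mul_of_nonneg_left (hgb s ⟨hs.1.le, hs.2⟩) (hω0 _ hts)
  have := intervalIntegral.norm_integral_le_abs_of_norm_le hae hbint
  refine this.trans (le_of_eq (abs_of_nonneg ?_))
  exact intervalIntegral.integral_nonneg ht0 fun u hu =>
    mul_nonneg (hω0 _ (sub_nonneg.2 hu.2)) (hb0 u hu)

lemma RSInt_bound' (S' : ℝ → H →L[ℝ] H)
    (hS'1 : ∀ (t : ℝ) (v : H), ‖S' t v‖ ≤ ‖v‖)
    {t T : ℝ} (ht0 : 0 ≤ t) (htT : t ≤ T)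
    (g : ℝ → H) (b : ℝ → ℝ)
    (hb : IntervalIntegrable b volume 0 T)
    (hgb : ∀ s ∈ Set.Icc (0:ℝ) T, ‖g s‖ ≤ b s) (hb0 : ∀ s ∈ Set.Icc (0:ℝ) T, 0 ≤ b s) :
    ‖RSInt S' g t‖ ≤ ∫ s in (0:ℝ)..T, b s := by
  have hmax : max t 0 = t := max_eq_left ht0
  rw [RSInt, hmax]
  have hbt : IntervalIntegrable b volume 0 t :=
    hb.mono_set (by rw [Set.uIcc_of_le ht0, Set.uIcc_of_le (ht0.trans htT)]
                    exact Set.Icc_subset_Icc_right htT)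
  have hae : ∀ᵐ s ∂(volume.restrict (Set.uIoc 0 t)), ‖S' (t - s) (g s)‖ ≤ b s := by
    rw [Set.uIoc_of_le ht0]
    refine (ae_restrict_iff' measurableSet_Ioc).2 (ae_of_all _ fun s hs => ?_)
    exact (hS'1 (t - s) (g s)).trans (hgb s ⟨hs.1.le, hs.2.trans htT⟩)
  have h1 := intervalIntegral.norm_integral_le_abs_of_norm_le hae hbt
  have h2 : |∫ s in (0:ℝ)..t, b s| = ∫ s in (0:ℝ)..t, b s :=
    abs_of_nonneg (intervalIntegral.integral_nonneg ht0
      (fun u hu => hb0 u ⟨hu.1, hu.2.trans htT⟩))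
  rw [h2] at h1
  exact h1.trans (RSmono_int ht0 htT b hb hb0)

/-- The one-step (delayed Picard) operator. -/
noncomputable def RSPhi (S' : ℝ → H →L[ℝ] H) (F : ℝ → H → H) (A : ℝ → ℝ) (Z : ℝ → H)
    (w : ℝ → H) : ℝ → H :=
  fun t => Z (min t 0) - Z 0 + S' t (Z 0) + RSInt S' (fun s => F s (w (A s))) t

lemma RSPhi_neg (S' : ℝ → H →L[ℝ] H) (F : ℝ → H → H) (A : ℝ → ℝ) (Z : ℝ → H) (w : ℝ → H)
    (hS'0 : ∀ t ≤ (0:ℝ), ∀ v : H, S' t v = v) {t : ℝ} (ht : t ≤ 0) :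
    RSPhi S' F A Z w t = Z t := by
  have h0 : RSInt S' (fun s => F s (w (A s))) t = 0 := by
    simp [RSInt, max_eq_right ht]
  rw [RSPhi, h0, min_eq_left ht, hS'0 t ht]
  abel

lemma RSPhi_pos (S' : ℝ → H →L[ℝ] H) (F : ℝ → H → H) (A : ℝ → ℝ) (Z : ℝ → H) (w : ℝ → H)
    {t : ℝ} (ht : 0 ≤ t) :
    RSPhi S' F A Z w t = S' t (Z 0) + ∫ s in (0:ℝ)..t, S' (t - s) (F s (w (A s))) := by
  rw [RSPhi, RSInt, min_eq_right ht, max_eq_left ht, sub_self, zero_add]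
variable {H : Type*} [NormedAddCommGroup H] [InnerProductSpace ℝ H] [CompleteSpace H]


lemma RSPhi_cont (S' : ℝ → H →L[ℝ] H) (F : ℝ → H → H) (A : ℝ → ℝ) (Z : ℝ → H) (w : ℝ → H)
    (hS'j : Continuous fun q : ℝ × H => S' q.1 q.2)
    (hF : Continuous (Function.uncurry F)) (hA : Continuous A) (hZ : Continuous Z)
    (hw : Continuous w) : Continuous (RSPhi S' F A Z w) := by
  have h1 : Continuous fun t : ℝ => Z (min t 0) :=
    hZ.comp (continuous_id.min continuous_const)
  have h2 : Continuous fun t : ℝ => S' t (Z 0) :=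
    hS'j.comp (continuous_id.prodMk continuous_const)
  have h3 : Continuous fun s : ℝ => F s (w (A s)) :=
    hF.comp (continuous_id.prodMk (hw.comp hA))
  exact ((h1.sub continuous_const).add h2).add (RSInt_cont S' hS'j _ h3)

lemma RSPhi_lag (S' : ℝ → H →L[ℝ] H) (F : ℝ → H → H) (A : ℝ → ℝ) (Z : ℝ → H)
    {h c : ℝ} (hAs : ∀ s, A s ≤ s - h) (hch : -h ≤ c)
    {w w' : ℝ → H} (hww' : ∀ r ≤ c, w r = w' r) :
    ∀ t ≤ c + h, RSPhi S' F A Z w t = RSPhi S' F A Z w' t := by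
  intro t ht
  unfold RSPhi RSInt
  congr 1
  apply intervalIntegral.integral_congr
  intro s hs
  rw [Set.uIcc_of_le (le_max_right t 0)] at hs
  have hs2 : s ≤ max t 0 := hs.2
  have hmax : max t 0 ≤ max (c + h) 0 := max_le_max ht le_rfl
  have h1 : A s ≤ c := by
    rcases le_total (c + h) 0 with hc0 | hc0
    · have hs0 : s ≤ 0 := le_trans hs2 (by simpa [max_eq_right hc0] using hmax)
      have := hAs s; linarith
    · have hs0 : s ≤ c + h := le_trans hs2 (by simpa [max_eq_left hc0] using hmax)
      have := hAs s; linarith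
  simp only [hww' _ h1]

lemma RSiter_neg (S' : ℝ → H →L[ℝ] H) (F : ℝ → H → H) (A : ℝ → ℝ) (Z : ℝ → H)
    (hS'0 : ∀ t ≤ (0:ℝ), ∀ v : H, S' t v = v) :
    ∀ k : ℕ, ∀ t ≤ (0:ℝ), (RSPhi S' F A Z)^[k] Z t = Z t := by
  intro k
  cases k with
  | zero => intro t _; simp
  | succ n =>
    intro t ht
    rw [Function.iterate_succ_apply', RSPhi_neg S' F A Z _ hS'0 ht]

lemma RSiter_cont (S' : ℝ → H →L[ℝ] H) (F : ℝ → H → H) (A : ℝ → ℝ) (Z : ℝ → H)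
    (hS'j : Continuous fun q : ℝ × H => S' q.1 q.2)
    (hF : Continuous (Function.uncurry F)) (hA : Continuous A) (hZ : Continuous Z) :
    ∀ k : ℕ, Continuous ((RSPhi S' F A Z)^[k] Z) := by
  intro k
  induction k with
  | zero => simpa using hZ
  | succ n ih =>
    rw [Function.iterate_succ_apply']
    exact RSPhi_cont S' F A Z _ hS'j hF hA hZ ih

lemma RSiter_agree (S' : ℝ → H →L[ℝ] H) (F : ℝ → H → H) (A : ℝ → ℝ) (Z : ℝ → H)
    (hS'0 : ∀ t ≤ (0:ℝ), ∀ v : H, S' t v = v)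
    {h : ℝ} (hh : 0 < h) (hAs : ∀ s, A s ≤ s - h) :
    ∀ k : ℕ, ∀ t ≤ (k : ℝ) * h,
      (RSPhi S' F A Z)^[k] Z t = (RSPhi S' F A Z)^[k + 1] Z t := by
  intro k
  induction k with
  | zero =>
    intro t ht
    norm_num at ht
    simp only [Function.iterate_zero_apply, zero_add, Function.iterate_one]
    rw [RSPhi_neg S' F A Z Z hS'0 ht]
  | succ n ih =>
    intro t ht
    rw [Function.iterate_succ_apply', Function.iterate_succ_apply']
    refine RSPhi_lag S' F A Z hAs ?_ ih t ?_
    · nlinarith [Nat.cast_nonneg (α := ℝ) n]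
    · push_cast at ht; linarith
variable {H : Type*} [NormedAddCommGroup H] [InnerProductSpace ℝ H] [CompleteSpace H]

/-- Radial truncation at level `b`. -/
noncomputable def RStr (b : ℝ) (v : H) : H := (b / max ‖v‖ b) • v

lemma RStr_cont {b : ℝ} (hb : 0 < b) : Continuous fun v : H => RStr b v := by
  apply Continuous.smul ?_ continuous_id
  apply continuous_const.div (continuous_norm.max continuous_const)
  intro v
  exact ne_of_gt (lt_max_of_lt_right hb)

lemma RStr_norm_le {b : ℝ} (hb : 0 < b) (v : H) : ‖RStr b v‖ ≤ b := by
  rw [RStr, norm_smul, Real.norm_eq_abs]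
  have hmax : 0 < max ‖v‖ b := lt_max_of_lt_right hb
  rw [abs_of_nonneg (div_nonneg hb.le hmax.le)]
  calc b / max ‖v‖ b * ‖v‖ ≤ b / max ‖v‖ b * max ‖v‖ b := by
        exact mul_le_mul_of_nonneg_left (le_max_left _ _) (div_nonneg hb.le hmax.le)
    _ = b := div_mul_cancel₀ b (ne_of_gt hmax)

lemma RStr_sub_le {b : ℝ} (hb : 0 < b) (v : H) : ‖v - RStr b v‖ ≤ max (‖v‖ - b) 0 := by
  rcases le_total ‖v‖ b with h | h
  · have : RStr b v = v := by
      rw [RStr, max_eq_right h, div_self (ne_of_gt hb), one_smul]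
    simp [this]
  · have hv : 0 < ‖v‖ := lt_of_lt_of_le hb h
    have hmax : max ‖v‖ b = ‖v‖ := max_eq_left h
    have : v - RStr b v = (1 - b / ‖v‖) • v := by
      rw [RStr, hmax, sub_smul, one_smul]
    rw [this, norm_smul, Real.norm_eq_abs]
    have hscal : 0 ≤ 1 - b / ‖v‖ := by
      rw [sub_nonneg, div_le_one hv]; exact h
    rw [abs_of_nonneg hscal]
    have : (1 - b / ‖v‖) * ‖v‖ = ‖v‖ - b := by
      field_simp
    rw [this]
    exact le_max_left _ _

lemma RSapriori (S' : ℝ → H →L[ℝ] H) (ω : ℝ → ℝ) (F : ℝ → H → H) (A : ℝ → ℝ) (Z : ℝ → H)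
    (p G : ℝ → ℝ) {T h δ η c K : ℝ}
    (hh : 0 < h)
    (hS'0 : ∀ t ≤ (0:ℝ), ∀ v : H, S' t v = v)
    (hS'ω : ∀ t ≥ (0:ℝ), ∀ v : H, ‖S' t v‖ ≤ ω t * ‖v‖)
    (hωc : ContinuousOn ω (Set.Ici 0)) (hω0 : ∀ t ≥ (0:ℝ), 0 ≤ ω t)
    (hω1 : ∀ t ≥ (0:ℝ), ω t ≤ 1)
    (hFb : ∀ s ∈ Set.Icc (0:ℝ) T, ∀ v : H, ‖F s v‖ ≤ p s * G ‖v‖)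
    (hp : IntervalIntegrable p volume 0 T) (hp0 : ∀ s ∈ Set.Icc (0:ℝ) T, 0 ≤ p s)
    (hGr : ∀ r : ℝ, 0 ≤ r → r ≤ η → G r ≤ c * r)
    (hKb : ∀ t ∈ Set.Icc (0:ℝ) T, (∫ s in (0:ℝ)..t, ω (t - s) * p s) ≤ K)
    (hAs : ∀ s, A s ≤ s - h)
    (hZb : ∀ s, ‖Z s‖ ≤ δ)
    (hδ : 0 ≤ δ) (hc : 0 ≤ c) (hη : 0 ≤ η) (hδη : δ + c * η * K ≤ η) (hδle : δ ≤ η) :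
    ∀ k : ℕ, ∀ t ≤ T, t ≤ (k : ℝ) * h → ‖(RSPhi S' F A Z)^[k] Z t‖ ≤ η := by
  intro k
  induction k with
  | zero =>
    intro t _ ht0
    norm_num at ht0
    rw [RSiter_neg S' F A Z hS'0 0 t ht0]
    exact (hZb t).trans hδle
  | succ n ih =>
    intro t htT htk
    rcases le_or_gt t 0 with ht0 | ht0
    · rw [RSiter_neg S' F A Z hS'0 _ t ht0]
      exact (hZb t).trans hδle
    · rw [Function.iterate_succ_apply',
        RSPhi_pos S' F A Z ((RSPhi S' F A Z)^[n] Z) ht0.le]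
      set w := (RSPhi S' F A Z)^[n] Z with hw
      have hxb : ∀ s ∈ Set.Icc (0:ℝ) t, ‖w (A s)‖ ≤ η := by
        intro s hs
        rcases le_or_gt (A s) 0 with hA0 | hA0
        · rw [hw, RSiter_neg S' F A Z hS'0 n _ hA0]
          exact (hZb _).trans hδle
        · refine ih (A s) ?_ ?_
          · have := hAs s; have := hs.2; linarith
          · have h1 := hAs s
            have h2 : s ≤ t := hs.2
            have h3 : t ≤ ((n:ℝ) + 1) * h := by push_cast at htk; linarith
            linarith
      have hgb : ∀ s ∈ Set.Icc (0:ℝ) t, ‖F s (w (A s))‖ ≤ p s * (c * η) := by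
        intro s hs
        have hsT : s ∈ Set.Icc (0:ℝ) T := ⟨hs.1, hs.2.trans htT⟩
        refine (hFb s hsT _).trans ?_
        refine mul_le_mul_of_nonneg_left ?_ (hp0 s hsT)
        exact (hGr _ (norm_nonneg _) (hxb s hs)).trans
          (mul_le_mul_of_nonneg_left (hxb s hs) hc)
      have hInt : ‖∫ s in (0:ℝ)..t, S' (t - s) (F s (w (A s)))‖ ≤
          ∫ s in (0:ℝ)..t, ω (t - s) * (p s * (c * η)) := by
        have := RSInt_bound S' ω hωc hω0 hS'ω ht0.le htT
          (fun s => F s (w (A s))) (fun s => p s * (c * η))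
          (hp.mul_const _) hgb
          (fun s hs => mul_nonneg (hp0 s ⟨hs.1, hs.2.trans htT⟩) (mul_nonneg hc hη))
        rw [RSInt, max_eq_left ht0.le] at this
        exact this
      have heq : (∫ s in (0:ℝ)..t, ω (t - s) * (p s * (c * η)))
          = (c * η) * ∫ s in (0:ℝ)..t, ω (t - s) * p s := by
        rw [← intervalIntegral.integral_const_mul]
        exact intervalIntegral.integral_congr fun s _ => by ring
      have hK' : (c * η) * (∫ s in (0:ℝ)..t, ω (t - s) * p s) ≤ c * η * K :=
        mul_le_mul_of_nonneg_left (hKb t ⟨ht0.le, htT⟩) (mul_nonneg hc hη)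
      have hS0' : ‖S' t (Z 0)‖ ≤ δ := by
        refine (hS'ω t ht0.le (Z 0)).trans ?_
        calc ω t * ‖Z 0‖ ≤ 1 * δ :=
              mul_le_mul (hω1 t ht0.le) (hZb 0) (norm_nonneg _) zero_le_one
          _ = δ := one_mul δ
      calc ‖S' t (Z 0) + ∫ s in (0:ℝ)..t, S' (t - s) (F s (w (A s)))‖
          ≤ ‖S' t (Z 0)‖ + ‖∫ s in (0:ℝ)..t, S' (t - s) (F s (w (A s)))‖ := norm_add_le _ _
        _ ≤ δ + c * η * K := by
            have := hInt.trans (heq ▸ hK')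
            linarith
        _ ≤ η := hδη

lemma RScore (S' : ℝ → H →L[ℝ] H) (ω : ℝ → ℝ) (F : ℝ → H → H) (R : ℝ → ℝ) (Z : ℝ → H)
    (p G : ℝ → ℝ) {T δ η c K : ℝ} (hT : 0 < T)
    (hS'j : Continuous fun q : ℝ × H => S' q.1 q.2)
    (hS'0 : ∀ t ≤ (0:ℝ), ∀ v : H, S' t v = v)
    (hS'1 : ∀ (t : ℝ) (v : H), ‖S' t v‖ ≤ ‖v‖)
    (hS'ω : ∀ t ≥ (0:ℝ), ∀ v : H, ‖S' t v‖ ≤ ω t * ‖v‖)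
    (hωc : ContinuousOn ω (Set.Ici 0)) (hω0 : ∀ t ≥ (0:ℝ), 0 ≤ ω t)
    (hω1 : ∀ t ≥ (0:ℝ), ω t ≤ 1)
    (hF : Continuous (Function.uncurry F))
    (hFb : ∀ s ∈ Set.Icc (0:ℝ) T, ∀ v : H, ‖F s v‖ ≤ p s * G ‖v‖)
    (hp : IntervalIntegrable p volume 0 T) (hp0 : ∀ s ∈ Set.Icc (0:ℝ) T, 0 ≤ p s)
    (hGr : ∀ r : ℝ, 0 ≤ r → r ≤ η → G r ≤ c * r)
    (hKb : ∀ t ∈ Set.Icc (0:ℝ) T, (∫ s in (0:ℝ)..t, ω (t - s) * p s) ≤ K)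
    (hRc : Continuous R) (hR0 : ∀ s, 0 ≤ R s)
    (hZc : Continuous Z) (hZb : ∀ s, ‖Z s‖ ≤ δ)
    (hδ : 0 ≤ δ) (hc : 0 ≤ c) (hη : 0 ≤ η) (hδη : δ + c * η * K ≤ η) (hδle : δ ≤ η)
    (hQ' : ∀ B : Set (ℝ → H), (∀ g ∈ B, ContinuousOn g (Set.Icc 0 T)) →
      (∃ C : ℝ, ∀ g ∈ B, ∀ t ∈ Set.Icc (0:ℝ) T, ‖g t‖ ≤ C) →
      IsCompact (closure {h : C(Set.Icc (0:ℝ) T, H) |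
        ∃ g ∈ B, ∀ t : Set.Icc (0:ℝ) T,
          h t = ∫ s in (0:ℝ)..(t:ℝ), S' ((t:ℝ) - s) (g s)})) :
    ∃ u : ℝ → H, Continuous u ∧ (∀ t ≤ (0:ℝ), u t = Z t) ∧
      (∀ t ∈ Set.Icc (0:ℝ) T, ‖u t‖ ≤ η) ∧
      ∀ t ∈ Set.Icc (0:ℝ) T,
        u t = S' t (Z 0) + ∫ s in (0:ℝ)..t, S' (t - s) (F s (u (s - R s))) := by
  classical
  -- lags
  set hn : ℕ → ℝ := fun n => 1 / ((n : ℝ) + 1) with hhn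
  have hhnpos : ∀ n, 0 < hn n := fun n => by positivity
  set An : ℕ → ℝ → ℝ := fun n s => s - R s - hn n with hAn
  have hAc : ∀ n, Continuous (An n) :=
    fun n => (continuous_id.sub hRc).sub continuous_const
  have hAs : ∀ n s, An n s ≤ s - hn n := fun n s => by
    have := hR0 s; simp only [hAn]; linarith
  -- number of iterations
  set Nn : ℕ → ℕ := fun n => ⌈T * ((n : ℝ) + 1)⌉₊ + 1 with hNn
  have hNT : ∀ n, T ≤ (Nn n : ℝ) * hn n := by
    intro n
    have h1 : T * ((n : ℝ) + 1) ≤ (Nn n : ℝ) := by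
      simp only [hNn]; push_cast
      have := Nat.le_ceil (T * ((n : ℝ) + 1))
      linarith
    have h2 : (0:ℝ) < (n : ℝ) + 1 := by positivity
    show T ≤ (Nn n : ℝ) * (1 / ((n : ℝ) + 1))
    rw [mul_one_div, le_div_iff₀ h2]
    exact h1
  -- the approximations
  set un : ℕ → ℝ → H := fun n => (RSPhi S' F (An n) Z)^[Nn n] Z with hun
  have hunc : ∀ n, Continuous (un n) :=
    fun n => RSiter_cont S' F (An n) Z hS'j hF (hAc n) hZc (Nn n)
  have hunneg : ∀ n, ∀ t ≤ (0:ℝ), un n t = Z t :=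
    fun n => RSiter_neg S' F (An n) Z hS'0 (Nn n)
  have hunb : ∀ n, ∀ t ≤ T, ‖un n t‖ ≤ η := by
    intro n t ht
    rcases le_or_gt t 0 with h0 | h0
    · rw [hunneg n t h0]; exact (hZb t).trans hδle
    · exact RSapriori S' ω F (An n) Z p G (hhnpos n) hS'0 hS'ω hωc hω0 hω1 hFb hp hp0
        hGr hKb (hAs n) hZb hδ hc hη hδη hδle (Nn n) t ht (ht.trans (hNT n))
  have huneq : ∀ n, ∀ t ≤ T, un n t = RSPhi S' F (An n) Z (un n) t := by
    intro n t ht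
    conv_rhs => rw [hun, ← Function.iterate_succ_apply' (RSPhi S' F (An n) Z) (Nn n) Z]
    exact RSiter_agree S' F (An n) Z hS'0 (hhnpos n) (hAs n) (Nn n) t (ht.trans (hNT n))
  -- the forcing terms
  set gn : ℕ → ℝ → H := fun n s => F s (un n (An n s)) with hgn
  have hgnc : ∀ n, Continuous (gn n) :=
    fun n => hF.comp (continuous_id.prodMk ((hunc n).comp (hAc n)))
  have hgnb : ∀ n, ∀ s ∈ Set.Icc (0:ℝ) T, ‖gn n s‖ ≤ p s * (c * η) := by
    intro n s hs
    have hAT : An n s ≤ T := by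
      have h1 := hAs n s; have h2 := (hhnpos n); have := hs.2; linarith
    have hxb : ‖un n (An n s)‖ ≤ η := hunb n _ hAT
    refine (hFb s hs _).trans ?_
    refine mul_le_mul_of_nonneg_left ?_ (hp0 s hs)
    exact (hGr _ (norm_nonneg _) hxb).trans (mul_le_mul_of_nonneg_left hxb hc)
  -- continuous map versions of the integral terms
  have hIc : ∀ n, Continuous (RSInt S' (gn n)) := fun n => RSInt_cont S' hS'j _ (hgnc n)
  set hcm : ℕ → C(Set.Icc (0:ℝ) T, H) :=
    fun n => ⟨fun t => RSInt S' (gn n) t, (hIc n).comp continuous_subtype_val⟩ with hhcm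
  have hcm_eq : ∀ n, ∀ t : Set.Icc (0:ℝ) T,
      hcm n t = ∫ s in (0:ℝ)..(t:ℝ), S' ((t:ℝ) - s) (gn n s) := by
    intro n t
    simp only [hhcm, ContinuousMap.coe_mk, RSInt, max_eq_left t.2.1]
  have hunsplit : ∀ n, ∀ t ∈ Set.Icc (0:ℝ) T, un n t = S' t (Z 0) + RSInt S' (gn n) t := by
    intro n t ht
    rw [huneq n t ht.2, RSPhi_pos S' F (An n) Z (un n) ht.1, RSInt, max_eq_left ht.1]
  -- integrability of p on subintervals
  have hpt : ∀ t, 0 ≤ t → t ≤ T → IntervalIntegrable p volume 0 t := by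
    intro t h0 h1
    refine hp.mono_set ?_
    rw [Set.uIcc_of_le h0, Set.uIcc_of_le (h0.trans h1)]
    exact Set.Icc_subset_Icc_right h1
  -- measurability of p
  have hpm : AEStronglyMeasurable p (volume.restrict (Set.Ioc (0:ℝ) T)) :=
    hp.1.aestronglyMeasurable
  set M0 : ℝ := c * η with hM0def
  have hM0 : 0 ≤ M0 := mul_nonneg hc hη
  -- truncation tails
  set bm : ℕ → ℝ → ℝ := fun m s => max (p s * M0 - ((m : ℝ) + 1)) 0 with hbm
  have hbms : ∀ m, AEStronglyMeasurable (bm m) (volume.restrict (Set.Ioc (0:ℝ) T)) :=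
    fun m => (((continuous_id.mul continuous_const).sub continuous_const).max
      continuous_const).comp_aestronglyMeasurable hpm
  have hbmb : ∀ m, ∀ s, 0 ≤ p s → ‖bm m s‖ ≤ p s * M0 := by
    intro m s hps
    have hcast : (0:ℝ) ≤ (m : ℝ) := Nat.cast_nonneg m
    rw [Real.norm_eq_abs, abs_of_nonneg (le_max_right _ _)]
    exact max_le (by linarith) (by positivity)
  have hbm_int : ∀ m, IntervalIntegrable (bm m) volume 0 T := by
    intro m
    rw [intervalIntegrable_iff_integrableOn_Ioc_of_le hT.le]
    refine Integrable.mono' (hp.1.mul_const M0) (hbms m) ?_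
    refine (ae_restrict_iff' measurableSet_Ioc).2 (ae_of_all _ fun s hs => ?_)
    exact hbmb m s (hp0 s ⟨hs.1.le, hs.2⟩)
  have hbm0 : ∀ m, ∀ s ∈ Set.Icc (0:ℝ) T, 0 ≤ bm m s := fun m s _ => le_max_right _ _
  set tail : ℕ → ℝ := fun m => ∫ s in (0:ℝ)..T, bm m s with htail
  have htail0 : Tendsto tail atTop (𝓝 0) := by
    have := intervalIntegral.tendsto_integral_filter_of_dominated_convergence
      (μ := volume) (a := 0) (b := T) (F := fun m s => bm m s) (f := fun _ => (0:ℝ))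
      (l := atTop) (bound := fun s => p s * M0)
      (Eventually.of_forall fun m => by rw [Set.uIoc_of_le hT.le]; exact hbms m)
      (Eventually.of_forall fun m => (ae_of_all _ fun s hs => ?_))
      (hp.mul_const M0)
      (ae_of_all _ fun s hs => ?_)
    · simpa using this
    · -- bound
      rw [Set.uIoc_of_le hT.le] at hs
      exact hbmb m s (hp0 s ⟨hs.1.le, hs.2⟩)
    · -- pointwise limit
      have hev : ∀ᶠ m in atTop, bm m s = 0 := by
        filter_upwards [eventually_ge_atTop ⌈p s * M0⌉₊] with m hm
        have h1 : p s * M0 ≤ (m : ℝ) := le_trans (Nat.le_ceil _) (Nat.cast_le.2 hm)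
        exact max_eq_right (by linarith)
      exact tendsto_const_nhds.congr' (hev.mono fun m hm => hm.symm)
  have htail_nonneg : ∀ m, 0 ≤ tail m := fun m =>
    intervalIntegral.integral_nonneg hT.le (hbm0 m)
  -- truncated continuous maps
  set trg : ℕ → ℕ → ℝ → H := fun m n s => RStr ((m : ℝ) + 1) (gn n s) with htrg
  have hmpos : ∀ m : ℕ, (0:ℝ) < (m : ℝ) + 1 := fun m => by positivity
  have htrgc : ∀ m n, Continuous (trg m n) :=
    fun m n => (RStr_cont (hmpos m)).comp (hgnc n)
  have hIcR : ∀ m n, Continuous (RSInt S' (trg m n)) :=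
    fun m n => RSInt_cont S' hS'j _ (htrgc m n)
  set hcmR : ℕ → ℕ → C(Set.Icc (0:ℝ) T, H) :=
    fun m n => ⟨fun t => RSInt S' (trg m n) t, (hIcR m n).comp continuous_subtype_val⟩
    with hhcmR
  have hcmR_eq : ∀ m n, ∀ t : Set.Icc (0:ℝ) T,
      hcmR m n t = ∫ s in (0:ℝ)..(t:ℝ), S' ((t:ℝ) - s) (trg m n s) := by
    intro m n t
    simp only [hhcmR, ContinuousMap.coe_mk, RSInt, max_eq_left t.2.1]
  -- distance between hcm and its truncation
  have hdist : ∀ m n, dist (hcm n) (hcmR m n) ≤ tail m := by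
    intro m n
    rw [ContinuousMap.dist_le (htail_nonneg m)]
    intro x
    rw [dist_eq_norm]
    have hdiff : hcm n x - hcmR m n x = RSInt S' (fun s => gn n s - trg m n s) (x:ℝ) := by
      have hint1 : IntervalIntegrable (fun s => S' ((x:ℝ) - s) (gn n s)) volume 0
          (max (x:ℝ) 0) :=
        Continuous.intervalIntegrable
          (hS'j.comp ((continuous_const.sub continuous_id).prodMk (hgnc n))) _ _
      have hint2 : IntervalIntegrable (fun s => S' ((x:ℝ) - s) (trg m n s)) volume 0
          (max (x:ℝ) 0) :=
        Continuous.intervalIntegrable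
          (hS'j.comp ((continuous_const.sub continuous_id).prodMk (htrgc m n))) _ _
      simp only [hhcm, hhcmR, ContinuousMap.coe_mk, RSInt]
      rw [← intervalIntegral.integral_sub hint1 hint2]
      exact intervalIntegral.integral_congr fun s _ => (map_sub _ _ _).symm
    rw [hdiff]
    refine RSInt_bound' S' hS'1 x.2.1 x.2.2 _ (bm m) (hbm_int m) ?_ (hbm0 m)
    intro s hs
    refine (RStr_sub_le (hmpos m) (gn n s)).trans ?_
    have h1 : ‖gn n s‖ ≤ p s * M0 := hgnb n s hs
    exact max_le_max (sub_le_sub_right h1 _) le_rfl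
  -- total boundedness
  have hX : TotallyBounded (Set.range hcm) := by
    rw [Metric.totallyBounded_iff]
    intro ε hε
    obtain ⟨m, hm⟩ := (htail0.eventually (gt_mem_nhds (by linarith : (0:ℝ) < ε/3))).exists
    set B : Set (ℝ → H) := Set.range (trg m) with hB
    have hB1 : ∀ g ∈ B, ContinuousOn g (Set.Icc (0:ℝ) T) := by
      rintro g ⟨n, rfl⟩; exact (htrgc m n).continuousOn
    have hB2 : ∃ C : ℝ, ∀ g ∈ B, ∀ t ∈ Set.Icc (0:ℝ) T, ‖g t‖ ≤ C := by
      refine ⟨(m : ℝ) + 1, ?_⟩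
      rintro g ⟨n, rfl⟩ t _
      exact RStr_norm_le (hmpos m) _
    have hKm := hQ' B hB1 hB2
    obtain ⟨D, hDfin, hDcov⟩ := (Metric.totallyBounded_iff.1 hKm.totallyBounded)
      (ε/3) (by linarith)
    refine ⟨D, hDfin, ?_⟩
    rintro x ⟨n, rfl⟩
    have hmem : hcmR m n ∈ closure {h : C(Set.Icc (0:ℝ) T, H) |
        ∃ g ∈ B, ∀ t : Set.Icc (0:ℝ) T,
          h t = ∫ s in (0:ℝ)..(t:ℝ), S' ((t:ℝ) - s) (g s)} :=
      subset_closure ⟨trg m n, ⟨n, rfl⟩, hcmR_eq m n⟩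
    have := hDcov hmem
    simp only [Set.mem_iUnion, Metric.mem_ball] at this ⊢
    obtain ⟨y, hyD, hy⟩ := this
    refine ⟨y, hyD, ?_⟩
    calc dist (hcm n) y ≤ dist (hcm n) (hcmR m n) + dist (hcmR m n) y := dist_triangle _ _ _
      _ < tail m + ε/3 := by have := hdist m n; linarith
      _ < ε := by linarith
  -- compactness and subsequence extraction
  have hXc : IsCompact (closure (Set.range hcm)) :=
    isCompact_iff_totallyBounded_isComplete.2
      ⟨hX.closure, isClosed_closure.isComplete⟩
  obtain ⟨a0, _ha0, φ, hφ, hconv⟩ :=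
    hXc.tendsto_subseq (fun n => subset_closure (Set.mem_range_self n))
  set dj : ℕ → ℝ := fun j => dist (hcm (φ j)) a0 with hdj
  have hdj0 : Tendsto dj atTop (𝓝 0) := tendsto_iff_dist_tendsto_zero.1 hconv
  have hptw : ∀ x : Set.Icc (0:ℝ) T, Tendsto (fun j => hcm (φ j) x) atTop (𝓝 (a0 x)) :=
    fun x => tendsto_iff_dist_tendsto_zero.2 (squeeze_zero (fun j => dist_nonneg)
      (fun j => ContinuousMap.dist_apply_le_dist x) hdj0)
  have h0mem : (0:ℝ) ∈ Set.Icc (0:ℝ) T := ⟨le_refl 0, hT.le⟩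
  have ha00 : a0 ⟨0, h0mem⟩ = 0 := by
    have h1 := hptw ⟨0, h0mem⟩
    have h2 : ∀ j, hcm (φ j) (⟨0, h0mem⟩ : Set.Icc (0:ℝ) T) = 0 := by
      intro j
      simp [hhcm, RSInt]
    exact tendsto_nhds_unique (h1.congr h2) tendsto_const_nhds
  -- the limit function
  set u : ℝ → H := fun t =>
    Z (min t 0) - Z 0 + S' t (Z 0) + a0 (Set.projIcc 0 T hT.le (max t 0)) with hu
  have huc : Continuous u := by
    refine (((hZc.comp (continuous_id.min continuous_const)).sub continuous_const).add
      (hS'j.comp (continuous_id.prodMk continuous_const))).add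
      (a0.continuous.comp (continuous_projIcc.comp (continuous_id.max continuous_const)))
  have huneg : ∀ t ≤ (0:ℝ), u t = Z t := by
    intro t ht
    have hproj : Set.projIcc (0:ℝ) T hT.le (max t 0) = ⟨0, h0mem⟩ := by
      rw [max_eq_right ht]
      exact Set.projIcc_left _
    rw [hu]
    simp only [min_eq_left ht, hproj, ha00, hS'0 t ht]
    abel
  have hupos : ∀ t, ∀ ht : t ∈ Set.Icc (0:ℝ) T, u t = S' t (Z 0) + a0 ⟨t, ht⟩ := by
    intro t ht
    have hproj : Set.projIcc (0:ℝ) T hT.le (max t 0) = ⟨t, ht⟩ := by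
      rw [max_eq_left ht.1]
      exact Set.projIcc_of_mem _ ht
    rw [hu]
    simp only [min_eq_right ht.1, hproj, sub_self, zero_sub]
    abel
  -- uniform closeness of the subsequence to u
  have hclose : ∀ j, ∀ r ≤ T, ‖un (φ j) r - u r‖ ≤ dj j := by
    intro j r hr
    rcases le_or_gt r 0 with h0 | h0
    · rw [hunneg _ _ h0, huneg _ h0, sub_self]
      simp only [norm_zero]
      exact dist_nonneg
    · have hrI : r ∈ Set.Icc (0:ℝ) T := ⟨h0.le, hr⟩
      rw [hunsplit _ _ hrI, hupos r hrI]
      have heq : (S' r (Z 0) + RSInt S' (gn (φ j)) r) - (S' r (Z 0) + a0 ⟨r, hrI⟩)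
          = hcm (φ j) ⟨r, hrI⟩ - a0 ⟨r, hrI⟩ := by
        simp only [hhcm, ContinuousMap.coe_mk]
        abel
      rw [heq, ← dist_eq_norm]
      exact ContinuousMap.dist_apply_le_dist _
  -- norm bound on u
  have hub : ∀ t ∈ Set.Icc (0:ℝ) T, ‖u t‖ ≤ η := by
    intro t ht
    have h1 : ∀ j, ‖u t‖ ≤ η + dj j := by
      intro j
      have h2 := hclose j t ht.2
      have h3 := hunb (φ j) t ht.2
      calc ‖u t‖ = ‖un (φ j) t - (un (φ j) t - u t)‖ := by rw [sub_sub_cancel]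
        _ ≤ ‖un (φ j) t‖ + ‖un (φ j) t - u t‖ := norm_sub_le _ _
        _ ≤ η + dj j := add_le_add h3 h2
    have h4 : Tendsto (fun j => η + dj j) atTop (𝓝 (η + 0)) :=
      Tendsto.add tendsto_const_nhds hdj0
    rw [add_zero] at h4
    exact ge_of_tendsto h4 (Eventually.of_forall h1)
  -- the lag tends to zero along the subsequence
  have hhnφ : Tendsto (fun j => hn (φ j)) atTop (𝓝 0) := by
    have hle : ∀ j, hn (φ j) ≤ 1 / ((j : ℝ) + 1) := by
      intro j
      have hj : j ≤ φ j := hφ.le_apply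
      have : (j : ℝ) + 1 ≤ (φ j : ℝ) + 1 := by
        exact_mod_cast Nat.add_le_add_right hj 1
      exact one_div_le_one_div_of_le (by positivity) this
    exact squeeze_zero (fun j => (hhnpos (φ j)).le) hle
      tendsto_one_div_add_atTop_nhds_zero_nat
  -- passing to the limit in the integral equation
  have hmain : ∀ t, ∀ ht : t ∈ Set.Icc (0:ℝ) T,
      a0 ⟨t, ht⟩ = ∫ s in (0:ℝ)..t, S' (t - s) (F s (u (s - R s))) := by
    intro t ht
    have hFj : Tendsto
        (fun j => ∫ s in (0:ℝ)..t, S' (t - s) (F s (un (φ j) (An (φ j) s))))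
        atTop (𝓝 (∫ s in (0:ℝ)..t, S' (t - s) (F s (u (s - R s))))) := by
      apply intervalIntegral.tendsto_integral_filter_of_dominated_convergence
        (bound := fun s => p s * M0)
      · refine Eventually.of_forall fun j => Continuous.aestronglyMeasurable ?_
        exact hS'j.comp ((continuous_const.sub continuous_id).prodMk
          (hF.comp (continuous_id.prodMk ((hunc _).comp (hAc _)))))
      · refine Eventually.of_forall fun j => (ae_of_all _ fun s hs => ?_)
        rw [Set.uIoc_of_le ht.1] at hs
        have hsI : s ∈ Set.Icc (0:ℝ) T := ⟨hs.1.le, hs.2.trans ht.2⟩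
        have hAT : An (φ j) s ≤ T := by
          have h1 := hAs (φ j) s
          have h2 := hhnpos (φ j)
          have := hsI.2
          linarith
        have hxb : ‖un (φ j) (An (φ j) s)‖ ≤ η := hunb _ _ hAT
        refine (hS'1 _ _).trans ((hFb s hsI _).trans ?_)
        refine mul_le_mul_of_nonneg_left ?_ (hp0 s hsI)
        exact (hGr _ (norm_nonneg _) hxb).trans (mul_le_mul_of_nonneg_left hxb hc)
      · exact (hpt t ht.1 ht.2).mul_const M0
      · refine ae_of_all _ fun s hs => ?_
        rw [Set.uIoc_of_le ht.1] at hs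
        have hsI : s ∈ Set.Icc (0:ℝ) T := ⟨hs.1.le, hs.2.trans ht.2⟩
        -- convergence of the delayed argument
        have hAconv : Tendsto (fun j => An (φ j) s) atTop (𝓝 (s - R s)) := by
          have h1 : Tendsto (fun j => s - R s - hn (φ j)) atTop (𝓝 (s - R s - 0)) :=
            Tendsto.sub tendsto_const_nhds hhnφ
          rw [sub_zero] at h1
          exact h1.congr fun j => rfl
        have hxconv : Tendsto (fun j => un (φ j) (An (φ j) s)) atTop
            (𝓝 (u (s - R s))) := by
          have t1 : Tendsto (fun j => un (φ j) (An (φ j) s) - u (An (φ j) s)) atTop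
              (𝓝 0) := by
            refine squeeze_zero_norm (fun j => hclose j _ ?_) hdj0
            have h1 := hAs (φ j) s
            have h2 := hhnpos (φ j)
            have := hsI.2
            linarith
          have t2 : Tendsto (fun j => u (An (φ j) s)) atTop (𝓝 (u (s - R s))) :=
            (huc.tendsto _).comp hAconv
          have := t1.add t2
          rw [zero_add] at this
          exact this.congr fun j => by abel
        have hFconv : Tendsto (fun j => F s (un (φ j) (An (φ j) s))) atTop
            (𝓝 (F s (u (s - R s)))) := by
          have := (hF.tendsto (s, u (s - R s))).comp
            (tendsto_const_nhds.prodMk_nhds hxconv)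
          exact this
        exact ((S' (t - s)).continuous.tendsto _).comp hFconv
    have hFj' : Tendsto (fun j => hcm (φ j) ⟨t, ht⟩) atTop
        (𝓝 (∫ s in (0:ℝ)..t, S' (t - s) (F s (u (s - R s))))) := by
      refine hFj.congr fun j => ?_
      rw [hcm_eq (φ j) ⟨t, ht⟩]
    exact tendsto_nhds_unique (hptw ⟨t, ht⟩) hFj'
  refine ⟨u, huc, huneg, hub, fun t ht => ?_⟩
  rw [hupos t ht, hmain t ht]

end RSAux

/-- A mild solution on `[-τ, T]` of the delayed Rayleigh–Stokes problem with
resolvent family `S`, nonlinearity `f`, delay `ρ` and initial datum `ξ`. -/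
def IsMildSolutionOn {H : Type*} [NormedAddCommGroup H] [InnerProductSpace ℝ H]
    [CompleteSpace H] (S : ℝ → H →L[ℝ] H) (f : ℝ → H → H) (ρ : ℝ → ℝ)
    (τ T : ℝ) (ξ u : ℝ → H) : Prop :=
  ContinuousOn u (Set.Icc (-τ) T) ∧
  (∀ s ∈ Set.Icc (-τ) (0:ℝ), u s = ξ s) ∧
  ∀ t ∈ Set.Icc (0:ℝ) T,
    u t = S t (ξ 0) + ∫ s in (0:ℝ)..t, S (t - s) (f s (u (s - ρ s)))

/-- Theorem 3.1: local existence of mild solutions with small data when the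
nonlinearity `f` has a (possibly superlinear) growth controlled by `p·G`. -/
theorem exists_mild_solution_superlinear
    {H : Type*} [NormedAddCommGroup H] [InnerProductSpace ℝ H] [CompleteSpace H]
    (S : ℝ → H →L[ℝ] H) (ω : ℝ → ℝ) (τ T : ℝ) (ρ : ℝ → ℝ)
    (f : ℝ → H → H) (p G : ℝ → ℝ)
    (hτ : 0 ≤ τ) (hT : 0 < T)
    (hS0 : S 0 = ContinuousLinearMap.id ℝ H)
    (hScont : ∀ v : H, ContinuousOn (fun t => S t v) (Set.Ici 0))
    (hωc : ContinuousOn ω (Set.Ici 0))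
    (hωpos : ∀ t ≥ (0:ℝ), 0 < ω t) (hωle : ∀ t ≥ (0:ℝ), ω t ≤ 1)
    (hωmono : ∀ s t : ℝ, 0 ≤ s → s ≤ t → ω t ≤ ω s)
    (hSω : ∀ t ≥ (0:ℝ), ∀ v : H, ‖S t v‖ ≤ ω t * ‖v‖)
    (hρc : ContinuousOn ρ (Set.Ici 0))
    (hρ1 : ∀ t ≥ (0:ℝ), -τ ≤ t - ρ t) (hρ2 : ∀ t ≥ (0:ℝ), t - ρ t ≤ t)
    (hfc : ContinuousOn (Function.uncurry f) (Set.Icc (0:ℝ) T ×ˢ (Set.univ : Set H)))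
    (hfG : ∀ t ∈ Set.Icc (0:ℝ) T, ∀ v : H, ‖f t v‖ ≤ p t * G ‖v‖)
    (hp : IntervalIntegrable p MeasureTheory.volume 0 T)
    (hp0 : ∀ t ∈ Set.Icc (0:ℝ) T, 0 ≤ p t)
    (hGc : ContinuousOn G (Set.Ici 0))
    (hG0 : ∀ r ≥ (0:ℝ), 0 ≤ G r)
    (hGbdd : Filter.IsBoundedUnder (· ≤ ·) (nhdsWithin 0 (Set.Ioi 0)) (fun r => G r / r))
    (hsmall : Filter.limsup (fun r => G r / r) (nhdsWithin 0 (Set.Ioi 0)) *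
      sSup ((fun t => ∫ s in (0:ℝ)..t, ω (t - s) * p s) '' Set.Icc 0 T) < 1)
    (hQ : ∀ B : Set (ℝ → H), (∀ g ∈ B, ContinuousOn g (Set.Icc 0 T)) →
      (∃ C : ℝ, ∀ g ∈ B, ∀ t ∈ Set.Icc (0:ℝ) T, ‖g t‖ ≤ C) →
      IsCompact (closure {h : C(Set.Icc (0:ℝ) T, H) |
        ∃ g ∈ B, ∀ t : Set.Icc (0:ℝ) T,
          h t = ∫ s in (0:ℝ)..(t:ℝ), S ((t:ℝ) - s) (g s)})) :
    ∃ δ > (0:ℝ), ∃ η > (0:ℝ), ∀ ξ : ℝ → H, ContinuousOn ξ (Set.Icc (-τ) 0) →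
      (∀ s ∈ Set.Icc (-τ) (0:ℝ), ‖ξ s‖ ≤ δ) →
      ∃ u : ℝ → H, IsMildSolutionOn S f ρ τ T ξ u ∧
        ∀ t ∈ Set.Icc (0:ℝ) T, ‖u t‖ ≤ η := by
  classical
  -- the sup of the convolution integrals
  set Kset : Set ℝ := (fun t => ∫ s in (0:ℝ)..t, ω (t - s) * p s) '' Set.Icc 0 T with hKset
  set K : ℝ := sSup Kset with hKdef
  set L : ℝ := Filter.limsup (fun r => G r / r) (nhdsWithin 0 (Set.Ioi 0)) with hLdef
  have hpt : ∀ t, 0 ≤ t → t ≤ T → IntervalIntegrable p volume 0 t := by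
    intro t h0 h1
    refine hp.mono_set ?_
    rw [Set.uIcc_of_le h0, Set.uIcc_of_le (h0.trans h1)]
    exact Set.Icc_subset_Icc_right h1
  have hKsetb : ∀ y ∈ Kset, y ≤ ∫ s in (0:ℝ)..T, p s := by
    rintro y ⟨t, htI, rfl⟩
    have hωcont : ContinuousOn (fun s => ω (t - s)) (Set.uIcc 0 t) := by
      apply hωc.comp (continuous_const.sub continuous_id).continuousOn
      intro s hs
      rw [Set.uIcc_of_le htI.1] at hs
      exact sub_nonneg.2 hs.2
    have h1 : (∫ s in (0:ℝ)..t, ω (t - s) * p s) ≤ ∫ s in (0:ℝ)..t, p s := by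
      refine intervalIntegral.integral_mono_on htI.1
        ((hpt t htI.1 htI.2).continuousOn_mul hωcont) (hpt t htI.1 htI.2) ?_
      intro s hs
      have hps : 0 ≤ p s := hp0 s ⟨hs.1, hs.2.trans htI.2⟩
      have hω1 : ω (t - s) ≤ 1 := hωle _ (sub_nonneg.2 hs.2)
      calc ω (t - s) * p s ≤ 1 * p s := mul_le_mul_of_nonneg_right hω1 hps
        _ = p s := one_mul _
    exact h1.trans (RSmono_int htI.1 htI.2 p hp hp0)
  have hbdd : BddAbove Kset := ⟨∫ s in (0:ℝ)..T, p s, fun y hy => hKsetb y hy⟩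
  have hKmem0 : (0:ℝ) ∈ Kset := ⟨0, ⟨le_refl 0, hT.le⟩, by simp⟩
  have hK0 : 0 ≤ K := le_csSup hbdd hKmem0
  have hKb : ∀ t ∈ Set.Icc (0:ℝ) T, (∫ s in (0:ℝ)..t, ω (t - s) * p s) ≤ K :=
    fun t ht => le_csSup hbdd ⟨t, ht, rfl⟩
  -- choice of the constant c
  set m : ℝ := max L 0 with hmdef
  have hm0 : 0 ≤ m := le_max_right _ _
  have hmK : m * K < 1 := by
    rcases le_or_gt L 0 with hL0 | hL0
    · rw [hmdef, max_eq_right hL0, zero_mul]; exact one_pos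
    · rw [hmdef, max_eq_left hL0.le]; exact hsmall
  set d : ℝ := (1 - m * K) / (K + 1) with hddef
  have hK1 : (0:ℝ) < K + 1 := by linarith
  have hd0 : 0 < d := div_pos (by linarith) hK1
  have hd : d * (K + 1) = 1 - m * K := div_mul_cancel₀ _ (ne_of_gt hK1)
  set c : ℝ := m + d with hcdef
  have hc0 : 0 < c := by linarith
  have hcL : L < c := by
    have : L ≤ m := le_max_left _ _
    linarith
  have hcK : c * K < 1 := by
    have hexp : c * K = m * K + d * K := by rw [hcdef]; ring
    have hdK : d * K = (1 - m * K) - d := by linarith [hd]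
    linarith
  -- small radius where G r ≤ c r
  have hev : ∀ᶠ r in nhdsWithin (0:ℝ) (Set.Ioi 0), G r / r < c :=
    Filter.eventually_lt_of_limsup_lt hcL hGbdd
  obtain ⟨η, hηmem, hηIoc⟩ := mem_nhdsGT_iff_exists_Ioc_subset.1 hev
  have hη0 : (0:ℝ) < η := hηmem
  have hGle : ∀ r ∈ Set.Ioc (0:ℝ) η, G r ≤ c * r := by
    intro r hr
    have := hηIoc hr
    have h2 : G r / r < c := this
    have := (div_lt_iff₀ hr.1).1 h2
    linarith [this]
  have hG00 : G 0 = 0 := by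
    have h1 : ContinuousWithinAt G (Set.Ici 0) 0 := hGc 0 (by exact Set.self_mem_Ici)
    have h2 : Tendsto G (nhdsWithin (0:ℝ) (Set.Ioi 0)) (𝓝 (G 0)) :=
      h1.tendsto.mono_left (nhdsWithin_mono _ Set.Ioi_subset_Ici_self)
    have h3 : Tendsto (fun r : ℝ => c * r) (nhdsWithin (0:ℝ) (Set.Ioi 0)) (𝓝 (c * 0)) :=
      ((continuous_const.mul continuous_id :
        Continuous fun r : ℝ => c * r).tendsto 0).mono_left nhdsWithin_le_nhds
    rw [mul_zero] at h3
    have h4 : ∀ᶠ r in nhdsWithin (0:ℝ) (Set.Ioi 0), G r ≤ c * r := by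
      filter_upwards [Ioc_mem_nhdsGT_of_mem ⟨le_refl (0:ℝ), hη0⟩] with r hr
      exact hGle r hr
    have h5 : G 0 ≤ 0 := le_of_tendsto_of_tendsto h2 h3 h4
    exact le_antisymm h5 (hG0 0 le_rfl)
  have hGr : ∀ r : ℝ, 0 ≤ r → r ≤ η → G r ≤ c * r := by
    intro r h0 hr
    rcases eq_or_lt_of_le h0 with h | h
    · rw [← h, hG00, mul_zero]
    · exact hGle r ⟨h, hr⟩
  -- choice of δ
  set δ : ℝ := η * (1 - c * K) / 2 with hδdef
  have hδ0 : 0 < δ := by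
    have : 0 < 1 - c * K := by linarith
    positivity
  have hδη : δ + c * η * K ≤ η := by
    rw [hδdef]; nlinarith [mul_nonneg hη0.le (sub_nonneg.2 hcK.le)]
  have hδle : δ ≤ η := by
    rw [hδdef]; nlinarith [mul_nonneg hη0.le (mul_nonneg hc0.le hK0), hη0.le]
  refine ⟨δ, hδ0, η, hη0, ?_⟩
  intro ξ hξc hξb
  -- globalized data
  set S' : ℝ → H →L[ℝ] H := fun t => S (max t 0) with hS'def
  set F : ℝ → H → H := fun s v => f (min (max s 0) T) v with hFdef
  set R : ℝ → ℝ := fun s => ρ (max s 0) with hRdef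
  set Z : ℝ → H := fun s => ξ (max (min s 0) (-τ)) with hZdef
  have hS'cont1 : ∀ v : H, Continuous fun t => S' t v := by
    intro v
    exact (hScont v).comp_continuous (continuous_id.max continuous_const)
      (fun t => Set.mem_Ici.2 (le_max_right _ _))
  have hS'norm : ∀ (t : ℝ) (v : H), ‖S' t v‖ ≤ ‖v‖ := by
    intro t v
    have h1 := hSω (max t 0) (le_max_right _ _) v
    have h2 : ω (max t 0) ≤ 1 := hωle _ (le_max_right _ _)
    calc ‖S' t v‖ = ‖S (max t 0) v‖ := rfl
      _ ≤ ω (max t 0) * ‖v‖ := h1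
      _ ≤ 1 * ‖v‖ := mul_le_mul_of_nonneg_right h2 (norm_nonneg _)
      _ = ‖v‖ := one_mul _
  have hS'j : Continuous fun q : ℝ × H => S' q.1 q.2 := RSjoint S' hS'cont1 hS'norm
  have hS'0 : ∀ t ≤ (0:ℝ), ∀ v : H, S' t v = v := by
    intro t ht v
    show S (max t 0) v = v
    rw [max_eq_right ht, hS0]
    rfl
  have hS'id : ∀ t ≥ (0:ℝ), S' t = S t := by
    intro t ht
    show S (max t 0) = S t
    rw [max_eq_left ht]
  have hS'ω : ∀ t ≥ (0:ℝ), ∀ v : H, ‖S' t v‖ ≤ ω t * ‖v‖ := by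
    intro t ht v
    rw [hS'id t ht]
    exact hSω t ht v
  -- F properties
  have hmaps : ∀ s : ℝ, min (max s 0) T ∈ Set.Icc (0:ℝ) T :=
    fun s => ⟨le_min (le_max_right _ _) hT.le, min_le_right _ _⟩
  have hFc : Continuous (Function.uncurry F) := by
    have hcont : Continuous fun q : ℝ × H => (min (max q.1 0) T, q.2) :=
      (((continuous_fst.max continuous_const).min continuous_const).prodMk continuous_snd)
    exact hfc.comp_continuous hcont
      (fun q => ⟨hmaps q.1, Set.mem_univ _⟩)
  have hFeq : ∀ s ∈ Set.Icc (0:ℝ) T, F s = f s := by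
    intro s hs
    show (fun v => f (min (max s 0) T) v) = f s
    rw [max_eq_left hs.1, min_eq_left hs.2]
  have hFb : ∀ s ∈ Set.Icc (0:ℝ) T, ∀ v : H, ‖F s v‖ ≤ p s * G ‖v‖ := by
    intro s hs v
    rw [hFeq s hs]
    exact hfG s hs v
  -- R properties
  have hRc : Continuous R :=
    hρc.comp_continuous (continuous_id.max continuous_const) (fun s => Set.mem_Ici.2 (le_max_right _ _))
  have hR0 : ∀ s, 0 ≤ R s := by
    intro s
    have := hρ2 (max s 0) (le_max_right _ _)
    show 0 ≤ ρ (max s 0)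
    linarith
  -- Z properties
  have hclampmem : ∀ s : ℝ, max (min s 0) (-τ) ∈ Set.Icc (-τ) (0:ℝ) :=
    fun s => ⟨le_max_right _ _, max_le (min_le_right _ _) (by linarith)⟩
  have hZc : Continuous Z :=
    hξc.comp_continuous ((continuous_id.min continuous_const).max continuous_const)
      hclampmem
  have hZb : ∀ s, ‖Z s‖ ≤ δ := fun s => hξb _ (hclampmem s)
  have hZ0 : Z 0 = ξ 0 := by
    show ξ (max (min (0:ℝ) 0) (-τ)) = ξ 0
    rw [min_self, max_eq_left (by linarith : -τ ≤ (0:ℝ))]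
  -- transfer of the compactness hypothesis
  have hsame : ∀ g : ℝ → H, ∀ t : Set.Icc (0:ℝ) T,
      (∫ s in (0:ℝ)..(t:ℝ), S' ((t:ℝ) - s) (g s))
        = ∫ s in (0:ℝ)..(t:ℝ), S ((t:ℝ) - s) (g s) := by
    intro g t
    apply intervalIntegral.integral_congr
    intro s hs
    rw [Set.uIcc_of_le t.2.1] at hs
    have hts : (0:ℝ) ≤ (t:ℝ) - s := sub_nonneg.2 hs.2
    show S' ((t:ℝ) - s) (g s) = S ((t:ℝ) - s) (g s)
    rw [hS'id _ hts]
  have hQ' : ∀ B : Set (ℝ → H), (∀ g ∈ B, ContinuousOn g (Set.Icc 0 T)) →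
      (∃ C : ℝ, ∀ g ∈ B, ∀ t ∈ Set.Icc (0:ℝ) T, ‖g t‖ ≤ C) →
      IsCompact (closure {h : C(Set.Icc (0:ℝ) T, H) |
        ∃ g ∈ B, ∀ t : Set.Icc (0:ℝ) T,
          h t = ∫ s in (0:ℝ)..(t:ℝ), S' ((t:ℝ) - s) (g s)}) := by
    intro B hB1 hB2
    have hseteq : {h : C(Set.Icc (0:ℝ) T, H) | ∃ g ∈ B, ∀ t : Set.Icc (0:ℝ) T,
          h t = ∫ s in (0:ℝ)..(t:ℝ), S' ((t:ℝ) - s) (g s)}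
        = {h : C(Set.Icc (0:ℝ) T, H) | ∃ g ∈ B, ∀ t : Set.Icc (0:ℝ) T,
          h t = ∫ s in (0:ℝ)..(t:ℝ), S ((t:ℝ) - s) (g s)} := by
      ext h0
      constructor
      · rintro ⟨g, hgB, hg⟩
        exact ⟨g, hgB, fun t => (hg t).trans (hsame g t)⟩
      · rintro ⟨g, hgB, hg⟩
        exact ⟨g, hgB, fun t => (hg t).trans (hsame g t).symm⟩
    rw [hseteq]
    exact hQ B hB1 hB2
  -- apply the core existence result
  obtain ⟨u, huc, huneg, hub, hueq⟩ :=
    RScore S' ω F R Z p G hT hS'j hS'0 hS'norm hS'ω hωc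
      (fun t ht => (hωpos t ht).le) hωle hFc hFb hp hp0 hGr hKb hRc hR0 hZc hZb
      hδ0.le hc0.le hη0.le hδη hδle hQ'
  refine ⟨u, ⟨huc.continuousOn, ?_, ?_⟩, hub⟩
  · intro s hs
    rw [huneg s hs.2]
    show ξ (max (min s 0) (-τ)) = ξ s
    rw [min_eq_left hs.2, max_eq_left hs.1]
  · intro t ht
    rw [hueq t ht, hZ0, hS'id t ht.1]
    congr 1
    apply intervalIntegral.integral_congr
    intro s hs
    rw [Set.uIcc_of_le ht.1] at hs
    have hs0 : (0:ℝ) ≤ s := hs.1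
    have hst : s ≤ t := hs.2
    have h1 : S' (t - s) = S (t - s) := hS'id _ (by linarith)
    have h2 : F s = f s := hFeq s ⟨hs0, hst.trans ht.2⟩
    have h3 : R s = ρ s := by
      show ρ (max s 0) = ρ s
      rw [max_eq_left hs0]
    show S' (t - s) (F s (u (s - R s))) = S (t - s) (f s (u (s - ρ s)))
    rw [h1, h2, h3]
end

section
/- Let T > 0 and let f : [0,T] × H → H be continuous with f(t,0) = 0 for all t and ‖f(t,v₁) − f(t,v₂)‖ ≤ p(t)·κ(r)·‖v₁ − v₂‖ for all t ∈ [0,T] and all v₁, v₂ ∈ H with ‖v₁‖, ‖v₂‖ ≤ r, where p ∈ L¹(0,T) is nonnegative and κ : [0,∞) → [0,∞) is continuous, and suppose limsup_{r→0⁺} κ(r) · sup_{t∈[0,T]} ∫₀^t ω(t−s) p(s) ds < 1. Assume the Cauchy operator Q on C([0,T];H) is compact. Then there exists δ > 0 such that for every ξ ∈ C([−τ,0];H) with sup_{s∈[−τ,0]} ‖ξ(s)‖ ≤ δ, the delay problem has exactly one mild solution on [−τ,T] with initial datum ξ. -/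
open MeasureTheory Filter Set
open scoped Interval Topology

set_option maxHeartbeats 1600000

/-- Theorem 3.3: existence and uniqueness of mild solutions with small data when
`f` is locally Lipschitz with constant `p(t)·κ(r)` on balls of radius `r`. -/
theorem exists_unique_mild_solution
    {H : Type*} [NormedAddCommGroup H] [InnerProductSpace ℝ H] [CompleteSpace H]
    (S : ℝ → H →L[ℝ] H) (ω : ℝ → ℝ) (τ T : ℝ) (ρ : ℝ → ℝ)
    (f : ℝ → H → H) (p κ : ℝ → ℝ)
    (hτ : 0 ≤ τ) (hT : 0 < T)
    (hS0 : S 0 = ContinuousLinearMap.id ℝ H)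
    (hScont : ∀ v : H, ContinuousOn (fun t => S t v) (Set.Ici 0))
    (hωc : ContinuousOn ω (Set.Ici 0))
    (hωpos : ∀ t ≥ (0:ℝ), 0 < ω t) (hωle : ∀ t ≥ (0:ℝ), ω t ≤ 1)
    (hωmono : ∀ s t : ℝ, 0 ≤ s → s ≤ t → ω t ≤ ω s)
    (hSω : ∀ t ≥ (0:ℝ), ∀ v : H, ‖S t v‖ ≤ ω t * ‖v‖)
    (hρc : ContinuousOn ρ (Set.Ici 0))
    (hρ1 : ∀ t ≥ (0:ℝ), -τ ≤ t - ρ t) (hρ2 : ∀ t ≥ (0:ℝ), t - ρ t ≤ t)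
    (hfc : ContinuousOn (Function.uncurry f) (Set.Icc (0:ℝ) T ×ˢ (Set.univ : Set H)))
    (hf0 : ∀ t ∈ Set.Icc (0:ℝ) T, f t 0 = 0)
    (hfLip : ∀ t ∈ Set.Icc (0:ℝ) T, ∀ r ≥ (0:ℝ), ∀ v₁ v₂ : H,
      ‖v₁‖ ≤ r → ‖v₂‖ ≤ r → ‖f t v₁ - f t v₂‖ ≤ p t * κ r * ‖v₁ - v₂‖)
    (hp : IntervalIntegrable p MeasureTheory.volume 0 T)
    (hp0 : ∀ t ∈ Set.Icc (0:ℝ) T, 0 ≤ p t)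
    (hκc : ContinuousOn κ (Set.Ici 0))
    (hκ0 : ∀ r ≥ (0:ℝ), 0 ≤ κ r)
    (hκbdd : Filter.IsBoundedUnder (· ≤ ·) (nhdsWithin 0 (Set.Ioi 0)) κ)
    (hsmall : Filter.limsup κ (nhdsWithin 0 (Set.Ioi 0)) *
      sSup ((fun t => ∫ s in (0:ℝ)..t, ω (t - s) * p s) '' Set.Icc 0 T) < 1)
    (hQ : ∀ B : Set (ℝ → H), (∀ g ∈ B, ContinuousOn g (Set.Icc 0 T)) →
      (∃ C : ℝ, ∀ g ∈ B, ∀ t ∈ Set.Icc (0:ℝ) T, ‖g t‖ ≤ C) →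
      IsCompact (closure {h : C(Set.Icc (0:ℝ) T, H) |
        ∃ g ∈ B, ∀ t : Set.Icc (0:ℝ) T,
          h t = ∫ s in (0:ℝ)..(t:ℝ), S ((t:ℝ) - s) (g s)})) :
    ∃ δ > (0:ℝ), ∀ ξ : ℝ → H, ContinuousOn ξ (Set.Icc (-τ) 0) →
      (∀ s ∈ Set.Icc (-τ) (0:ℝ), ‖ξ s‖ ≤ δ) →
      ∃ u : ℝ → H, IsMildSolutionOn S f ρ τ T ξ u ∧
        ∀ u' : ℝ → H, IsMildSolutionOn S f ρ τ T ξ u' →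
          ∀ t ∈ Set.Icc (-τ) T, u' t = u t := by
  classical
  have hτ0 : -τ ≤ (0:ℝ) := neg_nonpos.2 hτ
  have h0T : (0:ℝ) ∈ Set.Icc (0:ℝ) T := ⟨le_refl _, hT.le⟩
  -- `S` is bounded by 1 in operator norm on `[0,∞)`
  have hS1 : ∀ t ≥ (0:ℝ), ∀ v : H, ‖S t v‖ ≤ ‖v‖ := fun t ht v =>
    (hSω t ht v).trans (by nlinarith [hωle t ht, norm_nonneg v, hωpos t ht])
  -- continuity of `t ↦ S (max t 0) v`
  have hSmax : ∀ v : H, Continuous fun t : ℝ => S (max t 0) v := fun v =>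
    (hScont v).comp_continuous (continuous_id.max continuous_const) fun t => mem_Ici.2 (le_max_right _ _)
  -- joint continuity of `(t, v) ↦ S (max t 0) v`
  have hSj : Continuous fun q : ℝ × H => S (max q.1 0) q.2 := by
    rw [continuous_iff_continuousAt]
    rintro ⟨r₀, v₀⟩
    rw [ContinuousAt, tendsto_iff_dist_tendsto_zero]
    have hb : ∀ q : ℝ × H, dist (S (max q.1 0) q.2) (S (max r₀ 0) v₀) ≤
        ‖q.2 - v₀‖ + dist (S (max q.1 0) v₀) (S (max r₀ 0) v₀) := by
      intro q
      calc dist (S (max q.1 0) q.2) (S (max r₀ 0) v₀)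
          ≤ dist (S (max q.1 0) q.2) (S (max q.1 0) v₀) +
            dist (S (max q.1 0) v₀) (S (max r₀ 0) v₀) := dist_triangle _ _ _
        _ ≤ ‖q.2 - v₀‖ + dist (S (max q.1 0) v₀) (S (max r₀ 0) v₀) := by
            gcongr
            rw [dist_eq_norm, ← map_sub]
            exact hS1 _ (le_max_right _ _) _
    have h1 : Tendsto (fun q : ℝ × H => ‖q.2 - v₀‖ +
        dist (S (max q.1 0) v₀) (S (max r₀ 0) v₀)) (𝓝 (r₀, v₀)) (𝓝 0) := by
      have h2 : Continuous (fun q : ℝ × H => ‖q.2 - v₀‖ +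
          dist (S (max q.1 0) v₀) (S (max r₀ 0) v₀)) :=
        ((continuous_snd.sub continuous_const).norm).add
          (((hSmax v₀).comp continuous_fst).dist continuous_const)
      have h3 := h2.tendsto (r₀, v₀)
      simpa using h3
    exact squeeze_zero (fun q => dist_nonneg) hb h1
  -- integrability facts
  have hpint : ∀ a b : ℝ, 0 ≤ a → b ≤ T → a ≤ b → IntervalIntegrable p volume a b := by
    intro a b ha hb hab
    refine hp.mono_set ?_
    rw [uIcc_of_le hab, uIcc_of_le hT.le]
    exact Icc_subset_Icc ha hb
  have hωpint : ∀ t ∈ Icc (0:ℝ) T, IntervalIntegrable (fun s => ω (t - s) * p s) volume 0 t := by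
    intro t ht
    refine (hpint 0 t le_rfl ht.2 ht.1).continuousOn_mul ?_
    rw [uIcc_of_le ht.1]
    exact hωc.comp (continuous_const.sub continuous_id).continuousOn
      fun s hs => mem_Ici.2 (sub_nonneg.2 hs.2)
  set Mf : ℝ → ℝ := fun t => ∫ s in (0:ℝ)..t, ω (t - s) * p s with hMfdef
  have hMf_le : ∀ t ∈ Icc (0:ℝ) T, Mf t ≤ ∫ s in (0:ℝ)..T, p s := by
    intro t ht
    have h1 : Mf t ≤ ∫ s in (0:ℝ)..t, p s := by
      refine intervalIntegral.integral_mono_on ht.1 (hωpint t ht)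
        (hpint 0 t le_rfl ht.2 ht.1) ?_
      intro s hs
      have hps : 0 ≤ p s := hp0 s ⟨hs.1, hs.2.trans ht.2⟩
      have h2 : ω (t - s) ≤ 1 := hωle _ (sub_nonneg.2 hs.2)
      nlinarith [hωpos (t - s) (sub_nonneg.2 hs.2)]
    have h2 : ∫ s in (0:ℝ)..t, p s ≤ ∫ s in (0:ℝ)..T, p s := by
      have h3 := intervalIntegral.integral_add_adjacent_intervals
        (hpint 0 t le_rfl ht.2 ht.1) (hpint t T ht.1 le_rfl ht.2)
      have h4 : 0 ≤ ∫ s in t..T, p s :=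
        intervalIntegral.integral_nonneg ht.2 fun x hx => hp0 x ⟨ht.1.trans hx.1, hx.2⟩
      linarith
    linarith
  have hbddM : BddAbove (Mf '' Icc 0 T) := by
    refine ⟨∫ s in (0:ℝ)..T, p s, ?_⟩
    rintro x ⟨t, ht, rfl⟩
    exact hMf_le t ht
  set M := sSup (Mf '' Icc 0 T) with hMdef
  have hMle : ∀ t ∈ Icc (0:ℝ) T, Mf t ≤ M := fun t ht =>
    le_csSup hbddM (mem_image_of_mem _ ht)
  have hMf0 : ∀ t ∈ Icc (0:ℝ) T, 0 ≤ Mf t := by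
    intro t ht
    refine intervalIntegral.integral_nonneg ht.1 fun s hs => ?_
    exact mul_nonneg (hωpos _ (sub_nonneg.2 hs.2)).le (hp0 s ⟨hs.1, hs.2.trans ht.2⟩)
  have hM0 : 0 ≤ M := le_trans (hMf0 0 h0T) (hMle 0 h0T)
  -- choose `c` with `limsup κ < c` and `c * M < 1`
  have hL0 : 0 ≤ limsup κ (nhdsWithin 0 (Set.Ioi 0)) := by
    refine le_limsup_of_frequently_le ?_ hκbdd
    refine Eventually.frequently ?_
    filter_upwards [self_mem_nhdsWithin] with x hx
    exact hκ0 x (le_of_lt hx)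
  obtain ⟨c, hc1, hc2⟩ : ∃ c, limsup κ (nhdsWithin 0 (Set.Ioi 0)) < c ∧ c * M < 1 := by
    rcases eq_or_lt_of_le hM0 with h | h
    · exact ⟨limsup κ (nhdsWithin 0 (Set.Ioi 0)) + 1, by linarith, by rw [← h]; linarith⟩
    · refine ⟨(limsup κ (nhdsWithin 0 (Set.Ioi 0)) * M + 1) / (2 * M), ?_, ?_⟩
      · rw [lt_div_iff₀ (by linarith)]
        nlinarith
      · rw [div_mul_eq_mul_div, div_lt_iff₀ (by linarith)]
        nlinarith
  obtain ⟨r, hr0, hκr⟩ : ∃ r : ℝ, 0 < r ∧ κ r < c := by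
    have h1 : ∀ᶠ x in nhdsWithin 0 (Set.Ioi 0), κ x < c :=
      eventually_lt_of_limsup_lt hc1 hκbdd
    obtain ⟨x, hxc, hxmem⟩ := (h1.and eventually_mem_nhdsWithin).exists
    exact ⟨x, hxmem, hxc⟩
  set q := κ r * M with hqdef
  have hκr0 : 0 ≤ κ r := hκ0 r hr0.le
  have hq0 : 0 ≤ q := mul_nonneg hκr0 hM0
  have hq1 : q < 1 := lt_of_le_of_lt (mul_le_mul_of_nonneg_right hκr.le hM0) hc2
  have hδpos : 0 < (1 - q) * r := mul_pos (by linarith) hr0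
  refine ⟨(1 - q) * r, hδpos, ?_⟩
  intro ξ hξc hξδ
  set δ := (1 - q) * r with hδdef
  have hξ0 : ‖ξ 0‖ ≤ δ := hξδ 0 ⟨hτ0, le_rfl⟩
  have hδr : δ ≤ r := by nlinarith
  -- clipping functions
  have hclτ_mem : ∀ x : ℝ, max (min x T) (-τ) ∈ Icc (-τ) T := fun x =>
    ⟨le_max_right _ _, max_le (min_le_right _ _) (hτ0.trans hT.le)⟩
  have hclτ_eq : ∀ x ∈ Icc (-τ) T, max (min x T) (-τ) = x := fun x hx => by
    rw [min_eq_left hx.2, max_eq_left hx.1]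
  have hcl0_mem : ∀ x : ℝ, max (min x T) 0 ∈ Icc (0:ℝ) T := fun x =>
    ⟨le_max_right _ _, max_le (min_le_right _ _) hT.le⟩
  have hcl0_eq : ∀ x ∈ Icc (0:ℝ) T, max (min x T) 0 = x := fun x hx => by
    rw [min_eq_left hx.2, max_eq_left hx.1]
  have hσmem : ∀ s ∈ Icc (0:ℝ) T, s - ρ s ∈ Icc (-τ) T := fun s hs =>
    ⟨hρ1 s hs.1, le_trans (hρ2 s hs.1) hs.2⟩
  set θ : ℝ → ℝ := fun s =>
    max (min (max (min s T) 0 - ρ (max (min s T) 0)) T) (-τ) with hθdef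
  have hθc : Continuous θ := by
    have hρmax : Continuous fun s : ℝ => ρ (max (min s T) 0) :=
      hρc.comp_continuous ((continuous_id.min continuous_const).max continuous_const)
        fun s => mem_Ici.2 (hcl0_mem s).1
    exact ((((((continuous_id.min continuous_const).max continuous_const).sub
      hρmax).min continuous_const).max continuous_const))
  have hθmem : ∀ s, θ s ∈ Icc (-τ) T := fun s => hclτ_mem _
  have hθeq : ∀ s ∈ Icc (0:ℝ) T, θ s = s - ρ s := by
    intro s hs
    show max (min (max (min s T) 0 - ρ (max (min s T) 0)) T) (-τ) = s - ρ s
    rw [hcl0_eq s hs, hclτ_eq _ (hσmem s hs)]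
  -- the clipped nonlinearity
  set G : (ℝ → H) → ℝ → H := fun v s => f (max (min s T) 0) (v (θ s)) with hGdef
  have hGc : ∀ v : ℝ → H, ContinuousOn v (Icc (-τ) T) → Continuous (G v) := by
    intro v hv
    have h1 : Continuous fun s => v (θ s) := hv.comp_continuous hθc hθmem
    have h2 : Continuous fun s : ℝ => ((max (min s T) 0 : ℝ), v (θ s)) :=
      ((continuous_id.min continuous_const).max continuous_const).prodMk h1
    exact hfc.comp_continuous h2 fun s => ⟨hcl0_mem s, mem_univ _⟩
  have hGeq : ∀ (v : ℝ → H), ∀ s ∈ Icc (0:ℝ) T, G v s = f s (v (s - ρ s)) := by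
    intro v s hs
    show f (max (min s T) 0) (v (θ s)) = f s (v (s - ρ s))
    rw [hcl0_eq s hs, hθeq s hs]
  -- main estimate: bound by `M * c`
  have keyBound : ∀ t ∈ Icc (0:ℝ) T, ∀ (g : ℝ → H) (c' : ℝ), 0 ≤ c' → Continuous g →
      (∀ s ∈ Icc (0:ℝ) t, ‖g s‖ ≤ p s * c') →
      ‖∫ s in (0:ℝ)..t, S (max (t - s) 0) (g s)‖ ≤ M * c' := by
    intro t ht g c' hc' hgc hgle
    have hint : IntervalIntegrable (fun s => ω (t - s) * p s * c') volume 0 t :=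
      (hωpint t ht).mul_const c'
    have h1 : ‖∫ s in (0:ℝ)..t, S (max (t - s) 0) (g s)‖ ≤
        |∫ s in (0:ℝ)..t, ω (t - s) * p s * c'| := by
      refine (intervalIntegral.norm_integral_le_of_norm_le ht.1 ?_ hint).trans (le_abs_self _)
      refine ae_of_all _ fun s hs => ?_
      have hs' : s ∈ Icc (0:ℝ) t := ⟨hs.1.le, hs.2⟩
      have hts : 0 ≤ t - s := sub_nonneg.2 hs.2
      calc ‖S (max (t - s) 0) (g s)‖ ≤ ω (max (t - s) 0) * ‖g s‖ :=
            hSω _ (le_max_right _ _) _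
        _ = ω (t - s) * ‖g s‖ := by rw [max_eq_left hts]
        _ ≤ ω (t - s) * (p s * c') :=
            mul_le_mul_of_nonneg_left (hgle s hs') (hωpos _ hts).le
        _ = ω (t - s) * p s * c' := by ring
    have h2 : (∫ s in (0:ℝ)..t, ω (t - s) * p s * c') = Mf t * c' :=
      intervalIntegral.integral_mul_const c' _
    have h4 : 0 ≤ Mf t * c' := mul_nonneg (hMf0 t ht) hc'
    rw [h2, abs_of_nonneg h4] at h1
    exact h1.trans (mul_le_mul_of_nonneg_right (hMle t ht) hc')
  -- tail estimate, used for uniqueness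
  have keyTail : ∀ t ∈ Icc (0:ℝ) T, ∀ a : ℝ, 0 ≤ a → a ≤ t →
      ∀ (g : ℝ → H) (c' : ℝ), 0 ≤ c' → Continuous g →
      (∀ s ∈ Icc (0:ℝ) a, g s = 0) → (∀ s ∈ Icc (0:ℝ) t, ‖g s‖ ≤ p s * c') →
      ‖∫ s in (0:ℝ)..t, S (max (t - s) 0) (g s)‖ ≤ (∫ s in a..t, p s) * c' := by
    intro t ht a ha0 hat g c' hc' hgc hg0 hgle
    have hSgc : Continuous fun s => S (max (t - s) 0) (g s) :=
      hSj.comp ((continuous_const.sub continuous_id).prodMk hgc)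
    have hi1 : IntervalIntegrable (fun s => S (max (t - s) 0) (g s)) volume 0 a :=
      hSgc.intervalIntegrable _ _
    have hi2 : IntervalIntegrable (fun s => S (max (t - s) 0) (g s)) volume a t :=
      hSgc.intervalIntegrable _ _
    have hsplit := (intervalIntegral.integral_add_adjacent_intervals hi1 hi2).symm
    have hfirst : (∫ s in (0:ℝ)..a, S (max (t - s) 0) (g s)) = 0 := by
      have heq : EqOn (fun s => S (max (t - s) 0) (g s)) (fun _ => (0:H)) [[(0:ℝ), a]] := by
        intro s hs
        rw [uIcc_of_le ha0] at hs
        simp [hg0 s hs]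
      rw [intervalIntegral.integral_congr heq, intervalIntegral.integral_zero]
    have hsecond : ‖∫ s in a..t, S (max (t - s) 0) (g s)‖ ≤ |∫ s in a..t, p s * c'| := by
      refine (intervalIntegral.norm_integral_le_of_norm_le hat ?_
        ((hpint a t ha0 ht.2 hat).mul_const c')).trans (le_abs_self _)
      refine ae_of_all _ fun s hs => ?_
      have hs0 : (0:ℝ) ≤ s := le_trans ha0 hs.1.le
      calc ‖S (max (t - s) 0) (g s)‖ ≤ ‖g s‖ := hS1 _ (le_max_right _ _) _
        _ ≤ p s * c' := hgle s ⟨hs0, hs.2⟩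
    have habs : |∫ s in a..t, p s * c'| = (∫ s in a..t, p s) * c' := by
      rw [intervalIntegral.integral_mul_const]
      refine abs_of_nonneg (mul_nonneg ?_ hc')
      exact intervalIntegral.integral_nonneg hat
        fun s hs => hp0 s ⟨le_trans ha0 hs.1, le_trans hs.2 ht.2⟩
    rw [hsplit, hfirst, zero_add]
    rw [habs] at hsecond
    exact hsecond
  -- reformulation of mild solutions
  have mildNice : ∀ v : ℝ → H, IsMildSolutionOn S f ρ τ T ξ v →
      ∀ t ∈ Icc (0:ℝ) T, v t = S (max t 0) (ξ 0) +
        ∫ s in (0:ℝ)..t, S (max (t - s) 0) (G v s) := by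
    intro v hv t ht
    rw [hv.2.2 t ht, max_eq_left ht.1]
    congr 1
    refine intervalIntegral.integral_congr fun s hs => ?_
    rw [uIcc_of_le ht.1] at hs
    have hsT : s ∈ Icc (0:ℝ) T := ⟨hs.1, hs.2.trans ht.2⟩
    show S (t - s) (f s (v (s - ρ s))) = S (max (t - s) 0) (G v s)
    rw [hGeq v s hsT, max_eq_left (sub_nonneg.2 hs.2)]
  -- the uniqueness argument: any two mild solutions agree
  have uniq : ∀ v w : ℝ → H, IsMildSolutionOn S f ρ τ T ξ v →
      IsMildSolutionOn S f ρ τ T ξ w → ∀ t ∈ Icc (-τ) T, v t = w t := by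
    intro v w hv hw
    have hvc := hv.1
    have hwc := hw.1
    obtain ⟨Cv, hCv⟩ : ∃ C : ℝ, ∀ t ∈ Icc (-τ) T, ‖v t‖ ≤ C := by
      obtain ⟨C, hC⟩ := (isCompact_Icc.image_of_continuousOn hvc.norm).bddAbove
      exact ⟨C, fun t ht => hC (mem_image_of_mem _ ht)⟩
    obtain ⟨Cw, hCw⟩ : ∃ C : ℝ, ∀ t ∈ Icc (-τ) T, ‖w t‖ ≤ C := by
      obtain ⟨C, hC⟩ := (isCompact_Icc.image_of_continuousOn hwc.norm).bddAbove
      exact ⟨C, fun t ht => hC (mem_image_of_mem _ ht)⟩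
    set R := max (max Cv Cw) 0 with hRdef
    have hR0 : (0:ℝ) ≤ R := le_max_right _ _
    have hvR : ∀ t ∈ Icc (-τ) T, ‖v t‖ ≤ R := fun t ht =>
      (hCv t ht).trans ((le_max_left _ _).trans (le_max_left _ _))
    have hwR : ∀ t ∈ Icc (-τ) T, ‖w t‖ ≤ R := fun t ht =>
      (hCw t ht).trans ((le_max_right _ _).trans (le_max_left _ _))
    have hκR0 : 0 ≤ κ R := hκ0 R hR0
    set F : ℝ → ℝ := fun y => ∫ x in (0:ℝ)..y, p x with hFdef
    have hFcont : ContinuousOn F (Icc (0:ℝ) T) := by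
      have h1 := intervalIntegral.continuousOn_primitive_interval' hp
        (left_mem_uIcc (a := (0:ℝ)) (b := T))
      rwa [uIcc_of_le hT.le] at h1
    obtain ⟨d, hd0, hdunif⟩ := Metric.uniformContinuousOn_iff.1
      (isCompact_Icc.uniformContinuousOn_of_continuous hFcont)
      (1 / (2 * (κ R + 1))) (by positivity)
    set h := d / 2 with hhdef
    have hh0 : 0 < h := by positivity
    -- induction along the grid
    have main : ∀ i : ℕ, ∀ t ∈ Icc (-τ) (min (i * h) T), v t = w t := by
      intro i
      induction i with
      | zero =>
        intro t ht
        rw [Nat.cast_zero, zero_mul, min_eq_left hT.le] at ht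
        rw [hv.2.1 t ht, hw.2.1 t ht]
      | succ i ih =>
        intro t ht
        set a := min ((i : ℝ) * h) T with hadef
        set b := min (((i : ℕ) + 1 : ℕ) * h) T with hbdef
        have hcast : ((((i : ℕ) + 1 : ℕ) : ℝ) * h) = (i : ℝ) * h + h := by push_cast; ring
        have hih0 : 0 ≤ (i : ℝ) * h := by positivity
        have ha0 : 0 ≤ a := le_min hih0 hT.le
        have haT : a ≤ T := min_le_right _ _
        have hb0 : 0 ≤ b := le_min (by positivity) hT.le
        have hbT : b ≤ T := min_le_right _ _
        have hab : a ≤ b := min_le_min (by nlinarith) le_rfl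
        have hba : b - a ≤ h := by
          rcases le_total ((i : ℝ) * h) T with h2 | h2
          · rcases le_total ((((i : ℕ) + 1 : ℕ) : ℝ) * h) T with h3 | h3
            · rw [hadef, hbdef, min_eq_left h2, min_eq_left h3, hcast]; linarith
            · rw [hadef, hbdef, min_eq_left h2, min_eq_right h3]
              rw [hcast] at h3; linarith
          · rw [hadef, hbdef, min_eq_right h2, min_eq_right (by rw [hcast]; linarith)]
            linarith
        rcases le_or_gt t a with hta | hta
        · exact ih t ⟨ht.1, hta⟩
        · -- find the maximizer of `‖v - w‖` on `[-τ, b]`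
          have hsub : Icc (-τ) b ⊆ Icc (-τ) T := Icc_subset_Icc le_rfl hbT
          have hdiffc : ContinuousOn (fun s => ‖v s - w s‖) (Icc (-τ) b) :=
            ((hvc.mono hsub).sub (hwc.mono hsub)).norm
          obtain ⟨tm, htm, hmax⟩ := isCompact_Icc.exists_isMaxOn
            (nonempty_Icc.2 (hτ0.trans hb0)) hdiffc
          set m := ‖v tm - w tm‖ with hmdef
          have hm0 : 0 ≤ m := norm_nonneg _
          have claim : ∀ s ∈ Icc (-τ) b, ‖v s - w s‖ ≤ 1 / 2 * m := by
            intro s hs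
            rcases le_or_gt s a with h1 | h1
            · rw [ih s ⟨hs.1, h1⟩, sub_self, norm_zero]; linarith
            · have hs0T : s ∈ Icc (0:ℝ) T := ⟨ha0.trans h1.le, hs.2.trans hbT⟩
              have hiv : IntervalIntegrable (fun x => S (max (s - x) 0) (G v x)) volume 0 s :=
                (hSj.comp ((continuous_const.sub continuous_id).prodMk
                  (hGc v hvc))).intervalIntegrable _ _
              have hiw : IntervalIntegrable (fun x => S (max (s - x) 0) (G w x)) volume 0 s :=
                (hSj.comp ((continuous_const.sub continuous_id).prodMk
                  (hGc w hwc))).intervalIntegrable _ _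
              have hsub' : v s - w s =
                  ∫ x in (0:ℝ)..s, S (max (s - x) 0) (G v x - G w x) := by
                calc v s - w s = (∫ x in (0:ℝ)..s, S (max (s - x) 0) (G v x)) -
                      ∫ x in (0:ℝ)..s, S (max (s - x) 0) (G w x) := by
                      rw [mildNice v hv s hs0T, mildNice w hw s hs0T,
                        add_sub_add_left_eq_sub]
                  _ = ∫ x in (0:ℝ)..s, (S (max (s - x) 0) (G v x) -
                      S (max (s - x) 0) (G w x)) :=
                      (intervalIntegral.integral_sub hiv hiw).symm
                  _ = ∫ x in (0:ℝ)..s, S (max (s - x) 0) (G v x - G w x) := by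
                      simp only [map_sub]
              rw [hsub']
              have hzero : ∀ x ∈ Icc (0:ℝ) a, G v x - G w x = 0 := by
                intro x hx
                have hxT : x ∈ Icc (0:ℝ) T := ⟨hx.1, hx.2.trans haT⟩
                have hθx : x - ρ x ∈ Icc (-τ) a :=
                  ⟨hρ1 x hx.1, (hρ2 x hx.1).trans hx.2⟩
                rw [hGeq v x hxT, hGeq w x hxT, ih _ hθx, sub_self]
              have hbound : ∀ x ∈ Icc (0:ℝ) s, ‖G v x - G w x‖ ≤ p x * (κ R * m) := by
                intro x hx
                have hxT : x ∈ Icc (0:ℝ) T := ⟨hx.1, hx.2.trans hs0T.2⟩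
                have hθT : x - ρ x ∈ Icc (-τ) T := hσmem x hxT
                have hθb : x - ρ x ∈ Icc (-τ) b :=
                  ⟨hρ1 x hx.1, (hρ2 x hx.1).trans (hx.2.trans hs.2)⟩
                rw [hGeq v x hxT, hGeq w x hxT]
                refine (hfLip x hxT R hR0 _ _ (hvR _ hθT) (hwR _ hθT)).trans ?_
                calc p x * κ R * ‖v (x - ρ x) - w (x - ρ x)‖ ≤ p x * κ R * m :=
                      mul_le_mul_of_nonneg_left (hmax hθb)
                        (mul_nonneg (hp0 x hxT) hκR0)
                  _ = p x * (κ R * m) := by ring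
              refine (keyTail s hs0T a ha0 h1.le _ (κ R * m)
                (mul_nonneg hκR0 hm0) ((hGc v hvc).sub (hGc w hwc)) hzero hbound).trans ?_
              -- now the numeric estimate
              have haI : a ∈ Icc (0:ℝ) T := ⟨ha0, haT⟩
              have hdist : dist s a < d := by
                rw [Real.dist_eq, abs_of_nonneg (by linarith)]
                have : s - a ≤ b - a := by have := hs.2; linarith
                linarith
              have hFd : dist (F s) (F a) < 1 / (2 * (κ R + 1)) :=
                hdunif s hs0T a haI hdist
              have hFsplit : (∫ x in a..s, p x) = F s - F a := by
                have h3 := intervalIntegral.integral_add_adjacent_intervals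
                  (hpint 0 a le_rfl haT ha0) (hpint a s ha0 hs0T.2 h1.le)
                show (∫ x in a..s, p x) = (∫ x in (0:ℝ)..s, p x) - ∫ x in (0:ℝ)..a, p x
                linarith
              have hFle : (∫ x in a..s, p x) ≤ 1 / (2 * (κ R + 1)) := by
                rw [hFsplit]
                have := le_abs_self (F s - F a)
                rw [Real.dist_eq] at hFd
                linarith
              calc (∫ x in a..s, p x) * (κ R * m) ≤ (1 / (2 * (κ R + 1))) * (κ R * m) :=
                    mul_le_mul_of_nonneg_right hFle (mul_nonneg hκR0 hm0)
                _ ≤ 1 / 2 * m := by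
                    rw [div_mul_eq_mul_div, div_le_iff₀ (by positivity)]
                    nlinarith
          have hmm : m ≤ 1 / 2 * m := claim tm htm
          have hm00 : m = 0 := by linarith
          have hfin : ‖v t - w t‖ ≤ 0 := by
            have := claim t ht
            rw [hm00] at this
            linarith
          have := norm_le_zero_iff.1 hfin
          exact sub_eq_zero.1 this
    intro t ht
    obtain ⟨n, hn⟩ := exists_nat_ge (T / h)
    have hTn : T ≤ (n : ℝ) * h := by
      rw [div_le_iff₀ hh0] at hn
      linarith
    have := main n t
    rw [min_eq_right hTn] at this
    exact this ht
  -- the fixed-point space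
  set K : Set C(Set.Icc (0:ℝ) T, H) :=
    {u | (∀ x, ‖u x‖ ≤ r) ∧ u ⟨0, h0T⟩ = ξ 0} with hKdef
  have hKclosed : IsClosed K := by
    have h1 : IsClosed {u : C(Set.Icc (0:ℝ) T, H) | ∀ x, ‖u x‖ ≤ r} := by
      have heq : {u : C(Set.Icc (0:ℝ) T, H) | ∀ x, ‖u x‖ ≤ r} =
          ⋂ x, {u : C(Set.Icc (0:ℝ) T, H) | ‖u x‖ ≤ r} := by
        ext u; simp
      rw [heq]
      exact isClosed_iInter fun x =>
        isClosed_le ((continuous_eval_const x).norm) continuous_const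
    have h2 : IsClosed {u : C(Set.Icc (0:ℝ) T, H) | u ⟨0, h0T⟩ = ξ 0} :=
      isClosed_eq (continuous_eval_const _) continuous_const
    have heq : K = {u : C(Set.Icc (0:ℝ) T, H) | ∀ x, ‖u x‖ ≤ r} ∩
        {u : C(Set.Icc (0:ℝ) T, H) | u ⟨0, h0T⟩ = ξ 0} := by
      ext u; simp [hKdef, mem_setOf_eq, mem_inter_iff]
    rw [heq]
    exact h1.inter h2
  haveI hKcomp : CompleteSpace K := hKclosed.completeSpace_coe
  haveI hKne : Nonempty K :=
    ⟨⟨ContinuousMap.const _ (ξ 0), fun x => by simpa using hξ0.trans hδr, rfl⟩⟩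
  -- the extension operator
  set U : C(Set.Icc (0:ℝ) T, H) → ℝ → H := fun u t =>
    if t ≤ 0 then ξ (max (min t 0) (-τ)) else u (Set.projIcc 0 T hT.le t) with hUdef
  have hUneg : ∀ u, ∀ t ∈ Icc (-τ) (0:ℝ), U u t = ξ t := by
    intro u t ht
    show (if t ≤ 0 then ξ (max (min t 0) (-τ)) else u (Set.projIcc 0 T hT.le t)) = ξ t
    rw [if_pos ht.2, min_eq_left ht.2, max_eq_left ht.1]
  have hUpos : ∀ u : C(Set.Icc (0:ℝ) T, H), u ⟨0, h0T⟩ = ξ 0 →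
      ∀ t (ht : t ∈ Icc (0:ℝ) T), U u t = u ⟨t, ht⟩ := by
    intro u hu0 t ht
    show (if t ≤ 0 then ξ (max (min t 0) (-τ)) else u (Set.projIcc 0 T hT.le t)) = u ⟨t, ht⟩
    split_ifs with hcond
    · have ht0 : t = 0 := le_antisymm hcond ht.1
      subst ht0
      rw [min_self, max_eq_left hτ0]
      exact hu0.symm
    · rw [Set.projIcc_of_mem hT.le ht]
  have hUcont : ∀ u : C(Set.Icc (0:ℝ) T, H), u ⟨0, h0T⟩ = ξ 0 → Continuous (U u) := by
    intro u hu0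
    refine Continuous.if_le ?_ ?_ continuous_id continuous_const ?_
    · exact hξc.comp_continuous ((continuous_id.min continuous_const).max continuous_const)
        fun t => ⟨le_max_right _ _, max_le (min_le_right _ _) hτ0⟩
    · exact u.continuous.comp continuous_projIcc
    · intro t ht
      have ht0 : t = 0 := ht
      subst ht0
      rw [min_self, max_eq_left hτ0, Set.projIcc_left, hu0]
  have hUnorm : ∀ u : C(Set.Icc (0:ℝ) T, H), (∀ x, ‖u x‖ ≤ r) → ∀ t, ‖U u t‖ ≤ r := by
    intro u hu t
    show ‖if t ≤ 0 then ξ (max (min t 0) (-τ)) else u (Set.projIcc 0 T hT.le t)‖ ≤ r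
    split_ifs with hcond
    · refine le_trans (hξδ _ ⟨le_max_right _ _, max_le (min_le_right _ _) hτ0⟩) hδr
    · exact hu _
  have hUlip : ∀ u u' : C(Set.Icc (0:ℝ) T, H), ∀ t, ‖U u t - U u' t‖ ≤ dist u u' := by
    intro u u' t
    show ‖(if t ≤ 0 then ξ (max (min t 0) (-τ)) else u (Set.projIcc 0 T hT.le t)) -
      (if t ≤ 0 then ξ (max (min t 0) (-τ)) else u' (Set.projIcc 0 T hT.le t))‖ ≤ dist u u'
    split_ifs with hcond
    · rw [sub_self, norm_zero]; exact dist_nonneg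
    · rw [← dist_eq_norm]
      exact ContinuousMap.dist_apply_le_dist _
  -- the solution operator
  set Φ₀ : C(Set.Icc (0:ℝ) T, H) → ℝ → H := fun u t =>
    S (max t 0) (ξ 0) + ∫ s in (0:ℝ)..t, S (max (t - s) 0) (G (U u) s) with hΦ₀def
  have hΦ₀cont : ∀ u : C(Set.Icc (0:ℝ) T, H), u ⟨0, h0T⟩ = ξ 0 → Continuous (Φ₀ u) := by
    intro u hu0
    refine (hSmax (ξ 0)).add ?_
    have hGUc : Continuous (G (U u)) := hGc _ (hUcont u hu0).continuousOn
    have hj : Continuous fun q : ℝ × ℝ => S (max (q.1 - q.2) 0) (G (U u) q.2) :=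
      hSj.comp ((continuous_fst.sub continuous_snd).prodMk (hGUc.comp continuous_snd))
    exact intervalIntegral.continuous_parametric_intervalIntegral_of_continuous
      (f := fun t s => S (max (t - s) 0) (G (U u) s)) (by exact hj) continuous_id
  have hΦ₀zero : ∀ u, Φ₀ u 0 = ξ 0 := by
    intro u
    show S (max 0 0) (ξ 0) + (∫ s in (0:ℝ)..(0:ℝ), S (max (0 - s) 0) (G (U u) s)) = ξ 0
    rw [intervalIntegral.integral_same, add_zero, max_self, hS0]
    rfl
  have hΦ₀mem : ∀ u : C(Set.Icc (0:ℝ) T, H), u ∈ K → ∀ t ∈ Icc (0:ℝ) T, ‖Φ₀ u t‖ ≤ r := by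
    intro u hu t ht
    have h1 : ‖S (max t 0) (ξ 0)‖ ≤ δ := (hS1 _ (le_max_right _ _) _).trans hξ0
    have h2 : ‖∫ s in (0:ℝ)..t, S (max (t - s) 0) (G (U u) s)‖ ≤ M * (κ r * r) := by
      refine keyBound t ht _ _ (mul_nonneg hκr0 hr0.le)
        (hGc _ (hUcont u hu.2).continuousOn) ?_
      intro s hs
      have hsT : s ∈ Icc (0:ℝ) T := ⟨hs.1, hs.2.trans ht.2⟩
      rw [hGeq _ s hsT]
      have h3 := hfLip s hsT r hr0.le (U u (s - ρ s)) 0 (hUnorm u hu.1 _)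
        (by rw [norm_zero]; exact hr0.le)
      rw [hf0 s hsT, sub_zero, sub_zero] at h3
      calc ‖f s (U u (s - ρ s))‖ ≤ p s * κ r * ‖U u (s - ρ s)‖ := h3
        _ ≤ p s * κ r * r :=
            mul_le_mul_of_nonneg_left (hUnorm u hu.1 _) (mul_nonneg (hp0 s hsT) hκr0)
        _ = p s * (κ r * r) := by ring
    calc ‖Φ₀ u t‖ ≤ ‖S (max t 0) (ξ 0)‖ +
          ‖∫ s in (0:ℝ)..t, S (max (t - s) 0) (G (U u) s)‖ := norm_add_le _ _
      _ ≤ δ + M * (κ r * r) := add_le_add h1 h2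
      _ = r := by rw [hδdef, hqdef]; ring
  set Φ : K → K := fun u => ⟨⟨fun x => Φ₀ u.1 x.1,
      (hΦ₀cont u.1 u.2.2).comp continuous_subtype_val⟩,
      fun x => hΦ₀mem u.1 u.2 x.1 x.2, hΦ₀zero u.1⟩ with hΦdef
  have hΦdist : ∀ u u' : K, dist (Φ u) (Φ u') ≤ q * dist u u' := by
    intro u u'
    simp only [Subtype.dist_eq]
    rw [ContinuousMap.dist_le (mul_nonneg hq0 dist_nonneg)]
    intro x
    rw [dist_eq_norm]
    show ‖Φ₀ u.1 x.1 - Φ₀ u'.1 x.1‖ ≤ q * dist u.1 u'.1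
    have ht : (x : ℝ) ∈ Icc (0:ℝ) T := x.2
    have hiu : IntervalIntegrable
        (fun s => S (max ((x:ℝ) - s) 0) (G (U u.1) s)) volume 0 (x:ℝ) :=
      (hSj.comp ((continuous_const.sub continuous_id).prodMk
        (hGc _ (hUcont u.1 u.2.2).continuousOn))).intervalIntegrable _ _
    have hiu' : IntervalIntegrable
        (fun s => S (max ((x:ℝ) - s) 0) (G (U u'.1) s)) volume 0 (x:ℝ) :=
      (hSj.comp ((continuous_const.sub continuous_id).prodMk
        (hGc _ (hUcont u'.1 u'.2.2).continuousOn))).intervalIntegrable _ _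
    have heq : Φ₀ u.1 (x:ℝ) - Φ₀ u'.1 (x:ℝ) =
        ∫ s in (0:ℝ)..(x:ℝ), S (max ((x:ℝ) - s) 0) (G (U u.1) s - G (U u'.1) s) := by
      show (S (max (x:ℝ) 0) (ξ 0) + _) - (S (max (x:ℝ) 0) (ξ 0) + _) = _
      rw [add_sub_add_left_eq_sub, ← intervalIntegral.integral_sub hiu hiu']
      simp only [map_sub]
    rw [heq]
    have h4 : ‖∫ s in (0:ℝ)..(x:ℝ), S (max ((x:ℝ) - s) 0)
        (G (U u.1) s - G (U u'.1) s)‖ ≤ M * (κ r * dist u.1 u'.1) := by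
      refine keyBound (x:ℝ) ht _ _ (mul_nonneg hκr0 dist_nonneg)
        ((hGc _ (hUcont u.1 u.2.2).continuousOn).sub
          (hGc _ (hUcont u'.1 u'.2.2).continuousOn)) ?_
      intro s hs
      have hsT : s ∈ Icc (0:ℝ) T := ⟨hs.1, hs.2.trans ht.2⟩
      rw [hGeq _ s hsT, hGeq _ s hsT]
      refine (hfLip s hsT r hr0.le _ _ (hUnorm _ u.2.1 _) (hUnorm _ u'.2.1 _)).trans ?_
      calc p s * κ r * ‖U u.1 (s - ρ s) - U u'.1 (s - ρ s)‖ ≤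
            p s * κ r * dist u.1 u'.1 :=
            mul_le_mul_of_nonneg_left (hUlip u.1 u'.1 _)
              (mul_nonneg (hp0 s hsT) hκr0)
        _ = p s * (κ r * dist u.1 u'.1) := by ring
    refine h4.trans ?_
    rw [hqdef]; ring_nf; rfl
  have hq'lt : (⟨q, hq0⟩ : NNReal) < 1 := by
    exact NNReal.coe_lt_coe.1 hq1
  have hcontr : ContractingWith ⟨q, hq0⟩ Φ :=
    ⟨hq'lt, LipschitzWith.of_dist_le_mul fun u u' => hΦdist u u'⟩
  obtain ⟨uh, huh⟩ : ∃ uh : K, Φ uh = uh :=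
    ⟨hcontr.fixedPoint, hcontr.fixedPoint_isFixedPt⟩
  have hval : ∀ t (ht : t ∈ Icc (0:ℝ) T), U uh.1 t = Φ₀ uh.1 t := by
    intro t ht
    rw [hUpos uh.1 uh.2.2 t ht]
    have h2 : Φ₀ uh.1 t = uh.1 ⟨t, ht⟩ :=
      congrArg (fun z : K => (z.1 : C(Set.Icc (0:ℝ) T, H)) ⟨t, ht⟩) huh
    exact h2.symm
  have hmild : IsMildSolutionOn S f ρ τ T ξ (U uh.1) := by
    refine ⟨(hUcont uh.1 uh.2.2).continuousOn, fun s hs => hUneg uh.1 s hs, ?_⟩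
    intro t ht
    rw [hval t ht]
    show S (max t 0) (ξ 0) + (∫ s in (0:ℝ)..t, S (max (t - s) 0) (G (U uh.1) s)) =
      S t (ξ 0) + ∫ s in (0:ℝ)..t, S (t - s) (f s (U uh.1 (s - ρ s)))
    rw [max_eq_left ht.1]
    congr 1
    refine intervalIntegral.integral_congr fun s hs => ?_
    rw [uIcc_of_le ht.1] at hs
    have hsT : s ∈ Icc (0:ℝ) T := ⟨hs.1, hs.2.trans ht.2⟩
    show S (max (t - s) 0) (G (U uh.1) s) = S (t - s) (f s (U uh.1 (s - ρ s)))
    rw [hGeq _ s hsT, max_eq_left (sub_nonneg.2 hs.2)]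
  exact ⟨U uh.1, hmild, fun u' hu' t ht => uniq u' (U uh.1) hu' hmild t ht⟩
end

section
/- Let f : [0,∞) × H → H be continuous with f(t,0) = 0 for all t, and suppose there are constants η > 0 and κ₀ ≥ 0 and a nonnegative p ∈ L^∞(0,∞) such that ‖f(t,v)‖ ≤ p(t)·κ₀·‖v‖ whenever t ≥ 0 and ‖v‖ ≤ 2η, with a := ‖p‖_∞·κ₀ < μ. Let ξ ∈ C([−τ,0];H) with sup_{s∈[−τ,0]} ‖ξ(s)‖ ≤ 2η and let u be a mild solution on [−τ,∞) with initial datum ξ satisfying sup_{t≥0} ‖u(t)‖ ≤ 2η. Then ‖u(t)‖ ≤ ( μ/(μ−a) + 1 )·sup_{s∈[−τ,0]}‖ξ(s)‖ for all t ≥ 0, and ‖u(t)‖ → 0 as t → ∞. -/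
open MeasureTheory Filter Set

/-- A (global) mild solution on `[-τ, ∞)` of the delayed Rayleigh–Stokes problem
with resolvent family `S`, nonlinearity `f`, delay `ρ` and initial datum `ξ`. -/
def IsGlobalMildSolution {H : Type*} [NormedAddCommGroup H] [InnerProductSpace ℝ H]
    [CompleteSpace H] (S : ℝ → H →L[ℝ] H) (f : ℝ → H → H) (ρ : ℝ → ℝ)
    (τ : ℝ) (ξ u : ℝ → H) : Prop :=
  ContinuousOn u (Set.Ici (-τ)) ∧
  (∀ s ∈ Set.Icc (-τ) (0:ℝ), u s = ξ s) ∧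
  ∀ t ≥ (0:ℝ),
    u t = S t (ξ 0) + ∫ s in (0:ℝ)..t, S (t - s) (f s (u (s - ρ s)))

lemma key_est {H : Type*} [NormedAddCommGroup H] [InnerProductSpace ℝ H] [CompleteSpace H]
    (S : ℝ → H →L[ℝ] H) (ω : ℝ → ℝ) (μ : ℝ) (ρ : ℝ → ℝ) (f : ℝ → H → H) (ξ u : ℝ → H)
    (hμ : 0 < μ)
    (hωc : ContinuousOn ω (Set.Ici 0))
    (hωpos : ∀ t ≥ (0:ℝ), 0 < ω t) (hωle : ∀ t ≥ (0:ℝ), ω t ≤ 1)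
    (hωmono : ∀ s t : ℝ, 0 ≤ s → s ≤ t → ω t ≤ ω s)
    (hωint : ∀ t > (0:ℝ), ∫ s in (0:ℝ)..t, ω s ≤ μ⁻¹ * (1 - ω t))
    (hSω : ∀ t ≥ (0:ℝ), ∀ v : H, ‖S t v‖ ≤ ω t * ‖v‖)
    (heq : ∀ t ≥ (0:ℝ), u t = S t (ξ 0) + ∫ s in (0:ℝ)..t, S (t - s) (f s (u (s - ρ s))))
    (T t K₁ K₂ : ℝ) (hT : 0 ≤ T) (ht : T ≤ t) (hK₁ : 0 ≤ K₁) (hK₂ : 0 ≤ K₂)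
    (hb : ∀ s ∈ Set.Ioc (0:ℝ) t, ‖f s (u (s - ρ s))‖ ≤ if s ≤ T then K₁ else K₂) :
    ‖u t‖ ≤ ω t * ‖ξ 0‖ + K₁ * T * ω (t - T) + K₂ * (μ⁻¹ * (1 - ω (t - T))) := by
  have ht0 : (0:ℝ) ≤ t := hT.trans ht
  set G : ℝ → ℝ := fun s => ω (t - s) * (if s ≤ T then K₁ else K₂) with hG
  -- continuity of ω (t - ·) on [0, t]
  have hωcomp : ContinuousOn (fun s : ℝ => ω (t - s)) (Set.Icc 0 t) := by
    apply hωc.comp (by fun_prop)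
    intro s hs
    simp only [Set.mem_Ici]
    simp only [Set.mem_Icc] at hs
    linarith [hs.2]
  have hωint1 : IntegrableOn (fun s : ℝ => ω (t - s)) (Set.Icc 0 t) :=
    hωcomp.integrableOn_Icc
  -- integrability of G on Ioc 0 t
  have hG1 : IntegrableOn G (Set.Ioc 0 T) := by
    apply IntegrableOn.congr_fun (f := fun s => ω (t - s) * K₁)
    · exact ((hωint1.mono_set (Set.Icc_subset_Icc le_rfl ht)).mono_set
        Set.Ioc_subset_Icc_self).mul_const _
    · intro s hs
      simp [hG, hs.2]
    · exact measurableSet_Ioc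
  have hG2 : IntegrableOn G (Set.Ioc T t) := by
    apply IntegrableOn.congr_fun (f := fun s => ω (t - s) * K₂)
    · exact ((hωint1.mono_set (Set.Icc_subset_Icc hT le_rfl)).mono_set
        Set.Ioc_subset_Icc_self).mul_const _
    · intro s hs
      simp [hG, not_le.mpr hs.1]
    · exact measurableSet_Ioc
  have hunion : Set.Ioc (0:ℝ) T ∪ Set.Ioc T t = Set.Ioc 0 t := Set.Ioc_union_Ioc_eq_Ioc hT ht
  have hGint : IntegrableOn G (Set.Ioc 0 t) := by
    rw [← hunion]
    exact hG1.union hG2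
  -- the norm bound on the integrand
  have hFb : ∀ s ∈ Set.Ioc (0:ℝ) t, ‖S (t - s) (f s (u (s - ρ s)))‖ ≤ G s := by
    intro s hs
    have hts : (0:ℝ) ≤ t - s := by linarith [hs.2]
    calc ‖S (t - s) (f s (u (s - ρ s)))‖ ≤ ω (t - s) * ‖f s (u (s - ρ s))‖ :=
          hSω _ hts _
      _ ≤ G s := by
          apply mul_le_mul_of_nonneg_left (hb s hs) (hωpos _ hts).le
  -- main estimate
  have hmain : ‖u t‖ ≤ ω t * ‖ξ 0‖ + ∫ s in Set.Ioc (0:ℝ) t, G s := by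
    rw [heq t ht0]
    refine (norm_add_le _ _).trans (add_le_add (hSω t ht0 _) ?_)
    calc ‖∫ s in (0:ℝ)..t, S (t - s) (f s (u (s - ρ s)))‖
        ≤ ∫ s in (0:ℝ)..t, ‖S (t - s) (f s (u (s - ρ s)))‖ :=
          intervalIntegral.norm_integral_le_integral_norm ht0
      _ = ∫ s in Set.Ioc (0:ℝ) t, ‖S (t - s) (f s (u (s - ρ s)))‖ :=
          intervalIntegral.integral_of_le ht0
      _ ≤ ∫ s in Set.Ioc (0:ℝ) t, G s := by
          apply integral_mono_of_nonneg
          · exact Filter.Eventually.of_forall fun s => norm_nonneg _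
          · exact hGint
          · exact (ae_restrict_iff' measurableSet_Ioc).mpr (Filter.Eventually.of_forall hFb)
  -- split the integral
  have hsplit : ∫ s in Set.Ioc (0:ℝ) t, G s =
      (∫ s in Set.Ioc (0:ℝ) T, G s) + ∫ s in Set.Ioc T t, G s := by
    rw [← hunion, setIntegral_union (Set.Ioc_disjoint_Ioc_of_le le_rfl) measurableSet_Ioc hG1 hG2]
  -- first piece
  have hωtT : (0:ℝ) ≤ t - T := by linarith
  have hI1 : ∫ s in Set.Ioc (0:ℝ) T, G s ≤ K₁ * T * ω (t - T) := by
    calc ∫ s in Set.Ioc (0:ℝ) T, G s ≤ ∫ _ in Set.Ioc (0:ℝ) T, ω (t - T) * K₁ := by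
          apply integral_mono_of_nonneg
          · refine (ae_restrict_iff' measurableSet_Ioc).mpr
              (Filter.Eventually.of_forall fun s hs => ?_)
            have : (0:ℝ) ≤ t - s := by linarith [hs.2, ht]
            exact mul_nonneg (hωpos _ this).le (by positivity)
          · exact (integrableOn_const measure_Ioc_lt_top.ne)
          · refine (ae_restrict_iff' measurableSet_Ioc).mpr
              (Filter.Eventually.of_forall fun s hs => ?_)
            simp only [hG, hs.2, if_pos]
            have h1 : ω (t - s) ≤ ω (t - T) := hωmono _ _ (by linarith) (by linarith [hs.1, hs.2])
            exact mul_le_mul_of_nonneg_right h1 hK₁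
      _ = T * (ω (t - T) * K₁) := by
          rw [setIntegral_const, Real.volume_real_Ioc_of_le hT, smul_eq_mul]
          ring_nf
      _ = K₁ * T * ω (t - T) := by ring
  -- second piece
  have hI2 : ∫ s in Set.Ioc T t, G s ≤ K₂ * (μ⁻¹ * (1 - ω (t - T))) := by
    have hGeq : ∫ s in Set.Ioc T t, G s = ∫ s in Set.Ioc T t, ω (t - s) * K₂ := by
      apply setIntegral_congr_fun measurableSet_Ioc
      intro s hs
      simp [hG, not_le.mpr hs.1]
    rw [hGeq]
    have : ∫ s in Set.Ioc T t, ω (t - s) * K₂ = (∫ s in T..t, ω (t - s)) * K₂ := by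
      rw [intervalIntegral.integral_of_le ht, ← integral_mul_const]
    rw [this]
    have hcomp : (∫ s in T..t, ω (t - s)) = ∫ s in (0:ℝ)..(t - T), ω s := by
      have := intervalIntegral.integral_comp_sub_left (a := T) (b := t) ω t
      simpa using this
    rw [hcomp]
    rcases eq_or_lt_of_le ht with rfl | hlt
    · simp only [sub_self, intervalIntegral.integral_same, zero_mul]
      have h0 : ω 0 ≤ 1 := hωle 0 le_rfl
      have h1 : (0:ℝ) ≤ μ⁻¹ := inv_nonneg.mpr hμ.le
      exact mul_nonneg hK₂ (mul_nonneg h1 (by linarith))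
    · have := hωint (t - T) (by linarith)
      calc (∫ s in (0:ℝ)..(t - T), ω s) * K₂ ≤ μ⁻¹ * (1 - ω (t - T)) * K₂ :=
            mul_le_mul_of_nonneg_right this hK₂
        _ = K₂ * (μ⁻¹ * (1 - ω (t - T))) := by ring
  linarith [hmain, hI1, hI2, hsplit.le, hsplit.ge]

/-- Theorem 3.5: asymptotic stability of the zero solution. Any small mild
solution obeys a uniform bound in terms of the initial datum and decays to zero. -/
theorem zero_solution_asymptotically_stable
    {H : Type*} [NormedAddCommGroup H] [InnerProductSpace ℝ H] [CompleteSpace H]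
    (S : ℝ → H →L[ℝ] H) (ω : ℝ → ℝ) (τ μ η κ₀ pnorm : ℝ) (ρ : ℝ → ℝ)
    (f : ℝ → H → H) (p : ℝ → ℝ) (ξ u : ℝ → H)
    (hτ : 0 ≤ τ) (hμ : 0 < μ) (hη : 0 < η) (hκ₀ : 0 ≤ κ₀)
    (hS0 : S 0 = ContinuousLinearMap.id ℝ H)
    (hScont : ∀ v : H, ContinuousOn (fun t => S t v) (Set.Ici 0))
    (hωc : ContinuousOn ω (Set.Ici 0))
    (hωpos : ∀ t ≥ (0:ℝ), 0 < ω t) (hωle : ∀ t ≥ (0:ℝ), ω t ≤ 1)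
    (hωmono : ∀ s t : ℝ, 0 ≤ s → s ≤ t → ω t ≤ ω s)
    (hωint : ∀ t > (0:ℝ), ∫ s in (0:ℝ)..t, ω s ≤ μ⁻¹ * (1 - ω t))
    (hωlim : Filter.Tendsto ω Filter.atTop (nhds 0))
    (hSω : ∀ t ≥ (0:ℝ), ∀ v : H, ‖S t v‖ ≤ ω t * ‖v‖)
    (hρc : ContinuousOn ρ (Set.Ici 0))
    (hρ1 : ∀ t ≥ (0:ℝ), -τ ≤ t - ρ t) (hρ2 : ∀ t ≥ (0:ℝ), t - ρ t ≤ t)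
    (hρlim : Filter.Tendsto (fun t => t - ρ t) Filter.atTop Filter.atTop)
    (hfc : ContinuousOn (Function.uncurry f) (Set.Ici (0:ℝ) ×ˢ (Set.univ : Set H)))
    (hf0 : ∀ t ≥ (0:ℝ), f t 0 = 0)
    (hfg : ∀ t ≥ (0:ℝ), ∀ v : H, ‖v‖ ≤ 2 * η → ‖f t v‖ ≤ p t * κ₀ * ‖v‖)
    (hpmeas : Measurable p)
    (hp0 : ∀ t ≥ (0:ℝ), 0 ≤ p t)
    (hple : ∀ t ≥ (0:ℝ), p t ≤ pnorm)
    (ha : pnorm * κ₀ < μ)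
    (hξc : ContinuousOn ξ (Set.Icc (-τ) 0))
    (hξsmall : ∀ s ∈ Set.Icc (-τ) (0:ℝ), ‖ξ s‖ ≤ 2 * η)
    (hu : IsGlobalMildSolution S f ρ τ ξ u)
    (husmall : ∀ t ≥ (0:ℝ), ‖u t‖ ≤ 2 * η) :
    (∀ t ≥ (0:ℝ), ‖u t‖ ≤ (μ / (μ - pnorm * κ₀) + 1) *
        sSup ((fun s => ‖ξ s‖) '' Set.Icc (-τ) 0)) ∧
    Filter.Tendsto (fun t => ‖u t‖) Filter.atTop (nhds 0) := by
  obtain ⟨hucont, huξ, heq⟩ := hu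
  set a : ℝ := pnorm * κ₀ with ha_def
  clear_value a
  have hpnorm : 0 ≤ pnorm := (hp0 0 le_rfl).trans (hple 0 le_rfl)
  have ha0 : 0 ≤ a := by rw [ha_def]; exact mul_nonneg hpnorm hκ₀
  have hμa : 0 < μ - a := by linarith
  set M : ℝ := sSup ((fun s => ‖ξ s‖) '' Set.Icc (-τ) 0) with hM_def
  clear_value M
  have hτ0 : -τ ≤ (0:ℝ) := neg_nonpos.mpr hτ
  have hMbdd : BddAbove ((fun s => ‖ξ s‖) '' Set.Icc (-τ) 0) := by
    refine ⟨2 * η, ?_⟩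
    rintro x ⟨s, hs, rfl⟩
    exact hξsmall s hs
  have hξM : ∀ s ∈ Set.Icc (-τ) (0:ℝ), ‖ξ s‖ ≤ M := by
    intro s hs
    rw [hM_def]
    exact le_csSup hMbdd ⟨s, hs, rfl⟩
  have hM0 : 0 ≤ M := le_trans (norm_nonneg _) (hξM 0 ⟨hτ0, le_rfl⟩)
  have hξ0M : ‖ξ 0‖ ≤ M := hξM 0 ⟨hτ0, le_rfl⟩
  -- the delayed value is always small
  have hu2η : ∀ s ≥ (0:ℝ), ‖u (s - ρ s)‖ ≤ 2 * η := by
    intro s hs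
    rcases le_or_gt 0 (s - ρ s) with h | h
    · exact husmall _ h
    · rw [huξ _ ⟨hρ1 s hs, h.le⟩]
      exact hξsmall _ ⟨hρ1 s hs, h.le⟩
  -- uniform bound on f along the solution
  have hfb : ∀ s ≥ (0:ℝ), ∀ K : ℝ, 0 ≤ K → ‖u (s - ρ s)‖ ≤ K →
      ‖f s (u (s - ρ s))‖ ≤ a * K := by
    intro s hs K hK hKb
    refine (hfg s hs _ (hu2η s hs)).trans ?_
    have h1 := hp0 s hs
    have h2 := hple s hs
    have h3 := norm_nonneg (u (s - ρ s))
    rw [ha_def]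
    have h4 := mul_le_mul_of_nonneg_right (mul_le_mul_of_nonneg_right h2 hκ₀) h3
    have h5 := mul_le_mul_of_nonneg_left hKb (mul_nonneg hpnorm hκ₀)
    linarith
  set C : ℝ := μ / (μ - a) + 1 with hC_def
  clear_value C
  have hC1 : 1 ≤ C := by
    have : 0 ≤ μ / (μ - a) := div_nonneg hμ.le hμa.le
    linarith
  have hu0 : u 0 = ξ 0 := huξ 0 ⟨hτ0, le_rfl⟩
  -- Part 1
  have part1 : ∀ t ≥ (0:ℝ), ‖u t‖ ≤ C * M := by
    have claim1 : ∀ ε > (0:ℝ), ∀ t ≥ (0:ℝ), ‖u t‖ ≤ C * M + ε := by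
      intro ε hε
      set D : ℝ := C * M + ε with hD_def
      clear_value D
      have hMD : M < D := by
        nlinarith [mul_nonneg (by linarith : (0:ℝ) ≤ C - 1) hM0]
      have hD0 : 0 < D := lt_of_le_of_lt hM0 hMD
      by_contra hcon
      push_neg at hcon
      obtain ⟨t₀, ht₀0, ht₀⟩ := hcon
      set E : Set ℝ := Set.Ici 0 ∩ (fun r => ‖u r‖) ⁻¹' Set.Ici D with hE_def
      have hEne : E.Nonempty := ⟨t₀, ht₀0, ht₀.le⟩
      have hEclosed : IsClosed E := by
        refine ContinuousOn.preimage_isClosed_of_isClosed ?_ isClosed_Ici isClosed_Ici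
        exact (hucont.norm).mono fun r hr => le_trans hτ0 hr
      have hEbdd : BddBelow E := ⟨0, fun x hx => hx.1⟩
      set t₁ : ℝ := sInf E with ht₁_def
      clear_value t₁
      have ht₁E : t₁ ∈ E := by rw [ht₁_def]; exact hEclosed.csInf_mem hEne hEbdd
      have ht₁0 : 0 ≤ t₁ := ht₁E.1
      have hDu : D ≤ ‖u t₁‖ := ht₁E.2
      have ht₁pos : 0 < t₁ := by
        rcases ht₁0.lt_or_eq with h | h
        · exact h
        · exfalso
          rw [← h, hu0] at hDu
          linarith [hξ0M, hMD]
      have hlt : ∀ r, 0 ≤ r → r < t₁ → ‖u r‖ ≤ D := by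
        intro r hr0 hrt
        by_contra hr
        push_neg at hr
        have h9 : t₁ ≤ r := by rw [ht₁_def]; exact csInf_le hEbdd ⟨hr0, hr.le⟩
        exact absurd h9 (not_le.mpr hrt)
      have hDt₁ : ‖u t₁‖ ≤ D := by
        have hca : ContinuousAt (fun r => ‖u r‖) t₁ :=
          (hucont.norm).continuousAt (Ici_mem_nhds (by linarith : -τ < t₁))
        have htd : Filter.Tendsto (fun r => ‖u r‖) (nhdsWithin t₁ (Set.Iio t₁))
            (nhds ‖u t₁‖) := hca.tendsto.mono_left nhdsWithin_le_nhds
        refine le_of_tendsto htd ?_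
        filter_upwards [Ioo_mem_nhdsLT_of_mem
          (show t₁ ∈ Set.Ioc 0 t₁ from ⟨ht₁pos, le_rfl⟩)] with r hr
        exact hlt r hr.1.le hr.2
      have hall : ∀ r ∈ Set.Icc (0:ℝ) t₁, ‖u r‖ ≤ D := by
        intro r hr
        rcases hr.2.lt_or_eq with h | h
        · exact hlt r hr.1 h
        · rw [h]; exact hDt₁
      have hbound : ∀ s ∈ Set.Ioc (0:ℝ) t₁,
          ‖f s (u (s - ρ s))‖ ≤ if s ≤ (0:ℝ) then 0 else a * D := by
        intro s hs
        rw [if_neg (not_le.mpr hs.1)]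
        refine hfb s hs.1.le D hD0.le ?_
        rcases le_or_gt 0 (s - ρ s) with h | h
        · exact hall _ ⟨h, (hρ2 s hs.1.le).trans hs.2⟩
        · rw [huξ _ ⟨hρ1 s hs.1.le, h.le⟩]
          exact le_trans (hξM _ ⟨hρ1 s hs.1.le, h.le⟩) hMD.le
      have hkey := key_est S ω μ ρ f ξ u hμ hωc hωpos hωle hωmono hωint hSω heq
        0 t₁ 0 (a * D) le_rfl ht₁0 le_rfl (mul_nonneg ha0 hD0.le) hbound
      rw [sub_zero] at hkey
      set w : ℝ := ω t₁ with hw_def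
      clear_value w
      have hw0 : 0 < w := by rw [hw_def]; exact hωpos t₁ ht₁0
      have hw1 : w ≤ 1 := by rw [hw_def]; exact hωle t₁ ht₁0
      have h3 : μ * D ≤ μ * (w * M) + a * D * (1 - w) := by
        have h4 : D ≤ w * ‖ξ 0‖ + a * D * (μ⁻¹ * (1 - w)) := by
          calc D ≤ ‖u t₁‖ := hDu
            _ ≤ w * ‖ξ 0‖ + 0 * 0 * w + a * D * (μ⁻¹ * (1 - w)) := hkey
            _ = w * ‖ξ 0‖ + a * D * (μ⁻¹ * (1 - w)) := by ring
        have h5 : w * ‖ξ 0‖ ≤ w * M := mul_le_mul_of_nonneg_left hξ0M hw0.le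
        have h6 : D ≤ w * M + a * D * (μ⁻¹ * (1 - w)) := by linarith
        have h7 := mul_le_mul_of_nonneg_left h6 hμ.le
        calc μ * D ≤ μ * (w * M + a * D * (μ⁻¹ * (1 - w))) := h7
          _ = μ * (w * M) + a * D * (μ * μ⁻¹) * (1 - w) := by ring
          _ = μ * (w * M) + a * D * (1 - w) := by
              rw [mul_inv_cancel₀ hμ.ne']; ring
      have hD : D * (μ - a) = μ * M + (μ - a) * (M + ε) := by
        rw [hD_def, hC_def]
        field_simp
        ring
      have hint1 : 0 ≤ μ * M * (1 - w) :=
        mul_nonneg (mul_nonneg hμ.le hM0) (by linarith)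
      have hint2 : 0 < (μ - a) * (M + ε) := mul_pos hμa (by linarith)
      have hint3 : 0 ≤ a * D * w := mul_nonneg (mul_nonneg ha0 hD0.le) hw0.le
      linarith
    intro t ht
    refine le_of_forall_sub_le fun ε hε => ?_
    linarith [claim1 ε hε t ht]
  refine ⟨part1, ?_⟩
  -- Part 2
  set A : Set ℝ := {m : ℝ | 0 ≤ m ∧ ∃ T, 0 ≤ T ∧ ∀ r ≥ T, ‖u r‖ ≤ m} with hA_def
  have hA2η : (2 * η) ∈ A := ⟨by linarith, 0, le_rfl, husmall⟩
  have hAne : A.Nonempty := ⟨2 * η, hA2η⟩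
  have hAbdd : BddBelow A := ⟨0, fun m hm => hm.1⟩
  set q : ℝ := a * μ⁻¹ with hq_def
  have hq0 : 0 ≤ q := mul_nonneg ha0 (inv_nonneg.mpr hμ.le)
  have hq1 : q < 1 := by
    rw [hq_def, ← div_eq_mul_inv]
    exact (div_lt_one hμ).mpr (by linarith)
  have step : ∀ m ∈ A, ∀ ε > (0:ℝ), q * m + ε ∈ A := by
    intro m hm ε hε
    obtain ⟨hm0, T', hT'0, hT'⟩ := hm
    obtain ⟨T₀, hT₀⟩ := Filter.eventually_atTop.mp (hρlim.eventually_ge_atTop T')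
    set T : ℝ := max T₀ 0 with hT_def
    have hT0 : 0 ≤ T := le_max_right _ _
    have est : ∀ t ≥ T, ‖u t‖ ≤ 2 * η * ω t + a * (2 * η) * T * ω (t - T) + q * m := by
      intro t htT
      have hbound : ∀ s ∈ Set.Ioc (0:ℝ) t,
          ‖f s (u (s - ρ s))‖ ≤ if s ≤ T then a * (2 * η) else a * m := by
        intro s hs
        by_cases hsT : s ≤ T
        · rw [if_pos hsT]
          exact hfb s hs.1.le _ (by linarith) (hu2η s hs.1.le)
        · rw [if_neg hsT]
          push_neg at hsT
          have hsT₀ : T₀ ≤ s := le_trans (le_max_left _ _) hsT.le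
          have hsρ : T' ≤ s - ρ s := hT₀ s hsT₀
          refine hfb s hs.1.le m hm0 (hT' _ hsρ)
      have hkey := key_est S ω μ ρ f ξ u hμ hωc hωpos hωle hωmono hωint hSω heq
        T t (a * (2 * η)) (a * m) hT0 htT
        (mul_nonneg ha0 (by linarith)) (mul_nonneg ha0 hm0) hbound
      have ht0 : 0 ≤ t := hT0.trans htT
      have h1 : ω t * ‖ξ 0‖ ≤ 2 * η * ω t := by
        have := hωpos t ht0
        have h2 : ‖ξ 0‖ ≤ 2 * η := hξsmall 0 ⟨hτ0, le_rfl⟩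
        nlinarith
      have h2 : a * m * (μ⁻¹ * (1 - ω (t - T))) ≤ q * m := by
        have hwtT : 0 < ω (t - T) := hωpos _ (by linarith)
        have h3 : 0 ≤ a * m * μ⁻¹ := mul_nonneg (mul_nonneg ha0 hm0) (inv_nonneg.mpr hμ.le)
        have h4 : μ⁻¹ * (1 - ω (t - T)) ≤ μ⁻¹ * 1 :=
          mul_le_mul_of_nonneg_left (by linarith) (inv_nonneg.mpr hμ.le)
        calc a * m * (μ⁻¹ * (1 - ω (t - T))) ≤ a * m * (μ⁻¹ * 1) :=
              mul_le_mul_of_nonneg_left h4 (mul_nonneg ha0 hm0)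
          _ = q * m := by rw [hq_def]; ring
      linarith [hkey]
    -- choose T₂ beyond which the decaying terms are < ε/2
    have h1 : Filter.Tendsto (fun t => 2 * η * ω t) Filter.atTop (nhds 0) := by
      simpa using hωlim.const_mul (2 * η)
    have h2 : Filter.Tendsto (fun t => a * (2 * η) * T * ω (t - T)) Filter.atTop (nhds 0) := by
      have h3 : Filter.Tendsto (fun t : ℝ => t - T) Filter.atTop Filter.atTop := by
        simpa [sub_eq_add_neg] using tendsto_atTop_add_const_right Filter.atTop (-T)
          (tendsto_id (α := ℝ))
      simpa using (hωlim.comp h3).const_mul (a * (2 * η) * T)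
    have ev1 := h1.eventually_lt_const (half_pos hε)
    have ev2 := h2.eventually_lt_const (half_pos hε)
    obtain ⟨T₂, hT₂⟩ := Filter.eventually_atTop.mp (ev1.and ev2)
    refine ⟨by positivity, max T₂ T, le_trans hT0 (le_max_right _ _), ?_⟩
    intro r hr
    obtain ⟨h3, h4⟩ := hT₂ r (le_trans (le_max_left _ _) hr)
    have h5 := est r (le_trans (le_max_right _ _) hr)
    linarith
  set ℓ : ℝ := sInf A with hℓ_def
  clear_value ℓ
  have hℓ0 : 0 ≤ ℓ := by rw [hℓ_def]; exact le_csInf hAne fun m hm => hm.1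
  have key2 : ∀ ε > (0:ℝ), ℓ ≤ q * ℓ + (q + 1) * ε := by
    intro ε hε
    obtain ⟨m, hmA, hmε⟩ := exists_lt_of_csInf_lt hAne
      (show sInf A < ℓ + ε by rw [← hℓ_def]; linarith)
    have h1 : ℓ ≤ q * m + ε := by
      rw [hℓ_def]
      exact csInf_le hAbdd (step m hmA ε hε)
    have h2 : q * m ≤ q * (ℓ + ε) := mul_le_mul_of_nonneg_left hmε.le hq0
    nlinarith
  have hℓ : ℓ = 0 := by
    by_contra hc
    have hcpos : 0 < ℓ := lt_of_le_of_ne hℓ0 (Ne.symm hc)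
    have hεpos : 0 < ℓ * (1 - q) / (2 * (q + 1)) := by
      apply div_pos (mul_pos hcpos (by linarith)) (by linarith)
    have h6 := key2 _ hεpos
    have h7 : (q + 1) * (ℓ * (1 - q) / (2 * (q + 1))) = ℓ * (1 - q) / 2 := by
      field_simp
    rw [h7] at h6
    nlinarith
  rw [Metric.tendsto_atTop]
  intro ε hε
  have h8 : sInf A < ε := by rw [← hℓ_def, hℓ]; exact hε
  obtain ⟨m, hmA, hmε⟩ := exists_lt_of_csInf_lt hAne h8
  obtain ⟨hm0, T, hT0, hTb⟩ := hmA
  refine ⟨T, fun r hr => ?_⟩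
  rw [Real.dist_eq, sub_zero, abs_of_nonneg (norm_nonneg _)]
  exact lt_of_le_of_lt (hTb r hr) hmε
end

section
/- Let f : [0,∞) × H → H be continuous with ‖f(t,v)‖ ≤ p(t)·(1 + ‖v‖) for all t ≥ 0 and v ∈ H, where p ∈ L^∞(0,∞) is nonnegative with ‖p‖_∞ < μ. Then for every ξ ∈ C([−τ,0];H) and every mild solution u on [−τ,∞) with initial datum ξ, one has limsup_{t→∞} ‖u(t)‖ ≤ ‖p‖_∞/(μ − ‖p‖_∞). In particular, any ball in H centered at the origin of radius strictly greater than ‖p‖_∞/(μ − ‖p‖_∞) is an absorbing set for the mild solutions, uniformly with respect to the initial data. -/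
open MeasureTheory Filter Set

lemma jointCont {H : Type*} [NormedAddCommGroup H] [InnerProductSpace ℝ H]
    (S : ℝ → H →L[ℝ] H)
    (hScont : ∀ v : H, ContinuousOn (fun t => S t v) (Set.Ici 0))
    (hS1 : ∀ t ≥ (0:ℝ), ∀ v : H, ‖S t v‖ ≤ ‖v‖) :
    ContinuousOn (fun q : ℝ × H => S q.1 q.2) (Set.Ici (0:ℝ) ×ˢ (Set.univ : Set H)) := by
  rintro ⟨r₀, v₀⟩ ⟨hr₀, -⟩
  rw [Metric.continuousWithinAt_iff]
  intro ε hε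
  obtain ⟨δ, hδ, hd⟩ := Metric.continuousWithinAt_iff.1 (hScont v₀ r₀ hr₀) (ε/2) (by linarith)
  refine ⟨min δ (ε/2), by positivity, ?_⟩
  rintro ⟨r, v⟩ ⟨hr, -⟩ hdist
  rw [Prod.dist_eq, max_lt_iff] at hdist
  obtain ⟨h1, h2⟩ := hdist
  have hA : dist (S r v) (S r v₀) ≤ dist v v₀ := by
    rw [dist_eq_norm, dist_eq_norm, ← map_sub]
    exact hS1 r hr _
  calc dist (S r v) (S r₀ v₀) ≤ dist (S r v) (S r v₀) + dist (S r v₀) (S r₀ v₀) :=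
        dist_triangle _ _ _
    _ < ε/2 + ε/2 :=
        add_lt_add_of_le_of_lt (hA.trans (h2.trans_le (min_le_right _ _)).le)
          (hd hr (h1.trans_le (min_le_left _ _)))
    _ = ε := by ring

set_option maxHeartbeats 1000000 in
/-- Theorem 3.4: dissipativity. Every mild solution eventually enters any ball of
radius larger than `‖p‖_∞ / (μ - ‖p‖_∞)`, uniformly in the initial data. -/
theorem dissipativity_absorbing_set
    {H : Type*} [NormedAddCommGroup H] [InnerProductSpace ℝ H] [CompleteSpace H]
    (S : ℝ → H →L[ℝ] H) (ω : ℝ → ℝ) (τ μ pnorm : ℝ) (ρ : ℝ → ℝ)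
    (f : ℝ → H → H) (p : ℝ → ℝ)
    (hτ : 0 ≤ τ) (hμ : 0 < μ)
    (hS0 : S 0 = ContinuousLinearMap.id ℝ H)
    (hScont : ∀ v : H, ContinuousOn (fun t => S t v) (Set.Ici 0))
    (hωc : ContinuousOn ω (Set.Ici 0))
    (hωpos : ∀ t ≥ (0:ℝ), 0 < ω t) (hωle : ∀ t ≥ (0:ℝ), ω t ≤ 1)
    (hωmono : ∀ s t : ℝ, 0 ≤ s → s ≤ t → ω t ≤ ω s)
    (hωint : ∀ t > (0:ℝ), ∫ s in (0:ℝ)..t, ω s ≤ μ⁻¹ * (1 - ω t))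
    (hωlim : Filter.Tendsto ω Filter.atTop (nhds 0))
    (hSω : ∀ t ≥ (0:ℝ), ∀ v : H, ‖S t v‖ ≤ ω t * ‖v‖)
    (hρc : ContinuousOn ρ (Set.Ici 0))
    (hρ1 : ∀ t ≥ (0:ℝ), -τ ≤ t - ρ t) (hρ2 : ∀ t ≥ (0:ℝ), t - ρ t ≤ t)
    (hρlim : Filter.Tendsto (fun t => t - ρ t) Filter.atTop Filter.atTop)
    (hfc : ContinuousOn (Function.uncurry f) (Set.Ici (0:ℝ) ×ˢ (Set.univ : Set H)))
    (hfg : ∀ t ≥ (0:ℝ), ∀ v : H, ‖f t v‖ ≤ p t * (1 + ‖v‖))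
    (hpmeas : Measurable p)
    (hp0 : ∀ t ≥ (0:ℝ), 0 ≤ p t)
    (hple : ∀ t ≥ (0:ℝ), p t ≤ pnorm)
    (hpμ : pnorm < μ) :
    ∀ ξ u : ℝ → H, ContinuousOn ξ (Set.Icc (-τ) 0) →
      IsGlobalMildSolution S f ρ τ ξ u →
      Filter.limsup (fun t => ‖u t‖) Filter.atTop ≤ pnorm / (μ - pnorm) ∧
      ∀ R > pnorm / (μ - pnorm), ∃ T : ℝ, ∀ t ≥ T,
        u t ∈ Metric.closedBall (0 : H) R := by
  intro ξ u hξ hu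
  obtain ⟨hucont, huinit, hueq⟩ := hu
  have hτ0 : -τ ≤ (0:ℝ) := neg_nonpos.2 hτ
  have hu0 : u 0 = ξ 0 := huinit 0 ⟨hτ0, le_rfl⟩
  have hp0' : (0:ℝ) ≤ pnorm := le_trans (hp0 0 le_rfl) (hple 0 le_rfl)
  have hμinv : (0:ℝ) ≤ μ⁻¹ := inv_nonneg.2 hμ.le
  -- continuity of the integrand
  have hsub : ContinuousOn (fun s : ℝ => s - ρ s) (Set.Ici 0) := continuousOn_id.sub hρc
  have hud : ContinuousOn (fun s : ℝ => u (s - ρ s)) (Set.Ici 0) :=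
    hucont.comp hsub (fun s hs => hρ1 s hs)
  have hgc : ContinuousOn (fun s : ℝ => f s (u (s - ρ s))) (Set.Ici 0) :=
    hfc.comp ((continuousOn_id (s := Set.Ici (0:ℝ))).prodMk hud) (fun s hs => ⟨hs, mem_univ _⟩)
  have hΦ := jointCont S hScont (fun t ht v =>
    (hSω t ht v).trans (by nlinarith [hωle t ht, hωpos t ht, norm_nonneg v]))
  have hGc : ∀ t ≥ (0:ℝ), ContinuousOn (fun s => S (t - s) (f s (u (s - ρ s)))) (Set.Icc 0 t) := by
    intro t ht
    have h1 : ContinuousOn (fun s : ℝ => ((t - s, f s (u (s - ρ s))) : ℝ × H)) (Set.Icc 0 t) :=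
      (continuousOn_const.sub continuousOn_id).prodMk (hgc.mono Set.Icc_subset_Ici_self)
    exact hΦ.comp h1 (fun s hs => ⟨by simp only [Set.mem_Ici, id_eq]; linarith [hs.2], mem_univ _⟩)
  -- key integral estimate
  have key : ∀ t > (0:ℝ), ∀ a ∈ Set.Icc (0:ℝ) t, ∀ D1 D2 : ℝ, 0 ≤ D1 → 0 ≤ D2 →
      (∀ s ∈ Set.Icc (0:ℝ) a, ‖u (s - ρ s)‖ ≤ D1) →
      (∀ s ∈ Set.Icc a t, ‖u (s - ρ s)‖ ≤ D2) →
      ‖u t‖ ≤ ω t * ‖u 0‖ + a * (ω (t - a) * (pnorm * (1 + D1)))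
        + μ⁻¹ * (pnorm * (1 + D2)) := by
    intro t ht a ha D1 D2 hD1 hD2 hb1 hb2
    have ht0 : (0:ℝ) ≤ t := ht.le
    set G : ℝ → H := fun s => S (t - s) (f s (u (s - ρ s))) with hG
    have hGc' := hGc t ht0
    have hint1 : IntervalIntegrable G volume 0 a :=
      (hGc'.mono (by rw [Set.uIcc_of_le ha.1]; exact Set.Icc_subset_Icc_right ha.2)).intervalIntegrable
    have hint2 : IntervalIntegrable G volume a t :=
      (hGc'.mono (by rw [Set.uIcc_of_le ha.2]; exact Set.Icc_subset_Icc_left ha.1)).intervalIntegrable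
    have hsplit : ∫ s in (0:ℝ)..t, G s = (∫ s in (0:ℝ)..a, G s) + ∫ s in a..t, G s :=
      (intervalIntegral.integral_add_adjacent_intervals hint1 hint2).symm
    have hptw : ∀ s ∈ Set.Icc (0:ℝ) t, ∀ D : ℝ, ‖u (s - ρ s)‖ ≤ D →
        ‖G s‖ ≤ ω (t - s) * (pnorm * (1 + D)) := by
      intro s hs D hD
      have hs0 : (0:ℝ) ≤ s := hs.1
      have hts : (0:ℝ) ≤ t - s := by linarith [hs.2]
      have h1 : ‖G s‖ ≤ ω (t - s) * ‖f s (u (s - ρ s))‖ := hSω _ hts _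
      have h2 : ‖f s (u (s - ρ s))‖ ≤ pnorm * (1 + D) := by
        refine (hfg s hs0 _).trans ?_
        have hp1 := hple s hs0
        have hp2 := hp0 s hs0
        nlinarith [norm_nonneg (u (s - ρ s))]
      calc ‖G s‖ ≤ ω (t - s) * ‖f s (u (s - ρ s))‖ := h1
        _ ≤ ω (t - s) * (pnorm * (1 + D)) :=
            mul_le_mul_of_nonneg_left h2 (hωpos _ hts).le
    have hn1 : ‖∫ s in (0:ℝ)..a, G s‖ ≤ a * (ω (t - a) * (pnorm * (1 + D1))) := by
      have hcb : ∀ s ∈ Set.uIoc (0:ℝ) a, ‖G s‖ ≤ ω (t - a) * (pnorm * (1 + D1)) := by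
        intro s hs
        rw [Set.uIoc_of_le ha.1] at hs
        have hs' : s ∈ Set.Icc (0:ℝ) a := ⟨hs.1.le, hs.2⟩
        refine (hptw s ⟨hs'.1, hs'.2.trans ha.2⟩ D1 (hb1 s hs')).trans ?_
        have hω1 : ω (t - s) ≤ ω (t - a) :=
          hωmono (t - a) (t - s) (by linarith [ha.2]) (by linarith [hs'.2])
        apply mul_le_mul_of_nonneg_right hω1
        positivity
      calc ‖∫ s in (0:ℝ)..a, G s‖ ≤ (ω (t - a) * (pnorm * (1 + D1))) * |a - 0| :=
            intervalIntegral.norm_integral_le_of_norm_le_const hcb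
        _ = a * (ω (t - a) * (pnorm * (1 + D1))) := by
            rw [sub_zero, abs_of_nonneg ha.1]; ring
    have hn2 : ‖∫ s in a..t, G s‖ ≤ μ⁻¹ * (pnorm * (1 + D2)) := by
      have hωc2 : ContinuousOn (fun s => ω (t - s) * (pnorm * (1 + D2))) (Set.Icc a t) := by
        have : ContinuousOn (fun s : ℝ => ω (t - s)) (Set.Icc a t) := by
          apply hωc.comp (continuousOn_const.sub continuousOn_id)
          intro s hs
          simp only [Set.mem_Ici, Pi.sub_apply, id_eq]
          linarith [hs.2]
        exact this.mul continuousOn_const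
      have hintb : IntervalIntegrable (fun s => ω (t - s) * (pnorm * (1 + D2))) volume a t :=
        (hωc2.mono (by rw [Set.uIcc_of_le ha.2])).intervalIntegrable
      have hintn : IntervalIntegrable (fun s => ‖G s‖) volume a t :=
        ((hGc'.mono (Set.Icc_subset_Icc_left ha.1)).norm.mono
          (by rw [Set.uIcc_of_le ha.2])).intervalIntegrable
      have h1 : ‖∫ s in a..t, G s‖ ≤ ∫ s in a..t, ‖G s‖ :=
        intervalIntegral.norm_integral_le_integral_norm ha.2
      have h2 : (∫ s in a..t, ‖G s‖) ≤ ∫ s in a..t, ω (t - s) * (pnorm * (1 + D2)) := by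
        apply intervalIntegral.integral_mono_on ha.2 hintn hintb
        intro s hs
        exact hptw s ⟨ha.1.trans hs.1, hs.2⟩ D2 (hb2 s hs)
      have h3 : (∫ s in a..t, ω (t - s) * (pnorm * (1 + D2)))
          = (∫ s in a..t, ω (t - s)) * (pnorm * (1 + D2)) :=
        intervalIntegral.integral_mul_const _ _
      have h4 : (∫ s in a..t, ω (t - s)) = ∫ s in (0:ℝ)..(t - a), ω s := by
        rw [intervalIntegral.integral_comp_sub_left ω t, sub_self]
      have h5 : (∫ s in (0:ℝ)..(t - a), ω s) ≤ μ⁻¹ := by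
        rcases eq_or_lt_of_le ha.2 with h | h
        · rw [← h]; simp [hμinv]
        · refine (hωint (t - a) (by linarith)).trans ?_
          nlinarith [hωpos (t - a) (by linarith : (0:ℝ) ≤ t - a)]
      calc ‖∫ s in a..t, G s‖ ≤ ∫ s in a..t, ‖G s‖ := h1
        _ ≤ (∫ s in a..t, ω (t - s)) * (pnorm * (1 + D2)) := by rw [← h3]; exact h2
        _ ≤ μ⁻¹ * (pnorm * (1 + D2)) := by
            apply mul_le_mul_of_nonneg_right (h4 ▸ h5)
            positivity
    have hS0' : ‖S t (ξ 0)‖ ≤ ω t * ‖u 0‖ := by rw [hu0]; exact hSω t ht0 _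
    calc ‖u t‖ = ‖S t (ξ 0) + ((∫ s in (0:ℝ)..a, G s) + ∫ s in a..t, G s)‖ := by
          rw [hueq t ht0, ← hsplit]
      _ ≤ ‖S t (ξ 0)‖ + (‖∫ s in (0:ℝ)..a, G s‖ + ‖∫ s in a..t, G s‖) :=
          (norm_add_le _ _).trans (by gcongr; exact norm_add_le _ _)
      _ ≤ ω t * ‖u 0‖ + a * (ω (t - a) * (pnorm * (1 + D1))) + μ⁻¹ * (pnorm * (1 + D2)) := by
          linarith [hS0', hn1, hn2]
  -- global bound
  obtain ⟨x₀, hx₀, hmax₀⟩ := isCompact_Icc.exists_isMaxOn (Set.nonempty_Icc.2 hτ0)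
    ((hucont.mono Set.Icc_subset_Ici_self).norm)
  set M₀ := ‖u x₀‖ with hM₀def
  set κ := pnorm * μ⁻¹ with hκdef
  have hκ0 : 0 ≤ κ := mul_nonneg hp0' hμinv
  have hκ1 : κ < 1 := by
    rw [hκdef, ← div_eq_mul_inv, div_lt_one hμ]; exact hpμ
  set C := max M₀ ((M₀ + κ) / (1 - κ)) with hCdef
  have hM0 : ∀ s ∈ Set.Icc (-τ) (0:ℝ), ‖u s‖ ≤ M₀ := fun s hs => hmax₀ hs
  have hu0M : ‖u 0‖ ≤ M₀ := hM0 0 ⟨hτ0, le_rfl⟩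
  have hCM : M₀ ≤ C := le_max_left _ _
  have hM0nn : 0 ≤ M₀ := (norm_nonneg _).trans hu0M
  have hC0 : 0 ≤ C := hM0nn.trans hCM
  have hbound : ∀ t, -τ ≤ t → ‖u t‖ ≤ C := by
    intro t htm
    rcases le_or_gt t 0 with h | h
    · exact (hM0 t ⟨htm, h⟩).trans hCM
    · obtain ⟨t₁, ht₁, hmax⟩ := (isCompact_Icc (a := -τ) (b := t)).exists_isMaxOn
        ⟨0, hτ0, h.le⟩ ((hucont.mono Set.Icc_subset_Ici_self).norm)
      have hum : ∀ s ∈ Set.Icc (-τ) t, ‖u s‖ ≤ ‖u t₁‖ := fun s hs => hmax hs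
      have hut : ‖u t‖ ≤ ‖u t₁‖ := hum t ⟨htm, le_rfl⟩
      set m := ‖u t₁‖ with hmdef
      have hm0 : (0:ℝ) ≤ m := norm_nonneg _
      rcases le_or_gt t₁ 0 with h1 | h1
      · exact hut.trans ((hM0 t₁ ⟨ht₁.1, h1⟩).trans hCM)
      · have hbd : ∀ s ∈ Set.Icc (0:ℝ) t₁, ‖u (s - ρ s)‖ ≤ m := by
          intro s hs
          exact hum _ ⟨hρ1 s hs.1, by linarith [hρ2 s hs.1, hs.2, ht₁.2]⟩
        have hkey := key t₁ h1 0 ⟨le_rfl, h1.le⟩ m m hm0 hm0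
          (fun s hs => hbd s ⟨hs.1, hs.2.trans h1.le⟩) hbd
        have hωb : ω t₁ * ‖u 0‖ ≤ M₀ := by
          nlinarith [norm_nonneg (u 0), hωpos t₁ h1.le, hωle t₁ h1.le, hu0M]
        have hmm : m ≤ M₀ + κ * (1 + m) := by
          have : μ⁻¹ * (pnorm * (1 + m)) = κ * (1 + m) := by rw [hκdef]; ring
          rw [this] at hkey
          simp only [zero_mul, add_zero] at hkey
          linarith [hkey, hωb]
        have hm' : m ≤ (M₀ + κ) / (1 - κ) := by
          rw [le_div_iff₀ (by linarith : (0:ℝ) < 1 - κ)]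
          nlinarith [hmm]
        exact hut.trans (hm'.trans (le_max_right _ _))
  -- limsup machinery
  have hbddev : ∀ᶠ t in atTop, ‖u t‖ ≤ C :=
    eventually_atTop.2 ⟨0, fun t ht => hbound t (by linarith)⟩
  have hbdd : IsBoundedUnder (· ≤ ·) atTop (fun t => ‖u t‖) :=
    ⟨C, by simpa [eventually_map] using hbddev⟩
  have hge : IsBoundedUnder (· ≥ ·) atTop (fun t => ‖u t‖) :=
    ⟨0, by simp only [eventually_map]; exact Eventually.of_forall fun t => norm_nonneg _⟩
  have hcobdd : IsCoboundedUnder (· ≤ ·) atTop (fun t => ‖u t‖) :=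
    hge.isCoboundedUnder_le
  set L := limsup (fun t => ‖u t‖) atTop with hLdef
  have hL0 : 0 ≤ L :=
    le_limsup_of_frequently_le (Frequently.of_forall fun t => norm_nonneg _) hbdd
  have hLκ : L ≤ κ * (1 + L) := by
    apply le_of_forall_pos_le_add
    intro δ hδ
    set ε := δ / (1 + κ) with hεdef
    have hε : 0 < ε := div_pos hδ (by linarith)
    have hεδ : ε * (1 + κ) = δ := div_mul_cancel₀ δ (by linarith : (1:ℝ) + κ ≠ 0)
    suffices h : L ≤ ε + κ * (1 + L + ε) by nlinarith [h]
    have hev1 : ∀ᶠ r in atTop, ‖u r‖ < L + ε :=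
      eventually_lt_of_limsup_lt (by linarith) hbdd
    obtain ⟨T₁, hT₁⟩ := eventually_atTop.1 hev1
    obtain ⟨T₂', hT₂'⟩ := eventually_atTop.1 (hρlim.eventually_ge_atTop T₁)
    set T₂ := max T₂' 1 with hT₂def
    have hT₂1 : (1:ℝ) ≤ T₂ := le_max_right _ _
    have hT₂0 : (0:ℝ) ≤ T₂ := by linarith
    have htend : Tendsto (fun t => ω t * ‖u 0‖ + T₂ * (ω (t - T₂) * (pnorm * (1 + C))))
        atTop (nhds 0) := by
      have h1 := hωlim.mul_const ‖u 0‖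
      rw [zero_mul] at h1
      have h2' : Tendsto (fun t : ℝ => t - T₂) atTop atTop :=
        (tendsto_atTop_add_const_right atTop (-T₂) tendsto_id).congr
          (fun t => by simp [sub_eq_add_neg])
      have h2 : Tendsto (fun t : ℝ => ω (t - T₂)) atTop (nhds 0) := hωlim.comp h2'
      have h3 := (h2.mul_const (pnorm * (1 + C))).const_mul T₂
      rw [zero_mul, mul_zero] at h3
      have h4 := h1.add h3
      rw [add_zero] at h4
      exact h4
    have hev3 : ∀ᶠ t in atTop,
        ω t * ‖u 0‖ + T₂ * (ω (t - T₂) * (pnorm * (1 + C))) < ε :=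
      htend.eventually_lt_const hε
    have hfinal : ∀ᶠ t in atTop, ‖u t‖ ≤ ε + κ * (1 + L + ε) := by
      filter_upwards [hev3, eventually_ge_atTop T₂] with t hsm htT₂
      have ht0 : (0:ℝ) < t := lt_of_lt_of_le (by linarith) htT₂
      have hkey := key t ht0 T₂ ⟨hT₂0, htT₂⟩ C (L + ε) hC0 (by linarith)
        (fun s hs => hbound _ (hρ1 s hs.1))
        (fun s hs => (hT₁ _ (hT₂' s (le_trans (le_max_left _ _) hs.1))).le)
      have hκform : μ⁻¹ * (pnorm * (1 + (L + ε))) = κ * (1 + L + ε) := by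
        rw [hκdef]; ring
      rw [hκform] at hkey
      linarith [hkey, hsm]
    exact limsup_le_of_le hcobdd hfinal
  have hμκ : κ * μ = pnorm := by
    rw [hκdef, mul_assoc, inv_mul_cancel₀ hμ.ne', mul_one]
  have hLfinal : L ≤ pnorm / (μ - pnorm) := by
    have h2 : L * μ ≤ pnorm * (1 + L) := by
      have := mul_le_mul_of_nonneg_right hLκ hμ.le
      calc L * μ ≤ κ * (1 + L) * μ := this
        _ = κ * μ * (1 + L) := by ring
        _ = pnorm * (1 + L) := by rw [hμκ]
    rw [le_div_iff₀ (by linarith : (0:ℝ) < μ - pnorm)]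
    nlinarith [h2]
  refine ⟨hLfinal, ?_⟩
  intro R hR
  have hev : ∀ᶠ t in atTop, ‖u t‖ < R :=
    eventually_lt_of_limsup_lt (lt_of_le_of_lt hLfinal hR) hbdd
  obtain ⟨T, hT⟩ := eventually_atTop.1 hev
  exact ⟨T, fun t ht => by
    simpa [Metric.mem_closedBall, dist_zero_right] using (hT t ht).le⟩
end
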